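/- arXiv:1701.02589 — 6 statements merged into one kernel-verified Lean document; each statement's English description precedes it below -/
import Mathlib

section
/- Let f : [a,b] → [a,b] be continuous. If f is topologically weakly mixing (f × f is transitive on [a,b] × [a,b]), then f is topologically mixing. -/
open Set Function

private lemma prod_iterate_aux (f : ℝ → ℝ) (k : ℕ) (p : ℝ × ℝ) :
    (fun p : ℝ × ℝ => (f p.1, f p.2))^[k] p = (f^[k] p.1, f^[k] p.2) := by
  induction k generalizing p with
  | zero => simp
  | succ n ih =>
    simp only [Function.iterate_succ_apply]
    exact ih (f p.1, f p.2)

/-- A continuous topologically weakly mixing self-map of a compact interval is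
topologically mixing. -/
theorem weakly_mixing_implies_mixing
    (a b : ℝ) (hab : a < b) (f : ℝ → ℝ)
    (hf : ContinuousOn f (Set.Icc a b)) (hmaps : Set.MapsTo f (Set.Icc a b) (Set.Icc a b))
    (hwm : ∀ W₁ W₂ : Set (ℝ × ℝ), IsOpen W₁ → IsOpen W₂ →
      (W₁ ∩ Set.Icc a b ×ˢ Set.Icc a b).Nonempty →
      (W₂ ∩ Set.Icc a b ×ˢ Set.Icc a b).Nonempty →
      ∃ k : ℕ, 1 ≤ k ∧
        (((fun p : ℝ × ℝ => (f p.1, f p.2))^[k] '' (W₁ ∩ Set.Icc a b ×ˢ Set.Icc a b)) ∩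
          (W₂ ∩ Set.Icc a b ×ˢ Set.Icc a b)).Nonempty) :
    ∀ U V : Set ℝ, IsOpen U → IsOpen V →
      (U ∩ Set.Icc a b).Nonempty → (V ∩ Set.Icc a b).Nonempty →
      ∃ N : ℕ, ∀ n : ℕ, N ≤ n →
        ((f^[n] '' (U ∩ Set.Icc a b)) ∩ (V ∩ Set.Icc a b)).Nonempty := by
  intro U V hUo hVo hUne hVne
  -- iterates are continuous on [a,b] and map [a,b] into itself
  have hmapsI : ∀ n : ℕ, Set.MapsTo (f^[n]) (Set.Icc a b) (Set.Icc a b) :=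
    fun n => hmaps.iterate n
  have hcont : ∀ n : ℕ, ContinuousOn (f^[n]) (Set.Icc a b) := by
    intro n
    induction n with
    | zero => simpa using continuousOn_id
    | succ n ih =>
      rw [Function.iterate_succ']
      exact hf.comp ih (hmapsI n)
  -- T2 : pair transitivity
  have T2 : ∀ O₁ O₂ O₃ O₄ : Set ℝ, IsOpen O₁ → IsOpen O₂ → IsOpen O₃ → IsOpen O₄ →
      (O₁ ∩ Set.Icc a b).Nonempty → (O₂ ∩ Set.Icc a b).Nonempty →
      (O₃ ∩ Set.Icc a b).Nonempty → (O₄ ∩ Set.Icc a b).Nonempty →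
      ∃ k, 1 ≤ k ∧ (∃ x ∈ O₁ ∩ Set.Icc a b, f^[k] x ∈ O₃ ∩ Set.Icc a b) ∧
        (∃ y ∈ O₂ ∩ Set.Icc a b, f^[k] y ∈ O₄ ∩ Set.Icc a b) := by
    intro O₁ O₂ O₃ O₄ h1 h2 h3 h4 n1 n2 n3 n4
    obtain ⟨k, hk1, z, hz1, hz2⟩ := hwm (O₁ ×ˢ O₂) (O₃ ×ˢ O₄) (h1.prod h2) (h3.prod h4)
      (by rw [Set.prod_inter_prod]; exact n1.prod n2)
      (by rw [Set.prod_inter_prod]; exact n3.prod n4)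
    obtain ⟨w, hw, hwz⟩ := hz1
    rw [Set.prod_inter_prod] at hw hz2
    rw [prod_iterate_aux] at hwz
    refine ⟨k, hk1, ⟨w.1, hw.1, ?_⟩, ⟨w.2, hw.2, ?_⟩⟩
    · rw [show f^[k] w.1 = z.1 from congrArg Prod.fst hwz]; exact hz2.1
    · rw [show f^[k] w.2 = z.2 from congrArg Prod.snd hwz]; exact hz2.2
  -- T3 : Furstenberg intersection trick
  have T3 : ∀ OU OV OU' OV' : Set ℝ, IsOpen OU → IsOpen OV → IsOpen OU' → IsOpen OV' →
      (OU ∩ Set.Icc a b).Nonempty → (OV ∩ Set.Icc a b).Nonempty →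
      (OU' ∩ Set.Icc a b).Nonempty → (OV' ∩ Set.Icc a b).Nonempty →
      ∃ W Z : Set ℝ, IsOpen W ∧ IsOpen Z ∧ (W ∩ Set.Icc a b).Nonempty ∧
        (Z ∩ Set.Icc a b).Nonempty ∧
        ∀ k x, x ∈ W ∩ Set.Icc a b → f^[k] x ∈ Z ∩ Set.Icc a b →
          ((∃ x' ∈ OU ∩ Set.Icc a b, f^[k] x' ∈ OV ∩ Set.Icc a b) ∧
           (∃ x' ∈ OU' ∩ Set.Icc a b, f^[k] x' ∈ OV' ∩ Set.Icc a b)) := by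
    intro OU OV OU' OV' hUo' hVo' hU'o hV'o nU nV nU' nV'
    obtain ⟨m, hm1, ⟨x₀, hx₀, hfx₀⟩, ⟨y₀, hy₀, hfy₀⟩⟩ :=
      T2 OU OV OU' OV' hUo' hVo' hU'o hV'o nU nV nU' nV'
    obtain ⟨A, hAo, hA⟩ := (continuousOn_iff'.mp (hcont m)) OU' hU'o
    obtain ⟨B, hBo, hB⟩ := (continuousOn_iff'.mp (hcont m)) OV' hV'o
    refine ⟨OU ∩ A, OV ∩ B, hUo'.inter hAo, hVo'.inter hBo, ?_, ?_, ?_⟩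
    · refine ⟨x₀, ⟨hx₀.1, ?_⟩, hx₀.2⟩
      have : x₀ ∈ f^[m] ⁻¹' OU' ∩ Set.Icc a b := ⟨hfx₀.1, hx₀.2⟩
      rw [hA] at this; exact this.1
    · refine ⟨y₀, ⟨hy₀.1, ?_⟩, hy₀.2⟩
      have : y₀ ∈ f^[m] ⁻¹' OV' ∩ Set.Icc a b := ⟨hfy₀.1, hy₀.2⟩
      rw [hB] at this; exact this.1
    · rintro k x ⟨⟨hxU, hxA⟩, hxI⟩ ⟨⟨hkV, hkB⟩, hkI⟩
      constructor
      · exact ⟨x, ⟨hxU, hxI⟩, ⟨hkV, hkI⟩⟩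
      · have hxA' : f^[m] x ∈ OU' := by
          have : x ∈ A ∩ Set.Icc a b := ⟨hxA, hxI⟩
          rw [← hA] at this; exact this.1
        have hkB' : f^[m] (f^[k] x) ∈ OV' := by
          have : f^[k] x ∈ B ∩ Set.Icc a b := ⟨hkB, hkI⟩
          rw [← hB] at this; exact this.1
        have e : f^[k] (f^[m] x) = f^[m] (f^[k] x) := by
          rw [← Function.iterate_add_apply, ← Function.iterate_add_apply, add_comm]
        refine ⟨f^[m] x, ⟨hxA', hmapsI m hxI⟩, ?_⟩
        rw [e]
        exact ⟨hkB', hmapsI m hkI⟩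
  -- extraction of closed subintervals of open sets
  have getIcc : ∀ W : Set ℝ, IsOpen W → (W ∩ Set.Icc a b).Nonempty →
      ∃ c d : ℝ, c < d ∧ a < c ∧ d < b ∧ Set.Icc c d ⊆ W := by
    intro W hWo hWne
    obtain ⟨x₀, hx₀W, hx₀I⟩ := hWne
    obtain ⟨δ₀, hδ₀, hball₀⟩ := Metric.isOpen_iff.mp hWo x₀ hx₀W
    set ε := min δ₀ (b - a) with hε_def
    have hε : 0 < ε := lt_min hδ₀ (by linarith)
    have hεd : ε ≤ δ₀ := min_le_left _ _
    have hεb : ε ≤ b - a := min_le_right _ _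
    set y := min (max x₀ (a + ε/2)) (b - ε/2) with hy_def
    have hx₀a : a ≤ x₀ := hx₀I.1
    have hx₀b : x₀ ≤ b := hx₀I.2
    have hyb : y ≤ b - ε/2 := min_le_right _ _
    have hya : a + ε/2 ≤ y := le_min (le_max_right _ _) (by linarith)
    have h1 : y - x₀ ≤ ε/2 := by
      have h1a : max x₀ (a + ε/2) ≤ x₀ + ε/2 := max_le (by linarith) (by linarith)
      have h1b : y ≤ max x₀ (a + ε/2) := min_le_left _ _
      linarith
    have h2 : x₀ - y ≤ ε/2 := by
      have h2a : min x₀ (b - ε/2) ≤ y :=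
        min_le_min (le_max_left _ _) (le_refl _)
      have h2b : x₀ - ε/2 ≤ min x₀ (b - ε/2) := le_min (by linarith) (by linarith)
      linarith
    have hyW : y ∈ W := by
      apply hball₀
      rw [Metric.mem_ball, Real.dist_eq, abs_sub_lt_iff]
      constructor <;> linarith
    obtain ⟨δ₁, hδ₁, hball₁⟩ := Metric.isOpen_iff.mp hWo y hyW
    set θ := min (δ₁/2) ((b - y)/2) with hθ_def
    have hθ : 0 < θ := lt_min (by linarith) (by linarith)
    have hθ1 : θ ≤ δ₁/2 := min_le_left _ _
    have hθ2 : θ ≤ (b - y)/2 := min_le_right _ _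
    refine ⟨y, y + θ, by linarith, by linarith, by linarith, ?_⟩
    intro t ht
    apply hball₁
    rw [Metric.mem_ball, Real.dist_eq, abs_sub_lt_iff]
    obtain ⟨ht1, ht2⟩ := ht
    constructor <;> linarith
  obtain ⟨j₁, j₂, hj12, haj, hjb, hJU⟩ := getIcc U hUo hUne
  obtain ⟨v₁, v₂, hv12, hav, hvb, hVV⟩ := getIcc V hVo hVne
  set η := min (v₁ - a) (b - v₂) with hη_def
  have hη : 0 < η := lt_min (by linarith) (by linarith)
  have hη1 : a + η ≤ v₁ := by
    have := min_le_left (v₁ - a) (b - v₂); linarith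
  have hη2 : v₂ ≤ b - η := by
    have := min_le_right (v₁ - a) (b - v₂); linarith
  have hM : a + η ≤ b - η := by linarith
  -- basic nonempty open sets
  have hLne : (Set.Ioo a (a + η) ∩ Set.Icc a b).Nonempty :=
    ⟨a + η/2, ⟨by linarith, by linarith⟩, by constructor <;> linarith⟩
  have hRne : (Set.Ioo (b - η) b ∩ Set.Icc a b).Nonempty :=
    ⟨b - η/2, ⟨by linarith, by linarith⟩, by constructor <;> linarith⟩
  have hVcne : (Set.Ioo v₁ v₂ ∩ Set.Icc a b).Nonempty :=
    ⟨(v₁ + v₂)/2, ⟨by linarith, by linarith⟩, by constructor <;> linarith⟩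
  have hJcne : (Set.Ioo j₁ j₂ ∩ Set.Icc a b).Nonempty :=
    ⟨(j₁ + j₂)/2, ⟨by linarith, by linarith⟩, by constructor <;> linarith⟩
  -- the sets of points mapping below a+η resp. above b-η, as relatively open sets
  obtain ⟨OD, hODo, hOD⟩ := (continuousOn_iff'.mp hf) (Set.Iio (a + η)) isOpen_Iio
  obtain ⟨OE, hOEo, hOE⟩ := (continuousOn_iff'.mp hf) (Set.Ioi (b - η)) isOpen_Ioi
  have hODne : (OD ∩ Set.Icc a b).Nonempty := by
    by_contra hemp
    rw [Set.not_nonempty_iff_eq_empty] at hemp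
    obtain ⟨k, hk1, ⟨x, hx, hfx⟩, -⟩ := T2 (Set.Ioo v₁ v₂) (Set.Ioo v₁ v₂)
      (Set.Ioo a (a + η)) (Set.Ioo a (a + η)) isOpen_Ioo isOpen_Ioo isOpen_Ioo isOpen_Ioo
      hVcne hVcne hLne hLne
    obtain ⟨k', rfl⟩ : ∃ k', k = k' + 1 := ⟨k - 1, by omega⟩
    have hy : f^[k'] x ∈ Set.Icc a b := hmapsI k' hx.2
    have hlt : f (f^[k'] x) < a + η := by
      rw [← Function.iterate_succ_apply' f k' x]; exact hfx.1.2
    have hmem : f^[k'] x ∈ f ⁻¹' Set.Iio (a + η) ∩ Set.Icc a b := ⟨hlt, hy⟩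
    rw [hOD, hemp] at hmem
    exact hmem
  have hOEne : (OE ∩ Set.Icc a b).Nonempty := by
    by_contra hemp
    rw [Set.not_nonempty_iff_eq_empty] at hemp
    obtain ⟨k, hk1, ⟨x, hx, hfx⟩, -⟩ := T2 (Set.Ioo v₁ v₂) (Set.Ioo v₁ v₂)
      (Set.Ioo (b - η) b) (Set.Ioo (b - η) b) isOpen_Ioo isOpen_Ioo isOpen_Ioo isOpen_Ioo
      hVcne hVcne hRne hRne
    obtain ⟨k', rfl⟩ : ∃ k', k = k' + 1 := ⟨k - 1, by omega⟩
    have hy : f^[k'] x ∈ Set.Icc a b := hmapsI k' hx.2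
    have hlt : b - η < f (f^[k'] x) := by
      rw [← Function.iterate_succ_apply' f k' x]; exact hfx.1.1
    have hmem : f^[k'] x ∈ f ⁻¹' Set.Ioi (b - η) ∩ Set.Icc a b := ⟨hlt, hy⟩
    rw [hOE, hemp] at hmem
    exact hmem
  -- spanning lemma : if the image of Icc c d at time m reaches below a+η and above b-η,
  -- it contains [a+η, b-η]
  have himg : ∀ (c d : ℝ), Set.Icc c d ⊆ Set.Icc a b → ∀ (m : ℕ) (p q : ℝ),
      p ∈ f^[m] '' Set.Icc c d → q ∈ f^[m] '' Set.Icc c d → p < a + η → b - η < q →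
      Set.Icc (a + η) (b - η) ⊆ f^[m] '' Set.Icc c d := by
    intro c d hsub m p q hp hq hpl hqh
    have hpre : IsPreconnected (f^[m] '' Set.Icc c d) :=
      (isPreconnected_Icc).image _ ((hcont m).mono hsub)
    have h1 : Set.Icc p q ⊆ f^[m] '' Set.Icc c d := hpre.Icc_subset hp hq
    exact fun t ht => h1 ⟨by linarith [ht.1], by linarith [ht.2]⟩
  have hVcI : Set.Icc v₁ v₂ ⊆ Set.Icc a b :=
    Set.Icc_subset_Icc (le_of_lt hav) (le_of_lt hvb)
  have hJcI : Set.Icc j₁ j₂ ⊆ Set.Icc a b :=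
    Set.Icc_subset_Icc (le_of_lt haj) (le_of_lt hjb)
  -- quadruple intersection: a time r hitting L, R, OD, OE from Ioo v₁ v₂
  obtain ⟨W₁, Z₁, hW₁o, hZ₁o, hW₁ne, hZ₁ne, himp₁⟩ := T3 (Set.Ioo v₁ v₂) (Set.Ioo a (a + η))
    (Set.Ioo v₁ v₂) (Set.Ioo (b - η) b) isOpen_Ioo isOpen_Ioo isOpen_Ioo isOpen_Ioo
    hVcne hLne hVcne hRne
  obtain ⟨W₂, Z₂, hW₂o, hZ₂o, hW₂ne, hZ₂ne, himp₂⟩ := T3 (Set.Ioo v₁ v₂) OD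
    (Set.Ioo v₁ v₂) OE isOpen_Ioo hODo isOpen_Ioo hOEo hVcne hODne hVcne hOEne
  obtain ⟨r, hr1, ⟨x, hxW, hxZ⟩, ⟨x', hx'W, hx'Z⟩⟩ :=
    T2 W₁ W₂ Z₁ Z₂ hW₁o hW₂o hZ₁o hZ₂o hW₁ne hW₂ne hZ₁ne hZ₂ne
  obtain ⟨⟨x₁, hx₁, hfx₁⟩, ⟨x₂, hx₂, hfx₂⟩⟩ := himp₁ r x hxW hxZ
  obtain ⟨⟨x₃, hx₃, hfx₃⟩, ⟨x₄, hx₄, hfx₄⟩⟩ := himp₂ r x' hx'W hx'Z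
  -- f^[r] '' Vc ⊇ Vc
  have hIooIcc : ∀ t, t ∈ Set.Ioo v₁ v₂ ∩ Set.Icc a b → t ∈ Set.Icc v₁ v₂ :=
    fun t ht => ⟨le_of_lt ht.1.1, le_of_lt ht.1.2⟩
  have hspan_r : Set.Icc (a + η) (b - η) ⊆ f^[r] '' Set.Icc v₁ v₂ := by
    apply himg v₁ v₂ hVcI r (f^[r] x₁) (f^[r] x₂)
    · exact Set.mem_image_of_mem _ (hIooIcc x₁ hx₁)
    · exact Set.mem_image_of_mem _ (hIooIcc x₂ hx₂)
    · exact hfx₁.1.2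
    · exact hfx₂.1.1
  have covr : Set.Icc v₁ v₂ ⊆ f^[r] '' Set.Icc v₁ v₂ :=
    (Set.Icc_subset_Icc hη1 hη2).trans hspan_r
  -- f^[r+1] '' Vc ⊇ Vc
  have hd : f (f^[r] x₃) < a + η := by
    have : f^[r] x₃ ∈ f ⁻¹' Set.Iio (a + η) ∩ Set.Icc a b := by
      rw [hOD]; exact hfx₃
    exact this.1
  have hu : b - η < f (f^[r] x₄) := by
    have : f^[r] x₄ ∈ f ⁻¹' Set.Ioi (b - η) ∩ Set.Icc a b := by
      rw [hOE]; exact hfx₄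
    exact this.1
  have hspan_r1 : Set.Icc (a + η) (b - η) ⊆ f^[r + 1] '' Set.Icc v₁ v₂ := by
    apply himg v₁ v₂ hVcI (r + 1) (f (f^[r] x₃)) (f (f^[r] x₄))
    · rw [← Function.iterate_succ_apply' f r x₃]
      exact Set.mem_image_of_mem _ (hIooIcc x₃ hx₃)
    · rw [← Function.iterate_succ_apply' f r x₄]
      exact Set.mem_image_of_mem _ (hIooIcc x₄ hx₄)
    · exact hd
    · exact hu
  have covr1 : Set.Icc v₁ v₂ ⊆ f^[r + 1] '' Set.Icc v₁ v₂ :=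
    (Set.Icc_subset_Icc hη1 hη2).trans hspan_r1
  -- composition of coverings
  have comp : ∀ m n : ℕ, Set.Icc v₁ v₂ ⊆ f^[m] '' Set.Icc v₁ v₂ →
      Set.Icc v₁ v₂ ⊆ f^[n] '' Set.Icc v₁ v₂ →
      Set.Icc v₁ v₂ ⊆ f^[m + n] '' Set.Icc v₁ v₂ := by
    intro m n hm hn
    rw [add_comm, Function.iterate_add, Set.image_comp]
    exact hn.trans (Set.image_mono hm)
  have covmul : ∀ (t m : ℕ), Set.Icc v₁ v₂ ⊆ f^[m] '' Set.Icc v₁ v₂ →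
      Set.Icc v₁ v₂ ⊆ f^[t * m] '' Set.Icc v₁ v₂ := by
    intro t m hm
    induction t with
    | zero => simp
    | succ t ih =>
      rw [Nat.succ_mul]
      exact comp _ _ ih hm
  have covAll : ∀ n : ℕ, r * r ≤ n → Set.Icc v₁ v₂ ⊆ f^[n] '' Set.Icc v₁ v₂ := by
    intro n hn
    have hr0 : 0 < r := hr1
    set q := n / r with hq_def
    set s := n % r with hs_def
    have hs : s < r := Nat.mod_lt _ hr0
    have hq : r ≤ q := (Nat.le_div_iff_mul_le hr0).mpr hn
    have hsq : s ≤ q := le_of_lt (lt_of_lt_of_le hs hq)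
    have hd' : r * q + s = n := Nat.div_add_mod n r
    obtain ⟨t, ht⟩ := Nat.exists_eq_add_of_le hsq
    have h1 := covmul (q - s) r covr
    have h2 := covmul s (r + 1) covr1
    have h3 := comp _ _ h1 h2
    have harith : (q - s) * r + s * (r + 1) = n := by
      rw [ht]
      simp only [Nat.add_sub_cancel_left]
      rw [← hd', ht]
      ring
    rwa [harith] at h3
  -- spanning from Jc at some time k₀
  obtain ⟨k₀, hk₀1, ⟨y₁, hy₁, hfy₁⟩, ⟨y₂, hy₂, hfy₂⟩⟩ := T2 (Set.Ioo j₁ j₂) (Set.Ioo j₁ j₂)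
    (Set.Ioo a (a + η)) (Set.Ioo (b - η) b) isOpen_Ioo isOpen_Ioo isOpen_Ioo isOpen_Ioo
    hJcne hJcne hLne hRne
  have hIooIccJ : ∀ t, t ∈ Set.Ioo j₁ j₂ ∩ Set.Icc a b → t ∈ Set.Icc j₁ j₂ :=
    fun t ht => ⟨le_of_lt ht.1.1, le_of_lt ht.1.2⟩
  have hspanJ : Set.Icc v₁ v₂ ⊆ f^[k₀] '' Set.Icc j₁ j₂ := by
    refine (Set.Icc_subset_Icc hη1 hη2).trans ?_
    apply himg j₁ j₂ hJcI k₀ (f^[k₀] y₁) (f^[k₀] y₂)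
    · exact Set.mem_image_of_mem _ (hIooIccJ y₁ hy₁)
    · exact Set.mem_image_of_mem _ (hIooIccJ y₂ hy₂)
    · exact hfy₁.1.2
    · exact hfy₂.1.1
  -- conclusion
  refine ⟨k₀ + r * r, ?_⟩
  intro n hn
  have hk₀n : k₀ ≤ n := le_trans (Nat.le_add_right _ _) hn
  have hrr : r * r ≤ n - k₀ := Nat.le_sub_of_add_le (by rw [add_comm]; exact hn)
  have h1 : Set.Icc v₁ v₂ ⊆ f^[n - k₀] '' Set.Icc v₁ v₂ := covAll (n - k₀) hrr
  have h2 : f^[n - k₀] '' Set.Icc v₁ v₂ ⊆ f^[n - k₀] '' (f^[k₀] '' Set.Icc j₁ j₂) :=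
    Set.image_mono hspanJ
  have h3 : f^[n - k₀] '' (f^[k₀] '' Set.Icc j₁ j₂) = f^[n] '' Set.Icc j₁ j₂ := by
    rw [← Set.image_comp, ← Function.iterate_add, Nat.sub_add_cancel hk₀n]
  have hJUI : Set.Icc j₁ j₂ ⊆ U ∩ Set.Icc a b := fun t ht => ⟨hJU ht, hJcI ht⟩
  have h4 : f^[n] '' Set.Icc j₁ j₂ ⊆ f^[n] '' (U ∩ Set.Icc a b) := Set.image_mono hJUI
  have hv₁ : v₁ ∈ Set.Icc v₁ v₂ := Set.left_mem_Icc.mpr (le_of_lt hv12)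
  refine ⟨v₁, ?_, hVV ⟨le_refl _, le_of_lt hv12⟩, hVcI hv₁⟩
  exact h4 (h3 ▸ h2 (h1 hv₁))
end

section
/- Let f : [a,b] → [a,b] be continuous with f² topologically transitive. Then for any infinite set M of positive integers, there is a residual subset S of [a,b] such that for each x ∈ S the set {f^n(x) : n ∈ M} is dense in [a,b]. -/
set_option linter.unusedSectionVars false
set_option linter.unusedVariables false

open Set Function Topology

namespace RSMD

/-- ℝ-level transitivity of `F²` relative to `Icc a b`. -/
def Trans2 (a b : ℝ) (F : ℝ → ℝ) : Prop :=
  ∀ O W : Set ℝ, IsOpen O → IsOpen W → (O ∩ Icc a b).Nonempty → (W ∩ Icc a b).Nonempty →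
    ∃ k : ℕ, 1 ≤ k ∧ ((F^[2*k] '' (O ∩ Icc a b)) ∩ W).Nonempty


variable {a b : ℝ} {F : ℝ → ℝ}

section Main

variable (hab : a < b) (hF : Continuous F) (hFI : MapsTo F (Icc a b) (Icc a b))
  (htr : Trans2 a b F)

include hFI in
lemma iterMapsTo (n : ℕ) : MapsTo (F^[n]) (Icc a b) (Icc a b) := hFI.iterate n

include hFI in
lemma image_subset_I {S : Set ℝ} (hS : S ⊆ Icc a b) (n : ℕ) :
    F^[n] '' S ⊆ Icc a b := fun _ ⟨x, hx, hxy⟩ => hxy ▸ (iterMapsTo hFI n) (hS hx)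

include hF in
lemma piece_ordConnected {S : Set ℝ} (hS : IsPreconnected S) (n : ℕ) :
    OrdConnected (F^[n] '' S) :=
  (hS.image _ (hF.iterate n).continuousOn).ordConnected

lemma image_piece (m n : ℕ) (S : Set ℝ) :
    F^[m] '' (F^[n] '' S) = F^[m+n] '' S := by
  rw [← Set.image_comp, ← Function.iterate_add]

include hab hF hFI htr in
/-- surjectivity of F on I -/
lemma surjF : Icc a b ⊆ F '' (Icc a b) := by
  by_contra hns
  rw [Set.not_subset] at hns
  obtain ⟨y, hyI, hyT⟩ := hns
  have hTc : IsClosed (F '' Icc a b) := (isCompact_Icc.image hF).isClosed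
  have h1 : ((F '' Icc a b)ᶜ ∩ Icc a b).Nonempty := ⟨y, hyT, hyI⟩
  obtain ⟨k, hk, z, hz1, hz2⟩ := htr univ _ isOpen_univ hTc.isOpen_compl
    ⟨a, mem_univ a, left_mem_Icc.2 hab.le⟩ h1
  refine hz2 ?_
  obtain ⟨x, hx, rfl⟩ := hz1
  have h2k : 2*k = 1 + (2*k-1) := by omega
  rw [h2k, Function.iterate_add_apply]
  exact ⟨_, iterMapsTo hFI (2*k-1) hx.2, rfl⟩

include hab hF hFI htr in
lemma surjFn (n : ℕ) : Icc a b ⊆ F^[n] '' (Icc a b) := by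
  induction n with
  | zero => simp
  | succ n ih =>
    intro y hy
    obtain ⟨x, hx, rfl⟩ := surjF hab hF hFI htr hy
    obtain ⟨w, hw, rfl⟩ := ih hx
    exact ⟨w, hw, by rw [Function.iterate_succ_apply']⟩

include hab hF hFI htr in
/-- the key transitivity consequence: hits at every sufficiently shifted time of any parity -/
lemma hits (O W : Set ℝ) (hO : IsOpen O) (hW : IsOpen W)
    (hOne : (O ∩ Icc a b).Nonempty) (hWne : (W ∩ Icc a b).Nonempty) (m : ℕ) :
    ∃ k, 1 ≤ k ∧ ((F^[2*k+m] '' (O ∩ Icc a b)) ∩ W).Nonempty := by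
  have hW' : IsOpen (F^[m] ⁻¹' W) := hW.preimage (hF.iterate m)
  have hW'ne : ((F^[m] ⁻¹' W) ∩ Icc a b).Nonempty := by
    obtain ⟨w, hwW, hwI⟩ := hWne
    obtain ⟨x, hx, hxw⟩ := surjFn hab hF hFI htr m hwI
    exact ⟨x, by simp [Set.mem_preimage, hxw, hwW], hx⟩
  obtain ⟨k, hk, z, hz1, hz2⟩ := htr O _ hO hW' hOne hW'ne
  refine ⟨k, hk, F^[m] z, ?_, hz2⟩
  obtain ⟨x, hx, rfl⟩ := hz1
  exact ⟨x, hx, by rw [← Function.iterate_add_apply, Nat.add_comm m (2*k)]⟩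

include htr in
/-- a "trap" `[a,t]` invariant under `F` contradicts transitivity -/
lemma no_left_trap (t : ℝ) (ht : t ∈ Ioo a b) (htrap : MapsTo F (Icc a t) (Icc a t)) :
    False := by
  have h1 : (Ioo a t ∩ Icc a b).Nonempty := by
    obtain ⟨w, hw⟩ := exists_between ht.1
    exact ⟨w, ⟨hw.1, hw.2⟩, ⟨hw.1.le, hw.2.le.trans ht.2.le⟩⟩
  have h2 : (Ioo t b ∩ Icc a b).Nonempty := by
    obtain ⟨w, hw⟩ := exists_between ht.2
    exact ⟨w, ⟨hw.1, hw.2⟩, ⟨ht.1.le.trans hw.1.le, hw.2.le⟩⟩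
  obtain ⟨k, hk, z, hz1, hz2⟩ := htr (Ioo a t) (Ioo t b) isOpen_Ioo isOpen_Ioo h1 h2
  obtain ⟨x, hx, rfl⟩ := hz1
  have : F^[2*k] x ∈ Icc a t := (htrap.iterate (2*k)) ⟨hx.1.1.le, hx.1.2.le⟩
  exact absurd this.2 (not_le.2 hz2.1)

include htr in
lemma no_right_trap (t : ℝ) (ht : t ∈ Ioo a b) (htrap : MapsTo F (Icc t b) (Icc t b)) :
    False := by
  have h1 : (Ioo t b ∩ Icc a b).Nonempty := by
    obtain ⟨w, hw⟩ := exists_between ht.2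
    exact ⟨w, ⟨hw.1, hw.2⟩, ⟨ht.1.le.trans hw.1.le, hw.2.le⟩⟩
  have h2 : (Ioo a t ∩ Icc a b).Nonempty := by
    obtain ⟨w, hw⟩ := exists_between ht.1
    exact ⟨w, ⟨hw.1, hw.2⟩, ⟨hw.1.le, hw.2.le.trans ht.2.le⟩⟩
  obtain ⟨k, hk, z, hz1, hz2⟩ := htr (Ioo t b) (Ioo a t) isOpen_Ioo isOpen_Ioo h1 h2
  obtain ⟨x, hx, rfl⟩ := hz1
  have : F^[2*k] x ∈ Icc t b := (htrap.iterate (2*k)) ⟨hx.1.1.le, hx.1.2.le⟩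
  exact absurd this.1 (not_le.2 hz2.2)

include hab in
/-- any relatively open nonempty subset of `I` contains a nondegenerate closed interval -/
lemma exists_subIcc (O : Set ℝ) (hO : IsOpen O) (hOne : (O ∩ Icc a b).Nonempty) :
    ∃ u v : ℝ, a ≤ u ∧ u < v ∧ v ≤ b ∧ Icc u v ⊆ O ∩ Icc a b := by
  obtain ⟨x, hxO, hxI⟩ := hOne
  obtain ⟨ε, hε, hball⟩ := Metric.isOpen_iff.1 hO x hxO
  rcases lt_or_ge x b with hxb | hxb
  · refine ⟨x, min (x + ε/2) b, hxI.1, lt_min (by linarith) hxb, min_le_right _ _, ?_⟩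
    intro y hy
    have h1 : y ≤ x + ε/2 := hy.2.trans (min_le_left _ _)
    have h2 : y ≤ b := hy.2.trans (min_le_right _ _)
    refine ⟨hball ?_, hxI.1.trans hy.1, h2⟩
    rw [Metric.mem_ball, Real.dist_eq, abs_sub_lt_iff]
    constructor <;> nlinarith [hy.1]
  · have hxb' : x = b := le_antisymm hxI.2 hxb
    refine ⟨max (x - ε/2) a, x, le_max_right _ _,
      max_lt (by linarith) (hxb' ▸ hab), hxb' ▸ le_refl _, ?_⟩
    intro y hy
    have h1 : x - ε/2 ≤ y := (le_max_left _ _).trans hy.1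
    refine ⟨hball ?_, (le_max_right _ _).trans hy.1, hy.2.trans hxI.2⟩
    rw [Metric.mem_ball, Real.dist_eq, abs_sub_lt_iff]
    constructor <;> nlinarith [hy.2]


/-- IVT: find a fixed point of `G` between two points on opposite sides of the diagonal. -/
lemma fix_between {G : ℝ → ℝ} (hG : Continuous G) {x₁ x₂ : ℝ}
    (h₁ : G x₁ ≤ x₁) (h₂ : x₂ ≤ G x₂) : ∃ c ∈ uIcc x₁ x₂, G c = c := by
  have hc : ContinuousOn (fun x => G x - x) (uIcc x₁ x₂) :=
    (hG.sub continuous_id).continuousOn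
  have h0 : (0:ℝ) ∈ uIcc ((fun x => G x - x) x₁) ((fun x => G x - x) x₂) := by
    rcases le_total (G x₁ - x₁) (G x₂ - x₂) with h | h
    · rw [Set.uIcc_of_le h]; constructor <;> simp <;> linarith
    · rw [Set.uIcc_of_ge h]; constructor <;> simp <;> linarith
  obtain ⟨c, hc1, hc2⟩ := intermediate_value_uIcc hc h0
  exact ⟨c, hc1, by linarith [hc2, sub_eq_zero.mp hc2] ⟩

lemma no_fix_sign {G : ℝ → ℝ} (hG : Continuous G) {s : Set ℝ} (hs : OrdConnected s)
    (hnofix : ∀ x ∈ s, G x ≠ x) :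
    (∀ x ∈ s, x < G x) ∨ (∀ x ∈ s, G x < x) := by
  by_contra hc
  push_neg at hc
  obtain ⟨⟨x₁, hx₁, hle₁⟩, ⟨x₂, hx₂, hle₂⟩⟩ := hc
  obtain ⟨c, hc1, hc2⟩ := fix_between hG hle₁ hle₂
  exact hnofix c (hs.uIcc_subset hx₁ hx₂ hc1) hc2

include hab hF hFI in
lemma fix_nonempty : ∃ c ∈ Icc a b, F c = c := by
  have h₁ : F b ≤ b := (hFI (right_mem_Icc.2 hab.le)).2
  have h₂ : a ≤ F a := (hFI (left_mem_Icc.2 hab.le)).1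
  obtain ⟨c, hc1, hc2⟩ := fix_between hF h₁ h₂
  refine ⟨c, ?_, hc2⟩
  rw [uIcc_of_ge hab.le] at hc1
  exact hc1

include hab hF hFI htr in
/-- pieces of nondegenerate intervals are nondegenerate -/
lemma piece_nondeg (u v : ℝ) (hu : a ≤ u) (huv : u < v) (hv : v ≤ b) (n : ℕ) :
    ∃ x ∈ F^[n] '' Icc u v, ∃ y ∈ F^[n] '' Icc u v, x ≠ y := by
  by_contra hcon
  push_neg at hcon
  set c₀ := F^[n] u with hc₀
  have hc₀m : c₀ ∈ F^[n] '' Icc u v := ⟨u, ⟨le_refl u, huv.le⟩, rfl⟩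
  have hconst : ∀ x ∈ Icc u v, F^[n] x = c₀ := by
    intro x hx
    exact hcon _ ⟨x, hx, rfl⟩ _ hc₀m
  have hIoosub : Ioo u v ∩ Icc a b = Ioo u v := by
    apply inter_eq_left.2
    exact fun x hx => ⟨hu.trans hx.1.le, hx.2.le.trans hv⟩
  have hIoone : (Ioo u v ∩ Icc a b).Nonempty := by
    rw [hIoosub]; exact nonempty_Ioo.2 huv
  -- even orbit of c₀ is "dense"
  have hdense : ∀ W : Set ℝ, IsOpen W → (W ∩ Icc a b).Nonempty →
      ∃ k, 1 ≤ k ∧ F^[2*k] c₀ ∈ W := by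
    intro W hW hWne
    obtain ⟨k, hk, pt, hpt1, hpt2⟩ := hits hab hF hFI htr (Ioo u v) W isOpen_Ioo hW hIoone hWne n
    refine ⟨k, hk, ?_⟩
    obtain ⟨x, hx, rfl⟩ := hpt1
    rw [hIoosub] at hx
    have : F^[2*k+n] x = F^[2*k] (F^[n] x) := Function.iterate_add_apply F (2*k) n x
    rw [this, hconst x ⟨hx.1.le, hx.2.le⟩] at hpt2
    exact hpt2
  -- orbit of c₀ is periodic
  obtain ⟨k₁, hk₁, hk₁mem⟩ := hdense (Ioo u v) isOpen_Ioo hIoone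
  have hper : Function.IsPeriodicPt F (2*k₁+n) c₀ := by
    have h1 : F^[n] (F^[2*k₁] c₀) = c₀ := hconst _ ⟨hk₁mem.1.le, hk₁mem.2.le⟩
    have h2 : F^[2*k₁+n] c₀ = F^[n] (F^[2*k₁] c₀) := by
      rw [Nat.add_comm (2*k₁) n]
      exact Function.iterate_add_apply F n (2*k₁) c₀
    exact h2.trans h1
  set d := 2*k₁+n with hd
  have hdpos : 0 < d := by omega
  -- orbit is contained in finite set
  set E : Finset ℝ := Finset.image (fun j => F^[j] c₀) (Finset.range d) with hE
  have horbE : ∀ m : ℕ, F^[2*m] c₀ ∈ (E : Set ℝ) := by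
    intro m
    have := hper.iterate_mod_apply (2*m)
    refine Finset.mem_coe.2 (Finset.mem_image.2 ⟨(2*m) % d, Finset.mem_range.2 (Nat.mod_lt _ hdpos), ?_⟩)
    exact this
  -- contradiction with density
  have hEfin : (E : Set ℝ).Finite := E.finite_toSet
  have hEc : IsOpen ((E : Set ℝ)ᶜ) := hEfin.isClosed.isOpen_compl
  have hne : (((E : Set ℝ)ᶜ) ∩ Icc a b).Nonempty := by
    have hIinf : (Icc a b).Infinite := Set.Icc_infinite hab
    obtain ⟨y, hy1, hy2⟩ := (hIinf.diff hEfin).nonempty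
    exact ⟨y, hy2, hy1⟩
  obtain ⟨k, hk, hkmem⟩ := hdense _ hEc hne
  exact hkmem (horbE k)


include hab hF hFI htr in
/-- there is a point with dense even orbit in any relatively open set -/
lemma exists_transitive_pt (O : Set ℝ) (hO : IsOpen O) (hOne : (O ∩ Icc a b).Nonempty) :
    ∃ z ∈ O ∩ Icc a b, ∀ W, IsOpen W → (W ∩ Icc a b).Nonempty →
      ∃ k, 1 ≤ k ∧ F^[2*k] z ∈ W := by
  classical
  set X := ↥(Icc a b)
  haveI : CompleteSpace X := (isClosed_Icc (a := a) (b := b)).completeSpace_coe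
  set f : X → X := fun x => ⟨F x, hFI x.2⟩ with hfdef
  have hf : Continuous f := Continuous.subtype_mk (hF.comp continuous_subtype_val) _
  have coe_iter : ∀ (n : ℕ) (x : X), (↑(f^[n] x) : ℝ) = F^[n] (↑x) := by
    intro n
    induction n with
    | zero => intro x; simp
    | succ n ih =>
      intro x
      rw [Function.iterate_succ_apply', Function.iterate_succ_apply']
      show F ((f^[n] x : X) : ℝ) = _
      rw [ih x]
  obtain ⟨B, hBc, hBne, hBb⟩ := TopologicalSpace.exists_countable_basis X
  haveI : Countable ↥B := hBc.to_subtype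
  set G : Set X := ⋂ (V : ↥B), ⋃ k : ℕ, (f^[2*(k+1)]) ⁻¹' (V : Set X) with hG
  have hGopen : ∀ V : ↥B, IsOpen (⋃ k : ℕ, (f^[2*(k+1)]) ⁻¹' (V : Set X)) := by
    intro V
    exact isOpen_iUnion fun k => (hBb.isOpen V.2).preimage (hf.iterate _)
  have hGdense : ∀ V : ↥B, Dense (⋃ k : ℕ, (f^[2*(k+1)]) ⁻¹' (V : Set X)) := by
    intro V
    rw [dense_iff_inter_open]
    intro U hU hUne
    obtain ⟨OU, hOU, hOUeq⟩ := isOpen_induced_iff.1 hU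
    obtain ⟨WV, hWV, hWVeq⟩ := isOpen_induced_iff.1 (hBb.isOpen V.2)
    have hOne' : (OU ∩ Icc a b).Nonempty := by
      obtain ⟨x, hx⟩ := hUne
      exact ⟨↑x, by rw [← hOUeq] at hx; exact hx, x.2⟩
    have hWne' : (WV ∩ Icc a b).Nonempty := by
      have hVne : (V : Set X).Nonempty := by
        rcases eq_empty_or_nonempty (V : Set X) with h | h
        · exact absurd (h ▸ V.2) hBne
        · exact h
      obtain ⟨y, hy⟩ := hVne
      exact ⟨↑y, by rw [← hWVeq] at hy; exact hy, y.2⟩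
    obtain ⟨k, hk, pt, hpt1, hpt2⟩ := htr OU WV hOU hWV hOne' hWne'
    obtain ⟨x₁, hx₁, rfl⟩ := hpt1
    refine ⟨⟨x₁, hx₁.2⟩, ?_, ?_⟩
    · rw [← hOUeq]; exact hx₁.1
    · refine mem_iUnion.2 ⟨k - 1, ?_⟩
      have hkk : 2*(k-1+1) = 2*k := by omega
      rw [hkk]
      show f^[2*k] ⟨x₁, hx₁.2⟩ ∈ (V : Set X)
      rw [← hWVeq]
      show (↑(f^[2*k] ⟨x₁, hx₁.2⟩) : ℝ) ∈ WV
      rw [coe_iter]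
      exact hpt2
  have hGd : Dense G := dense_iInter_of_isOpen hGopen hGdense
  obtain ⟨OU, hOU, hOUeq⟩ : ∃ OU, IsOpen OU ∧ (Subtype.val ⁻¹' OU : Set X) = Subtype.val ⁻¹' O :=
    ⟨O, hO, rfl⟩
  have hUo : IsOpen (Subtype.val ⁻¹' O : Set X) := hO.preimage continuous_subtype_val
  have hUne : (Subtype.val ⁻¹' O : Set X).Nonempty := by
    obtain ⟨x, hx1, hx2⟩ := hOne
    exact ⟨⟨x, hx2⟩, hx1⟩
  obtain ⟨z', hz'1, hz'2⟩ := hGd.inter_open_nonempty _ hUo hUne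
  refine ⟨↑z', ⟨hz'1, z'.2⟩, ?_⟩
  intro W hW hWne
  obtain ⟨w, hw1, hw2⟩ := hWne
  have hwin : (⟨w, hw2⟩ : X) ∈ (Subtype.val ⁻¹' W : Set X) := hw1
  obtain ⟨V, hVB, hwV, hVsub⟩ := hBb.exists_subset_of_mem_open hwin
    (hW.preimage continuous_subtype_val)
  have hz'G : z' ∈ ⋃ k : ℕ, (f^[2*(k+1)]) ⁻¹' (V : Set X) := by
    have := mem_iInter.1 hz'2 ⟨V, hVB⟩
    exact this
  obtain ⟨k, hk⟩ := mem_iUnion.1 hz'G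
  refine ⟨k+1, by omega, ?_⟩
  have : f^[2*(k+1)] z' ∈ (Subtype.val ⁻¹' W : Set X) := hVsub hk
  have h2 : (↑(f^[2*(k+1)] z') : ℝ) ∈ W := this
  rw [coe_iter] at h2
  exact h2


include hab hF hFI htr in
/-- every nondegenerate subinterval contains a periodic point -/
lemma exists_periodic (u v : ℝ) (hu : a ≤ u) (huv : u < v) (hv : v ≤ b) :
    ∃ p ∈ Icc u v, ∃ q, 1 ≤ q ∧ F^[q] p = p := by
  by_contra hnp
  push_neg at hnp
  have hnofix : ∀ q, 1 ≤ q → ∀ x ∈ Icc u v, F^[q] x ≠ x := by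
    intro q hq x hx hc
    exact hnp x hx q hq hc
  have hdich : ∀ q, 1 ≤ q → (∀ x ∈ Icc u v, x < F^[q] x) ∨ (∀ x ∈ Icc u v, F^[q] x < x) :=
    fun q hq => no_fix_sign (hF.iterate q) Set.ordConnected_Icc (hnofix q hq)
  have hIccsub : Icc u v ⊆ Icc a b := Icc_subset_Icc hu hv
  have hIoone : (Ioo u v ∩ Icc a b).Nonempty := by
    obtain ⟨w, hw⟩ := exists_between huv
    exact ⟨w, ⟨hw.1, hw.2⟩, hIccsub ⟨hw.1.le, hw.2.le⟩⟩
  obtain ⟨z, hzmem, hzd⟩ := exists_transitive_pt hab hF hFI htr (Ioo u v) isOpen_Ioo hIoone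
  -- return structure
  set Z : ℕ → ℝ := fun k => F^[2*k] z with hZ
  have hRetInf : ∀ K : ℕ, ∀ (W : Set ℝ), IsOpen W → (W ∩ Ioo u v ∩ Icc a b).Nonempty →
      ∃ k, K < k ∧ Z k ∈ W ∩ Ioo u v := by
    intro K W hW hWne
    classical
    set E : Finset ℝ := Finset.image Z (Finset.range (K+1)) with hE
    have hWo : IsOpen (W ∩ Ioo u v ∩ (↑E : Set ℝ)ᶜ) :=
      (hW.inter isOpen_Ioo).inter E.finite_toSet.isClosed.isOpen_compl
    have hWone : ((W ∩ Ioo u v ∩ (↑E : Set ℝ)ᶜ) ∩ Icc a b).Nonempty := by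
      obtain ⟨w₀, hw₀⟩ := hWne
      -- W ∩ Ioo u v is open nonempty, hence infinite; remove finite E
      have hWIinf : (W ∩ Ioo u v).Infinite := by
        obtain ⟨x₀, hx₀⟩ : (W ∩ Ioo u v).Nonempty := ⟨w₀, hw₀.1⟩
        obtain ⟨ε, hε, hball⟩ := Metric.isOpen_iff.1 (hW.inter isOpen_Ioo) x₀ hx₀
        have h1 : Ioo (x₀ - ε) (x₀ + ε) ⊆ Metric.ball x₀ ε := by
          intro y hy
          rw [Metric.mem_ball, Real.dist_eq, abs_sub_lt_iff]
          constructor <;> linarith [hy.1, hy.2]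
        exact (Set.Ioo_infinite (by linarith)).mono (h1.trans hball)
      obtain ⟨y, hy1, hy2⟩ := (hWIinf.diff E.finite_toSet).nonempty
      exact ⟨y, ⟨hy1, hy2⟩, hIccsub ⟨hy1.2.1.le, hy1.2.2.le⟩⟩
    obtain ⟨k, hk, hmem⟩ := hzd _ hWo hWone
    refine ⟨k, ?_, hmem.1.1, hmem.1.2⟩
    by_contra hle
    push_neg at hle
    exact hmem.2 (Finset.mem_coe.2 (Finset.mem_image.2 ⟨k, Finset.mem_range.2 (by omega), rfl⟩))
  -- z's returns are pairwise distinct is not needed; get a decreasing pair and an increasing pair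
  have hIoo_inter : (Ioo u v ∩ Ioo u v ∩ Icc a b).Nonempty := by
    obtain ⟨w, hw⟩ := hIoone
    exact ⟨w, ⟨hw.1, hw.1⟩, hw.2⟩
  obtain ⟨k₀, hk₀, hk₀mem⟩ := hRetInf 0 (Ioo u v) isOpen_Ioo hIoo_inter
  have hdec : ∃ k k' : ℕ, 0 < k ∧ k < k' ∧ Z k ∈ Ioo u v ∧ Z k' ∈ Ioo u v ∧ Z k' < Z k := by
    by_contra hc
    push_neg at hc
    -- returns never decrease; find a later return below Z k₀
    obtain ⟨k, hk, hkmem⟩ := hRetInf k₀ (Ioo u (Z k₀)) isOpen_Ioo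
      (by
        obtain ⟨w, hw⟩ := exists_between hk₀mem.2.1
        exact ⟨w, ⟨⟨hw.1, hw.2⟩, ⟨hw.1, hw.2.trans hk₀mem.2.2⟩⟩, hIccsub ⟨hw.1.le, (hw.2.trans hk₀mem.2.2).le⟩⟩)
    have := hc k₀ k (by omega) (by omega) hk₀mem.2 hkmem.2
    exact absurd hkmem.1.2 (not_lt.2 this)
  have hinc : ∃ k k' : ℕ, 0 < k ∧ k < k' ∧ Z k ∈ Ioo u v ∧ Z k' ∈ Ioo u v ∧ Z k < Z k' := by
    by_contra hc
    push_neg at hc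
    obtain ⟨k, hk, hkmem⟩ := hRetInf k₀ (Ioo (Z k₀) v) isOpen_Ioo
      (by
        obtain ⟨w, hw⟩ := exists_between hk₀mem.2.2
        exact ⟨w, ⟨⟨hw.1, hw.2⟩, ⟨hk₀mem.2.1.trans hw.1, hw.2⟩⟩, hIccsub ⟨(hk₀mem.2.1.trans hw.1).le, hw.2.le⟩⟩)
    have := hc k₀ k (by omega) (by omega) hk₀mem.2 hkmem.2
    exact absurd hkmem.1.1 (not_lt.2 this)
  obtain ⟨k₁, k₁', hk₁, hk₁', hA₁, hB₁, hBA₁⟩ := hdec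
  obtain ⟨k₂, k₂', hk₂, hk₂', hA₂, hB₂, hAB₂⟩ := hinc
  set q₁ := 2*k₁' - 2*k₁ with hq₁
  set q₂ := 2*k₂' - 2*k₂ with hq₂
  have hq₁pos : 1 ≤ q₁ := by omega
  have hq₂pos : 1 ≤ q₂ := by omega
  have hstep₁ : F^[q₁] (Z k₁) = Z k₁' := by
    rw [hZ]
    show F^[q₁] (F^[2*k₁] z) = F^[2*k₁'] z
    rw [← Function.iterate_add_apply]
    congr 1
    omega
  have hstep₂ : F^[q₂] (Z k₂) = Z k₂' := by
    show F^[q₂] (F^[2*k₂] z) = F^[2*k₂'] z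
    rw [← Function.iterate_add_apply]
    congr 1
    omega
  -- signs
  have hNeg : ∀ x ∈ Icc u v, F^[q₁] x < x := by
    rcases hdich q₁ hq₁pos with h | h
    · exfalso
      have := h (Z k₁) ⟨hA₁.1.le, hA₁.2.le⟩
      rw [hstep₁] at this
      linarith
    · exact h
  have hPos : ∀ x ∈ Icc u v, x < F^[q₂] x := by
    rcases hdich q₂ hq₂pos with h | h
    · exact h
    · exfalso
      have := h (Z k₂) ⟨hA₂.1.le, hA₂.2.le⟩
      rw [hstep₂] at this
      linarith
  -- propagate to multiples
  have hNegMul : ∀ i, 1 ≤ i → ∀ x ∈ Icc u v, F^[i*q₁] x < x := by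
    intro i hi
    induction i with
    | zero => omega
    | succ i ih =>
      rcases Nat.eq_zero_or_pos i with rfl | hi'
      · simpa using hNeg
      · have ihh := ih hi'
        have key : ∀ y : ℝ, F^[(i+1)*q₁] y = F^[i*q₁] (F^[q₁] y) := fun y => by
          rw [show (i+1)*q₁ = i*q₁ + q₁ by ring]
          exact Function.iterate_add_apply F (i*q₁) q₁ y
        rcases hdich ((i+1)*q₁) (Nat.one_le_iff_ne_zero.2 (Nat.mul_ne_zero (by omega) (by omega))) with h | h
        · exfalso
          have hw := h (Z k₁) ⟨hA₁.1.le, hA₁.2.le⟩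
          rw [key, hstep₁] at hw
          have hc2 : F^[i*q₁] (Z k₁') < Z k₁' := ihh _ ⟨hB₁.1.le, hB₁.2.le⟩
          linarith
        · exact h
  have hPosMul : ∀ i, 1 ≤ i → ∀ x ∈ Icc u v, x < F^[i*q₂] x := by
    intro i hi
    induction i with
    | zero => omega
    | succ i ih =>
      rcases Nat.eq_zero_or_pos i with rfl | hi'
      · simpa using hPos
      · have ihh := ih hi'
        have key : ∀ y : ℝ, F^[(i+1)*q₂] y = F^[i*q₂] (F^[q₂] y) := fun y => by
          rw [show (i+1)*q₂ = i*q₂ + q₂ by ring]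
          exact Function.iterate_add_apply F (i*q₂) q₂ y
        rcases hdich ((i+1)*q₂) (Nat.one_le_iff_ne_zero.2 (Nat.mul_ne_zero (by omega) (by omega))) with h | h
        · exact h
        · exfalso
          have hw := h (Z k₂) ⟨hA₂.1.le, hA₂.2.le⟩
          rw [key, hstep₂] at hw
          have hc2 : Z k₂' < F^[i*q₂] (Z k₂') := ihh _ ⟨hB₂.1.le, hB₂.2.le⟩
          linarith
  have h1 := hNegMul q₂ hq₂pos (Z k₁) ⟨hA₁.1.le, hA₁.2.le⟩
  have h2 := hPosMul q₁ hq₁pos (Z k₁) ⟨hA₁.1.le, hA₁.2.le⟩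
  rw [show q₂*q₁ = q₁*q₂ by ring] at h1
  linarith


include hab hF hFI htr in
/-- ★: some iterated image of any nondegenerate subinterval contains a fixed point -/
lemma star (u v : ℝ) (hu : a ≤ u) (huv : u < v) (hv : v ≤ b) :
    ∃ n : ℕ, ∃ c, (c ∈ Icc a b ∧ F c = c) ∧ c ∈ F^[n] '' Icc u v := by
  classical
  by_contra hcon
  push_neg at hcon
  have H : ∀ n, ∀ x ∈ F^[n] '' Icc u v, F x ≠ x := by
    intro n x hx hfx
    have hxI : x ∈ Icc a b := image_subset_I hFI (Icc_subset_Icc hu hv) n hx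
    exact hcon n x ⟨hxI, hfx⟩ hx
  have hJI : Icc u v ⊆ Icc a b := Icc_subset_Icc hu hv
  have hIoosub : Ioo u v ∩ Icc a b = Ioo u v :=
    inter_eq_left.2 (fun x hx => hJI ⟨hx.1.le, hx.2.le⟩)
  have hIoone : (Ioo u v ∩ Icc a b).Nonempty := by
    rw [hIoosub]; exact nonempty_Ioo.2 huv
  -- periodic point p with period q
  obtain ⟨p, hpJ, q, hq, hpq⟩ := exists_periodic hab hF hFI htr u v hu huv hv
  set P : ℕ → ℝ := fun r => F^[r] p with hPdef
  have hPmem : ∀ n, P n ∈ F^[n] '' Icc u v := fun n => ⟨p, hpJ, rfl⟩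
  have hPI : ∀ n, P n ∈ Icc a b := fun n => image_subset_I hFI hJI n (hPmem n)
  have hPper : ∀ n m, P (n + q * m) = P n := by
    intro n m
    induction m with
    | zero => simp
    | succ m ih =>
      have h1 : n + q * (m+1) = (n + q * m) + q := by ring
      show F^[n + q*(m+1)] p = P n
      rw [h1, Function.iterate_add_apply, hpq]
      exact ih
  have hPnofix : ∀ n, F (P n) ≠ P n := fun n => H n (P n) (hPmem n)
  -- fixed point set basics
  obtain ⟨c₀, hc₀I, hc₀F⟩ := fix_nonempty hab hF hFI
  set Fx : Set ℝ := {x | x ∈ Icc a b ∧ F x = x} with hFx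
  have hFxne : Fx.Nonempty := ⟨c₀, hc₀I, hc₀F⟩
  have hFxcpt : IsCompact Fx := by
    have : Fx = Icc a b ∩ {x | F x = x} := by
      ext x; simp [hFx, Set.mem_setOf_eq, Set.mem_inter_iff]
    rw [this]
    exact isCompact_Icc.inter_right (isClosed_eq hF continuous_id)
  obtain ⟨cL, hcL⟩ := hFxcpt.exists_isLeast hFxne
  obtain ⟨cR, hcR⟩ := hFxcpt.exists_isGreatest hFxne
  have hcLF : cL ∈ Icc a b ∧ F cL = cL := hcL.1
  have hcRF : cR ∈ Icc a b ∧ F cR = cR := hcR.1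
  have hLR : cL ≤ cR := hcR.2 hcL.1
  -- the class system
  set D : ℕ → Set ℝ := fun r => closure (⋃ i : ℕ, F^[r + 2*q*i] '' Icc u v) with hD
  have hq2 : 0 < 2*q := by omega
  have piece_sub : ∀ n, F^[n] '' Icc u v ⊆ Icc a b := fun n => image_subset_I hFI hJI n
  have piece_oc : ∀ n, OrdConnected (F^[n] '' Icc u v) :=
    fun n => piece_ordConnected hF isPreconnected_Icc n
  have hPper2 : ∀ r i, P (r + 2*q*i) = P r := by
    intro r i
    have : r + 2*q*i = r + q * (2*i) := by ring
    rw [this, hPper]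
  -- D-membership extraction
  have approach : ∀ r y, y ∈ D r → ∀ ε : ℝ, 0 < ε →
      ∃ i, ∃ w ∈ F^[r + 2*q*i] '' Icc u v, |w - y| < ε := by
    intro r y hy ε hε
    obtain ⟨w, hw1, hw2⟩ := Metric.mem_closure_iff.1 hy ε hε
    obtain ⟨i, hi⟩ := mem_iUnion.1 hw1
    refine ⟨i, w, hi, ?_⟩
    rw [Real.dist_eq, abs_sub_comm] at hw2
    exact hw2
  have Dintro : ∀ r i w, w ∈ F^[r + 2*q*i] '' Icc u v → w ∈ D r := by
    intro r i w hw
    exact subset_closure (mem_iUnion.2 ⟨i, hw⟩)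
  -- forward step
  have step : ∀ r y, y ∈ D r → F y ∈ D (r+1) := by
    intro r y hy
    have h1 : F y ∈ F '' D r := ⟨y, hy, rfl⟩
    have h2 : F '' D r ⊆ closure (F '' ⋃ i : ℕ, F^[r + 2*q*i] '' Icc u v) :=
      image_closure_subset_closure_image hF
    have h3 : F '' ⋃ i : ℕ, F^[r + 2*q*i] '' Icc u v
        = ⋃ i : ℕ, F^[(r+1) + 2*q*i] '' Icc u v := by
      rw [image_iUnion]
      apply iUnion_congr
      intro i
      rw [← Set.image_comp]
      have : F ∘ F^[r + 2*q*i] = F^[(r+1) + 2*q*i] := by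
        rw [show (r+1) + 2*q*i = (r + 2*q*i) + 1 by ring, Function.iterate_succ']
      rw [this]
    rw [h3] at h2
    exact h2 h1
  have down : ∀ r m, D (r + 2*q*m) ⊆ D r := by
    intro r m
    apply closure_mono
    apply iUnion_subset
    intro i
    intro x hx
    refine mem_iUnion.2 ⟨m + i, ?_⟩
    have : r + 2*q*m + 2*q*i = r + 2*q*(m+i) := by ring
    rwa [this] at hx
  -- covering
  have cover : ∀ y ∈ Icc a b, ∃ r, r < 2*q ∧ y ∈ D r := by
    intro y hy
    have hcl : y ∈ closure (⋃ r ∈ (↑(Finset.range (2*q)) : Set ℕ), ⋃ i : ℕ, F^[r + 2*q*i] '' Icc u v) := by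
      rw [Metric.mem_closure_iff]
      intro ε hε
      have hWne : (Metric.ball y ε ∩ Icc a b).Nonempty := ⟨y, Metric.mem_ball_self hε, hy⟩
      obtain ⟨k, hk, pt, hpt1, hpt2⟩ := hits hab hF hFI htr (Ioo u v) (Metric.ball y ε)
        isOpen_Ioo Metric.isOpen_ball hIoone hWne 0
      refine ⟨pt, ?_, ?_⟩
      · have hpt1' : pt ∈ F^[2*k+0] '' Icc u v := by
          apply image_mono ?_ hpt1
          rw [hIoosub]
          exact Ioo_subset_Icc_self
        set n := 2*k+0 with hn
        refine mem_iUnion₂.2 ⟨n % (2*q), Finset.mem_coe.2 (Finset.mem_range.2 (Nat.mod_lt n hq2)), ?_⟩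
        refine mem_iUnion.2 ⟨n / (2*q), ?_⟩
        have : n % (2*q) + 2*q * (n / (2*q)) = n := by
          rw [Nat.add_comm, Nat.div_add_mod]
        rwa [this]
      · rw [dist_comm]
        exact Metric.mem_ball.1 hpt2
    rw [Set.Finite.closure_biUnion (Finset.range (2*q)).finite_toSet] at hcl
    obtain ⟨r, hr1, hr2⟩ := mem_iUnion₂.1 hcl
    exact ⟨r, Finset.mem_range.1 (Finset.mem_coe.1 hr1), hr2⟩
  -- needle: every fixed point is in every class
  have needle : ∀ c', c' ∈ Icc a b → F c' = c' → ∀ r, c' ∈ D r := by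
    intro c' hc'I hc'F r
    obtain ⟨r₀, hr₀, hc'r₀⟩ := cover c' hc'I
    have fwd : ∀ k, c' ∈ D (r₀ + k) := by
      intro k
      induction k with
      | zero => simpa using hc'r₀
      | succ k ih =>
        have := step _ _ ih
        rw [hc'F] at this
        rwa [show r₀ + k + 1 = r₀ + (k+1) from rfl] at this
    have hmle : r₀ ≤ 2*q*(r₀+1) :=
      le_trans (Nat.le_succ r₀) (Nat.le_mul_of_pos_left (r₀+1) (by omega))
    have h1 : c' ∈ D (r + 2*q*(r₀+1)) := by
      have h3 := fwd (r + 2*q*(r₀+1) - r₀)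
      have h2 : r₀ + (r + 2*q*(r₀+1) - r₀) = r + 2*q*(r₀+1) := by
        generalize hTT : 2*q*(r₀+1) = T at hmle ⊢
        omega
      rwa [h2] at h3
    exact down r (r₀+1) h1
  -- no fixed point strictly between an anchor and a fixed point
  have nostrict : ∀ r c' c'', (c' ∈ Icc a b ∧ F c' = c') → (c'' ∈ Icc a b ∧ F c'' = c'') →
      min (P r) c' < c'' → c'' < max (P r) c' → False := by
    intro r c' c'' hc' hc'' h1 h2
    rcases le_total (P r) c' with hle | hle
    · -- min = P r, max = c'
      rw [min_eq_left hle] at h1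
      rw [max_eq_right hle] at h2
      obtain ⟨i, w, hw, hwc⟩ := approach r c' (needle c' hc'.1 hc'.2 r) (c' - c'') (by linarith)
      have hwgt : c'' < w := by
        rw [abs_sub_lt_iff] at hwc
        linarith [hwc.1, hwc.2]
      have : c'' ∈ F^[r + 2*q*i] '' Icc u v := by
        have hP' : P (r + 2*q*i) ∈ F^[r + 2*q*i] '' Icc u v := hPmem _
        rw [hPper2] at hP'
        have : Icc (P r) w ⊆ F^[r + 2*q*i] '' Icc u v :=
          (piece_oc _).out hP' hw
        exact this ⟨by linarith, hwgt.le⟩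
      exact H _ _ this hc''.2
    · rw [min_eq_right hle] at h1
      rw [max_eq_left hle] at h2
      obtain ⟨i, w, hw, hwc⟩ := approach r c' (needle c' hc'.1 hc'.2 r) (c'' - c') (by linarith)
      have hwlt : w < c'' := by
        rw [abs_sub_lt_iff] at hwc
        linarith [hwc.1, hwc.2]
      have : c'' ∈ F^[r + 2*q*i] '' Icc u v := by
        have hP' : P (r + 2*q*i) ∈ F^[r + 2*q*i] '' Icc u v := hPmem _
        rw [hPper2] at hP'
        have hsub : Icc w (P r) ⊆ F^[r + 2*q*i] '' Icc u v :=
          (piece_oc _).out hw hP'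
        exact hsub ⟨hwlt.le, by linarith⟩
      exact H _ _ this hc''.2
  -- all fixed points are cL or cR
  have fixsub : ∀ c'', (c'' ∈ Icc a b ∧ F c'' = c'') → c'' = cL ∨ c'' = cR := by
    intro c'' hc''
    by_contra hne
    push_neg at hne
    have h1 : cL < c'' := lt_of_le_of_ne (hcL.2 hc'') (Ne.symm hne.1)
    have h2 : c'' < cR := lt_of_le_of_ne (hcR.2 hc'') hne.2
    rcases le_or_gt (P 0) c'' with hle | hlt
    · have hPne : P 0 ≠ c'' := by
        intro he
        exact hPnofix 0 (he ▸ hc''.2)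
      have hPlt : P 0 < c'' := lt_of_le_of_ne hle hPne
      refine nostrict 0 cR c'' hcRF hc'' ?_ ?_
      · rw [min_eq_left (by linarith)]; exact hPlt
      · rw [max_eq_right (by linarith)]; exact h2
    · refine nostrict 0 cL c'' hcLF hc'' ?_ ?_
      · rw [min_eq_right (by linarith)]; exact h1
      · rw [max_eq_left (by linarith)]; exact hlt
  -- case split on cL < cR or cL = cR
  rcases eq_or_lt_of_le hLR with hEq | hLt
  · -- unique fixed point c := cL = cR
    set c := cL with hc
    have hcF : c ∈ Icc a b ∧ F c = c := hcLF
    have hfixc : ∀ c'', (c'' ∈ Icc a b ∧ F c'' = c'') → c'' = c := by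
      intro c'' h
      rcases fixsub c'' h with h1 | h1
      · exact h1
      · rw [h1, ← hEq]
    -- subcases on position of c
    rcases eq_or_lt_of_le hcF.1.1 with hca | hca
    · -- c = a
      have hsign : (∀ x ∈ Ioc a b, x < F x) ∨ (∀ x ∈ Ioc a b, F x < x) := by
        apply no_fix_sign hF Set.ordConnected_Ioc
        intro x hx hfx
        have : x = c := hfixc x ⟨⟨hx.1.le, hx.2⟩, hfx⟩
        rw [this, ← hca] at hx
        exact lt_irrefl a hx.1
      rcases hsign with hs | hs
      · have := hs b ⟨hab, le_refl b⟩
        have hFb : F b ≤ b := (hFI (right_mem_Icc.2 hab.le)).2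
        linarith
      · refine no_left_trap htr ((a+b)/2) ⟨by linarith, by linarith⟩ ?_
        intro x hx
        have hFa : F a = a := by rw [hca]; exact hcF.2
        rcases eq_or_lt_of_le hx.1 with h1 | h1
        · rw [← h1, hFa]
          exact ⟨le_refl a, by linarith⟩
        · have hxI : x ∈ Ioc a b := ⟨h1, by nlinarith [hx.2]⟩
          have := hs x hxI
          constructor
          · exact (hFI ⟨hx.1, hxI.2⟩).1
          · linarith [hx.2]
    · rcases eq_or_lt_of_le hcF.1.2 with hcb | hcb
      · -- c = b
        have hsign : (∀ x ∈ Ico a b, x < F x) ∨ (∀ x ∈ Ico a b, F x < x) := by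
          apply no_fix_sign hF Set.ordConnected_Ico
          intro x hx hfx
          have : x = c := hfixc x ⟨⟨hx.1, hx.2.le⟩, hfx⟩
          rw [this, hcb] at hx
          exact lt_irrefl b hx.2
        rcases hsign with hs | hs
        · refine no_right_trap htr ((a+b)/2) ⟨by linarith, by linarith⟩ ?_
          intro x hx
          have hFb : F b = b := by rw [← hcb]; exact hcF.2
          rcases eq_or_lt_of_le hx.2 with h1 | h1
          · rw [h1, hFb]
            exact ⟨by linarith, le_refl b⟩
          · have hxI : x ∈ Ico a b := ⟨by nlinarith [hx.1], h1⟩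
            have := hs x hxI
            constructor
            · linarith [hx.1]
            · exact (hFI ⟨hxI.1, hx.2⟩).2
        · have := hs a ⟨le_refl a, hab⟩
          have hFa : a ≤ F a := (hFI (left_mem_Icc.2 hab.le)).1
          linarith
      · -- main case: a < c < b
        -- existence of preimages of endpoints on the correct sides
        have hxa : ∃ xa, F xa = a ∧ c < xa ∧ xa ≤ b := by
          obtain ⟨x₀, hx₀I, hx₀⟩ := surjF hab hF hFI htr (left_mem_Icc.2 hab.le)
          refine ⟨x₀, hx₀, ?_, hx₀I.2⟩
          rcases lt_trichotomy x₀ c with h1 | h1 | h1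
          · exfalso
            have hx₀a : a < x₀ := by
              rcases eq_or_lt_of_le hx₀I.1 with h2 | h2
              · exfalso
                have : x₀ = c := hfixc x₀ ⟨hx₀I, by rw [hx₀, ← h2]⟩
                rw [this] at h2
                exact absurd hca (by rw [h2]; exact lt_irrefl _)
              · exact h2
            have hFa : a < F a := by
              rcases eq_or_lt_of_le (hFI (left_mem_Icc.2 hab.le)).1 with h2 | h2
              · exfalso
                have : a = c := hfixc a ⟨left_mem_Icc.2 hab.le, h2.symm⟩
                rw [this] at hca
                exact lt_irrefl _ hca
              · exact h2
            obtain ⟨c'', hc''1, hc''2⟩ := fix_between hF (x₁ := x₀) (x₂ := a)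
              (by rw [hx₀]; exact hx₀I.1) hFa.le
            rw [uIcc_of_ge hx₀I.1] at hc''1
            have : c'' = c := hfixc c'' ⟨⟨hc''1.1, hc''1.2.trans hx₀I.2⟩, hc''2⟩
            rw [this] at hc''1
            linarith [hc''1.2]
          · exfalso
            rw [h1] at hx₀
            rw [hcF.2] at hx₀
            rw [hx₀] at hca
            exact lt_irrefl _ hca
          · exact h1
        have hxb : ∃ xb, F xb = b ∧ xb < c ∧ a ≤ xb := by
          obtain ⟨x₀, hx₀I, hx₀⟩ := surjF hab hF hFI htr (right_mem_Icc.2 hab.le)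
          refine ⟨x₀, hx₀, ?_, hx₀I.1⟩
          rcases lt_trichotomy x₀ c with h1 | h1 | h1
          · exact h1
          · exfalso
            rw [h1, hcF.2] at hx₀
            rw [hx₀] at hcb
            exact lt_irrefl _ hcb
          · exfalso
            have hx₀b : x₀ < b := by
              rcases eq_or_lt_of_le hx₀I.2 with h2 | h2
              · exfalso
                have : x₀ = c := hfixc x₀ ⟨hx₀I, by rw [hx₀, h2]⟩
                rw [this] at h2
                exact absurd hcb (by rw [← h2]; exact lt_irrefl _)
              · exact h2
            have hFb : F b < b := by
              rcases eq_or_lt_of_le (hFI (right_mem_Icc.2 hab.le)).2 with h2 | h2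
              · exfalso
                have : b = c := hfixc b ⟨right_mem_Icc.2 hab.le, h2⟩
                rw [this] at hcb
                exact lt_irrefl _ hcb
              · exact h2
            obtain ⟨c'', hc''1, hc''2⟩ := fix_between hF (x₁ := b) (x₂ := x₀)
              hFb.le (by rw [hx₀]; exact hx₀I.2)
            rw [uIcc_of_ge hx₀I.2] at hc''1
            have : c'' = c := hfixc c'' ⟨⟨hx₀I.1.trans hc''1.1, hc''1.2⟩, hc''2⟩
            rw [this] at hc''1
            linarith [hc''1.1]
        obtain ⟨xa, hxa1, hxa2, hxa3⟩ := hxa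
        obtain ⟨xb, hxb1, hxb2, hxb3⟩ := hxb
        -- no piece contains c
        have hcnot : ∀ n, c ∉ F^[n] '' Icc u v := by
          intro n hcmem
          exact H n c hcmem hcF.2
        -- piece side
        have hside : ∀ n x, x ∈ F^[n] '' Icc u v → (c < x ↔ c < P n) := by
          intro n x hx
          have hxne : x ≠ c := fun he => hcnot n (he ▸ hx)
          have hPne : P n ≠ c := fun he => hcnot n (he ▸ hPmem n)
          constructor
          · intro hcx
            by_contra hcP
            push_neg at hcP
            have hPlt : P n < c := lt_of_le_of_ne hcP hPne
            have : c ∈ F^[n] '' Icc u v :=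
              (piece_oc n).out (hPmem n) hx ⟨hPlt.le, hcx.le⟩
            exact hcnot n this
          · intro hcP
            by_contra hcx
            push_neg at hcx
            have hxlt : x < c := lt_of_le_of_ne hcx hxne
            have : c ∈ F^[n] '' Icc u v :=
              (piece_oc n).out hx (hPmem n) ⟨hxlt.le, hcP.le⟩
            exact hcnot n this
        -- side lemmas for classes
        have sideR : ∀ r, b ∈ D r → c < P r := by
          intro r hbr
          obtain ⟨i, w, hw, hwc⟩ := approach r b hbr (b - c) (by linarith)
          have hcw : c < w := by
            rw [abs_sub_lt_iff] at hwc
            linarith [hwc.1, hwc.2]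
          have := (hside _ w hw).1 hcw
          rwa [hPper2] at this
        have sideL : ∀ r, a ∈ D r → P r < c := by
          intro r har
          obtain ⟨i, w, hw, hwc⟩ := approach r a har (c - a) (by linarith)
          have hcw : w < c := by
            rw [abs_sub_lt_iff] at hwc
            linarith [hwc.1, hwc.2]
          have hPn : P (r + 2*q*i) ≠ c := fun he => hcnot _ (he ▸ hPmem _)
          have h2 : ¬ (c < P (r + 2*q*i)) := by
            intro hcP
            have := (hside _ w hw).2 hcP
            linarith
          push_neg at h2
          have := lt_of_le_of_ne h2 hPn
          rwa [hPper2] at this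
        -- alternation
        have ALTRa : ∀ r, b ∈ D r → a ∈ D (r+1) := by
          intro r hbr
          have hsr : c < P r := sideR r hbr
          rw [hD]
          rw [Metric.mem_closure_iff]
          intro ε hε
          obtain ⟨δ, hδpos, hδ⟩ := Metric.continuous_iff.1 hF xa ε hε
          -- find w in a class-r piece with |w - xa| < δ
          have hfind : ∃ i, ∃ w ∈ F^[r + 2*q*i] '' Icc u v, |w - xa| < δ := by
            rcases le_or_gt xa (P r) with hle | hlt
            · -- use needle at c
              obtain ⟨i, w₁, hw₁, hwc⟩ := approach r c (needle c hcF.1 hcF.2 r)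
                (min δ (xa - c)) (lt_min hδpos (by linarith))
              have hw₁c : c < w₁ := by
                have := (hside _ w₁ hw₁).2 (by rwa [hPper2])
                exact this
              have hw₁xa : w₁ < xa := by
                rw [abs_sub_lt_iff] at hwc
                have := hwc.1
                have h2 := min_le_right δ (xa - c)
                linarith
              refine ⟨i, xa, ?_, by simp only [sub_self, abs_zero]; exact hδpos⟩
              have hP' : P (r + 2*q*i) ∈ F^[r + 2*q*i] '' Icc u v := hPmem _
              rw [hPper2] at hP'
              exact (piece_oc _).out hw₁ hP' ⟨hw₁xa.le, hle⟩
            · rcases eq_or_lt_of_le hxa3 with heq | hltb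
              · -- xa = b
                obtain ⟨i, w₁, hw₁, hwc⟩ := approach r b hbr δ hδpos
                exact ⟨i, w₁, hw₁, by rwa [heq]⟩
              · -- xa < b
                obtain ⟨i, w₁, hw₁, hwc⟩ := approach r b hbr (b - xa) (by linarith)
                have hw₁xa : xa < w₁ := by
                  rw [abs_sub_lt_iff] at hwc
                  linarith [hwc.1, hwc.2]
                refine ⟨i, xa, ?_, by simp only [sub_self, abs_zero]; exact hδpos⟩
                have hP' : P (r + 2*q*i) ∈ F^[r + 2*q*i] '' Icc u v := hPmem _
                rw [hPper2] at hP'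
                exact (piece_oc _).out hP' hw₁ ⟨hlt.le, hw₁xa.le⟩
          obtain ⟨i, w, hw, hwd⟩ := hfind
          refine ⟨F w, ?_, ?_⟩
          · refine mem_iUnion.2 ⟨i, ?_⟩
            obtain ⟨x₁, hx₁, rfl⟩ := hw
            refine ⟨x₁, hx₁, ?_⟩
            rw [show r + 1 + 2*q*i = (r + 2*q*i) + 1 by ring]
            rw [Function.iterate_succ_apply']
          · have := hδ w (by rwa [Real.dist_eq])
            rw [hxa1] at this
            rw [dist_comm] at this
            exact this
        have ALTLb : ∀ r, a ∈ D r → b ∈ D (r+1) := by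
          intro r har
          have hsr : P r < c := sideL r har
          rw [hD, Metric.mem_closure_iff]
          intro ε hε
          obtain ⟨δ, hδpos, hδ⟩ := Metric.continuous_iff.1 hF xb ε hε
          have hfind : ∃ i, ∃ w ∈ F^[r + 2*q*i] '' Icc u v, |w - xb| < δ := by
            rcases le_or_gt (P r) xb with hle | hlt
            · obtain ⟨i, w₁, hw₁, hwc⟩ := approach r c (needle c hcF.1 hcF.2 r)
                (min δ (c - xb)) (lt_min hδpos (by linarith))
              have hw₁c : w₁ < c := by
                have h2 : ¬ (c < w₁) := by
                  intro hcw
                  have := (hside _ w₁ hw₁).1 hcw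
                  rw [hPper2] at this
                  linarith
                push_neg at h2
                have hne : w₁ ≠ c := fun he => hcnot _ (he ▸ hw₁)
                exact lt_of_le_of_ne h2 hne
              have hw₁xb : xb < w₁ := by
                rw [abs_sub_lt_iff] at hwc
                have h2 := min_le_right δ (c - xb)
                linarith [hwc.1, hwc.2]
              refine ⟨i, xb, ?_, by simp only [sub_self, abs_zero]; exact hδpos⟩
              have hP' : P (r + 2*q*i) ∈ F^[r + 2*q*i] '' Icc u v := hPmem _
              rw [hPper2] at hP'
              exact (piece_oc _).out hP' hw₁ ⟨hle, hw₁xb.le⟩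
            · rcases eq_or_lt_of_le hxb3 with heq | hlta
              · obtain ⟨i, w₁, hw₁, hwc⟩ := approach r a har δ hδpos
                exact ⟨i, w₁, hw₁, by rwa [← heq]⟩
              · obtain ⟨i, w₁, hw₁, hwc⟩ := approach r a har (xb - a) (by linarith)
                have hw₁xb : w₁ < xb := by
                  rw [abs_sub_lt_iff] at hwc
                  linarith [hwc.1, hwc.2]
                refine ⟨i, xb, ?_, by simp only [sub_self, abs_zero]; exact hδpos⟩
                have hP' : P (r + 2*q*i) ∈ F^[r + 2*q*i] '' Icc u v := hPmem _
                rw [hPper2] at hP'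
                exact (piece_oc _).out hw₁ hP' ⟨hw₁xb.le, hlt.le⟩
          obtain ⟨i, w, hw, hwd⟩ := hfind
          refine ⟨F w, ?_, ?_⟩
          · refine mem_iUnion.2 ⟨i, ?_⟩
            obtain ⟨x₁, hx₁, rfl⟩ := hw
            refine ⟨x₁, hx₁, ?_⟩
            rw [show r + 1 + 2*q*i = (r + 2*q*i) + 1 by ring]
            rw [Function.iterate_succ_apply']
          · have := hδ w (by rwa [Real.dist_eq])
            rw [hxb1, dist_comm] at this
            exact this
        -- initial class containing b
        obtain ⟨jb, hjb2q, hjb⟩ := cover b (right_mem_Icc.2 hab.le)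
        -- alternating membership
        have main : ∀ k : ℕ, (k % 2 = 0 → b ∈ D (jb + k)) ∧ (k % 2 = 1 → a ∈ D (jb + k)) := by
          intro k
          induction k with
          | zero => exact ⟨fun _ => by simpa using hjb, fun h => by omega⟩
          | succ k ih =>
            constructor
            · intro hek
              have hko : k % 2 = 1 := by omega
              have ha := ih.2 hko
              have := ALTLb _ ha
              rwa [show jb + k + 1 = jb + (k+1) from by omega] at this
            · intro hok
              have hke : k % 2 = 0 := by omega
              have hb := ih.1 hke
              have := ALTRa _ hb
              rwa [show jb + k + 1 = jb + (k+1) from by omega] at this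
        have s2 : ∀ k : ℕ, (c < P (jb + k) ↔ k % 2 = 0) := by
          intro k
          rcases Nat.mod_two_eq_zero_or_one k with hk | hk
          · exact ⟨fun _ => hk, fun _ => sideR _ ((main k).1 hk)⟩
          · constructor
            · intro hcP
              have := sideL _ ((main k).2 hk)
              exact absurd this (lt_asymm hcP)
            · intro h01
              omega
        -- parity of q
        rcases Nat.even_or_odd q with hqe | hqo
        · -- q even: sides are parity-determined; contradiction with transitivity
          obtain ⟨q', hq'⟩ := hqe
          have hsidepar : ∀ n : ℕ, (c < P n ↔ (n + jb) % 2 = 0) := by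
            intro n
            have h1 : P n = P (n + q * jb) := (hPper n jb).symm
            have hmle : jb ≤ q * jb := Nat.le_mul_of_pos_left jb (by omega)
            have hmev : q * jb = 2 * (q' * jb) := by rw [hq']; ring
            have h2 : n + q * jb = jb + (n + q*jb - jb) := by
              generalize q * jb = T at hmle ⊢
              omega
            rw [h1, h2, s2]
            generalize hTT : q * jb = T at hmle hmev ⊢
            omega
          -- J = piece 0 side
          rcases Nat.mod_two_eq_zero_or_one jb with hjbp | hjbp
          · -- P 0 > c : even pieces on the right; aim at left target
            have hWne : (Ioo (a-1) c ∩ Icc a b).Nonempty :=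
              ⟨a, ⟨by linarith, hca⟩, left_mem_Icc.2 hab.le⟩
            obtain ⟨k, hk, pt, hpt1, hpt2⟩ := htr (Ioo u v) (Ioo (a-1) c)
              isOpen_Ioo isOpen_Ioo hIoone hWne
            have hptp : pt ∈ F^[2*k] '' Icc u v := by
              apply image_mono ?_ hpt1
              rw [hIoosub]; exact Ioo_subset_Icc_self
            have := (hside (2*k) pt hptp).2 (by
              rw [hsidepar]
              omega)
            linarith [hpt2.2]
          · -- P 0 < c : even pieces on the left; aim at right target
            have hWne : (Ioo c (b+1) ∩ Icc a b).Nonempty :=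
              ⟨b, ⟨hcb, by linarith⟩, right_mem_Icc.2 hab.le⟩
            obtain ⟨k, hk, pt, hpt1, hpt2⟩ := htr (Ioo u v) (Ioo c (b+1))
              isOpen_Ioo isOpen_Ioo hIoone hWne
            have hptp : pt ∈ F^[2*k] '' Icc u v := by
              apply image_mono ?_ hpt1
              rw [hIoosub]; exact Ioo_subset_Icc_self
            have hnotlt : ¬ (c < pt) := by
              rw [hside (2*k) pt hptp, hsidepar]
              omega
            exact hnotlt hpt2.1
        · -- q odd: contradiction between periodicity and alternation
          have h0 : c < P (jb + 0) := (s2 0).2 rfl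
          have hq1 : ¬ (c < P (jb + q)) := by
            rw [s2 q]
            obtain ⟨q', hq'⟩ := hqo
            omega
          have : P (jb + q) = P jb := by
            have := hPper jb 1
            simpa using this
          rw [this] at hq1
          simp only [Nat.add_zero] at h0
          exact hq1 h0
  · -- two distinct extreme fixed points, cL < cR
    have hPin : ∀ n, cL < P n ∧ P n < cR := by
      intro n
      have hPneL : P n ≠ cL := fun he => hPnofix n (by rw [he]; exact hcLF.2)
      have hPneR : P n ≠ cR := fun he => hPnofix n (by rw [he]; exact hcRF.2)
      constructor
      · by_contra hle
        push_neg at hle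
        have hlt : P n < cL := lt_of_le_of_ne hle hPneL
        exact nostrict n cR cL hcRF hcLF
          (by rw [min_eq_left (by linarith)]; exact hlt)
          (by rw [max_eq_right (by linarith)]; exact hLt)
      · by_contra hle
        push_neg at hle
        have hlt : cR < P n := lt_of_le_of_ne hle (Ne.symm hPneR)
        exact nostrict n cL cR hcLF hcRF
          (by rw [min_eq_right (by linarith)]; exact hLt)
          (by rw [max_eq_left (by linarith)]; exact hlt)
    have hpiece : ∀ n x, x ∈ F^[n] '' Icc u v → cL < x ∧ x < cR := by
      intro n x hx
      constructor
      · by_contra hle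
        push_neg at hle
        have : cL ∈ F^[n] '' Icc u v := (piece_oc n).out hx (hPmem n) ⟨hle, (hPin n).1.le⟩
        exact H n cL this hcLF.2
      · by_contra hle
        push_neg at hle
        have : cR ∈ F^[n] '' Icc u v := (piece_oc n).out (hPmem n) hx ⟨(hPin n).2.le, hle⟩
        exact H n cR this hcRF.2
    have hcLa : cL = a := by
      by_contra hne
      have hlt : a < cL := lt_of_le_of_ne hcLF.1.1 (Ne.symm hne)
      have hWne : (Ioo (a-1) cL ∩ Icc a b).Nonempty :=
        ⟨a, ⟨by linarith, hlt⟩, left_mem_Icc.2 hab.le⟩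
      obtain ⟨k, hk, pt, hpt1, hpt2⟩ := htr (Ioo u v) (Ioo (a-1) cL)
        isOpen_Ioo isOpen_Ioo hIoone hWne
      have hptp : pt ∈ F^[2*k] '' Icc u v := by
        apply image_mono ?_ hpt1
        rw [hIoosub]; exact Ioo_subset_Icc_self
      exact absurd (hpiece _ _ hptp).1 (not_lt.2 hpt2.2.le)
    have hcRb : cR = b := by
      by_contra hne
      have hlt : cR < b := lt_of_le_of_ne hcRF.1.2 hne
      have hWne : (Ioo cR (b+1) ∩ Icc a b).Nonempty :=
        ⟨b, ⟨hlt, by linarith⟩, right_mem_Icc.2 hab.le⟩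
      obtain ⟨k, hk, pt, hpt1, hpt2⟩ := htr (Ioo u v) (Ioo cR (b+1))
        isOpen_Ioo isOpen_Ioo hIoone hWne
      have hptp : pt ∈ F^[2*k] '' Icc u v := by
        apply image_mono ?_ hpt1
        rw [hIoosub]; exact Ioo_subset_Icc_self
      exact absurd (hpiece _ _ hptp).2 (not_lt.2 hpt2.1.le)
    have hsign : (∀ x ∈ Ioo a b, x < F x) ∨ (∀ x ∈ Ioo a b, F x < x) := by
      apply no_fix_sign hF Set.ordConnected_Ioo
      intro x hx hfx
      rcases fixsub x ⟨⟨hx.1.le, hx.2.le⟩, hfx⟩ with h | h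
      · rw [h, hcLa] at hx; exact lt_irrefl a hx.1
      · rw [h, hcRb] at hx; exact lt_irrefl b hx.2
    rcases hsign with hs | hs
    · refine no_right_trap htr ((a+b)/2) ⟨by linarith, by linarith⟩ ?_
      intro x hx
      rcases eq_or_lt_of_le hx.2 with h1 | h1
      · have hFb : F b = b := by rw [← hcRb]; exact hcRF.2
        rw [h1, hFb]; exact ⟨by linarith, le_refl b⟩
      · have hxI : x ∈ Ioo a b := ⟨by nlinarith [hx.1], h1⟩
        exact ⟨hx.1.trans (hs x hxI).le, (hFI ⟨hxI.1.le, hxI.2.le⟩).2⟩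
    · refine no_left_trap htr ((a+b)/2) ⟨by linarith, by linarith⟩ ?_
      intro x hx
      rcases eq_or_lt_of_le hx.1 with h1 | h1
      · have hFa : F a = a := by rw [← hcLa]; exact hcLF.2
        rw [← h1, hFa]; exact ⟨le_refl a, by linarith⟩
      · have hxI : x ∈ Ioo a b := ⟨h1, by nlinarith [hx.2]⟩
        exact ⟨(hFI ⟨hxI.1.le, hxI.2.le⟩).1, (hs x hxI).le.trans hx.2⟩

include hab hF hFI htr in
/-- a fixed-point-anchored interval eventually covers itself at all times -/
lemma cofinal_right (c t : ℝ) (hcI : c ∈ Icc a b) (hcF : F c = c) (hct : c < t)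
    (htb : t < b) :
    ∃ N, ∀ n, N ≤ n → Icc c t ⊆ F^[n] '' Icc c t := by
  classical
  have hta : a < t := lt_of_le_of_lt hcI.1 hct
  have hKI : Icc c t ⊆ Icc a b := Icc_subset_Icc hcI.1 htb.le
  have hIoosub : Ioo c t ∩ Icc a b = Ioo c t :=
    inter_eq_left.2 (fun x hx => hKI ⟨hx.1.le, hx.2.le⟩)
  have hIoone : (Ioo c t ∩ Icc a b).Nonempty := by
    rw [hIoosub]; exact nonempty_Ioo.2 hct
  have piece_oc : ∀ n, OrdConnected (F^[n] '' Icc c t) :=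
    fun n => piece_ordConnected hF isPreconnected_Icc n
  have hanchor : ∀ n, c ∈ F^[n] '' Icc c t :=
    fun n => ⟨c, left_mem_Icc.2 hct.le, Function.iterate_fixed hcF n⟩
  have trigger : ∀ n x, x ∈ F^[n] '' Icc c t → t < x → Icc c t ⊆ F^[n] '' Icc c t := by
    intro n x hx htx
    intro y hy
    exact (piece_oc n).out (hanchor n) hx ⟨hy.1, hy.2.trans htx.le⟩
  set T : Set ℕ := {n | Icc c t ⊆ F^[n] '' Icc c t} with hT
  have hT0 : (0:ℕ) ∈ T := by simp [hT]
  have Tadd : ∀ m n, m ∈ T → n ∈ T → m + n ∈ T := by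
    intro m n hm hn
    have h1 : F^[m] '' Icc c t ⊆ F^[m] '' (F^[n] '' Icc c t) := image_mono hn
    rw [image_piece] at h1
    exact fun y hy => h1 (hm hy)
  have Tpar : ∀ m, ∃ n, m ≤ n ∧ n % 2 = m % 2 ∧ n ∈ T := by
    intro m
    have hWne : (Ioo t (b+1) ∩ Icc a b).Nonempty :=
      ⟨b, ⟨htb, by linarith⟩, right_mem_Icc.2 hab.le⟩
    obtain ⟨k, hk, pt, hpt1, hpt2⟩ := hits hab hF hFI htr (Ioo c t) (Ioo t (b+1))
      isOpen_Ioo isOpen_Ioo hIoone hWne m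
    have hptp : pt ∈ F^[2*k+m] '' Icc c t := by
      apply image_mono ?_ hpt1
      rw [hIoosub]; exact Ioo_subset_Icc_self
    exact ⟨2*k+m, by omega, by omega, trigger _ _ hptp hpt2.1⟩
  -- global fixed point extremes
  obtain ⟨c₀, hc₀I, hc₀F⟩ := fix_nonempty hab hF hFI
  set Fx : Set ℝ := {x | x ∈ Icc a b ∧ F x = x} with hFx
  have hFxne : Fx.Nonempty := ⟨c₀, hc₀I, hc₀F⟩
  have hFxcpt : IsCompact Fx := by
    have : Fx = Icc a b ∩ {x | F x = x} := by
      ext x; simp [hFx, Set.mem_setOf_eq, Set.mem_inter_iff]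
    rw [this]
    exact isCompact_Icc.inter_right (isClosed_eq hF continuous_id)
  obtain ⟨cL, hcL⟩ := hFxcpt.exists_isLeast hFxne
  obtain ⟨cR, hcR⟩ := hFxcpt.exists_isGreatest hFxne
  have hcLF : cL ∈ Icc a b ∧ F cL = cL := hcL.1
  have hcRF : cR ∈ Icc a b ∧ F cR = cR := hcR.1
  -- endpoint preimages (or endpoints fixed)
  have hxa : (F a = a) ∨ ∃ xa, F xa = a ∧ cL < xa ∧ xa ≤ b := by
    rcases eq_or_lt_of_le (hFI (left_mem_Icc.2 hab.le)).1 with h | h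
    · exact Or.inl h.symm
    · right
      obtain ⟨x₀, hx₀I, hx₀⟩ := surjF hab hF hFI htr (left_mem_Icc.2 hab.le)
      refine ⟨x₀, hx₀, ?_, hx₀I.2⟩
      by_contra hle
      push_neg at hle
      obtain ⟨c'', hc''1, hc''2⟩ := fix_between hF (x₁ := x₀) (x₂ := a)
        (by rw [hx₀]; exact hx₀I.1) h.le
      rw [uIcc_of_ge hx₀I.1] at hc''1
      have hc''L : cL ≤ c'' := hcL.2 ⟨⟨hc''1.1, hc''1.2.trans hx₀I.2⟩, hc''2⟩
      have hc''x : c'' ≤ x₀ := hc''1.2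
      have h1 : x₀ = cL := le_antisymm hle (hc''L.trans hc''x)
      have h2 : a = cL := by rw [← hx₀, h1, hcLF.2]
      have h3 : F a = a := by rw [h2]; exact hcLF.2
      linarith
  have hxb : (F b = b) ∨ ∃ xb, F xb = b ∧ xb < cR ∧ a ≤ xb := by
    rcases eq_or_lt_of_le (hFI (right_mem_Icc.2 hab.le)).2 with h | h
    · exact Or.inl h
    · right
      obtain ⟨x₀, hx₀I, hx₀⟩ := surjF hab hF hFI htr (right_mem_Icc.2 hab.le)
      refine ⟨x₀, hx₀, ?_, hx₀I.1⟩
      by_contra hle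
      push_neg at hle
      obtain ⟨c'', hc''1, hc''2⟩ := fix_between hF (x₁ := b) (x₂ := x₀)
        h.le (by rw [hx₀]; exact hx₀I.2)
      rw [uIcc_of_ge hx₀I.2] at hc''1
      have hc''R : c'' ≤ cR := hcR.2 ⟨⟨hx₀I.1.trans hc''1.1, hc''1.2⟩, hc''2⟩
      have hc''x : x₀ ≤ c'' := hc''1.1
      have h1 : x₀ = cR := le_antisymm (hc''x.trans hc''R) hle
      have h2 : b = cR := by rw [← hx₀, h1, hcRF.2]
      have h3 : F b = b := by rw [h2]; exact hcRF.2
      linarith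
  -- the key residue lemma
  have key : ∀ d, 0 < d → d % 2 = 1 → ∀ r : ℕ, ∃ n, n ∈ T ∧ n % d = r % d := by
    intro d hd hdodd r
    set D : ℕ → Set ℝ := fun s => closure (⋃ i : ℕ, F^[s + d*i] '' Icc c t) with hD
    have approach : ∀ s y, y ∈ D s → ∀ ε : ℝ, 0 < ε →
        ∃ i, ∃ w ∈ F^[s + d*i] '' Icc c t, |w - y| < ε := by
      intro s y hy ε hε
      obtain ⟨w, hw1, hw2⟩ := Metric.mem_closure_iff.1 hy ε hε
      obtain ⟨i, hi⟩ := mem_iUnion.1 hw1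
      refine ⟨i, w, hi, ?_⟩
      rw [Real.dist_eq, abs_sub_comm] at hw2
      exact hw2
    have step : ∀ s y, y ∈ D s → F y ∈ D (s+1) := by
      intro s y hy
      have h1 : F y ∈ F '' D s := ⟨y, hy, rfl⟩
      have h2 : F '' D s ⊆ closure (F '' ⋃ i : ℕ, F^[s + d*i] '' Icc c t) :=
        image_closure_subset_closure_image hF
      have h3 : F '' ⋃ i : ℕ, F^[s + d*i] '' Icc c t
          = ⋃ i : ℕ, F^[(s+1) + d*i] '' Icc c t := by
        rw [image_iUnion]
        apply iUnion_congr
        intro i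
        rw [← Set.image_comp]
        have : F ∘ F^[s + d*i] = F^[(s+1) + d*i] := by
          rw [show (s+1) + d*i = (s + d*i) + 1 by ring, Function.iterate_succ']
        rw [this]
      rw [h3] at h2
      exact h2 h1
    have down : ∀ s m, D (s + d*m) ⊆ D s := by
      intro s m
      apply closure_mono
      apply iUnion_subset
      intro i x hx
      refine mem_iUnion.2 ⟨m + i, ?_⟩
      have : s + d*m + d*i = s + d*(m+i) := by ring
      rwa [this] at hx
    have cover : ∀ y ∈ Icc a b, ∃ s, s < d ∧ y ∈ D s := by
      intro y hy
      have hcl : y ∈ closure (⋃ s ∈ (↑(Finset.range d) : Set ℕ),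
          ⋃ i : ℕ, F^[s + d*i] '' Icc c t) := by
        rw [Metric.mem_closure_iff]
        intro ε hε
        have hWne : (Metric.ball y ε ∩ Icc a b).Nonempty := ⟨y, Metric.mem_ball_self hε, hy⟩
        obtain ⟨k, hk, pt, hpt1, hpt2⟩ := hits hab hF hFI htr (Ioo c t) (Metric.ball y ε)
          isOpen_Ioo Metric.isOpen_ball hIoone hWne 0
        refine ⟨pt, ?_, ?_⟩
        · have hpt1' : pt ∈ F^[2*k+0] '' Icc c t := by
            apply image_mono ?_ hpt1
            rw [hIoosub]
            exact Ioo_subset_Icc_self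
          set n := 2*k+0 with hn
          refine mem_iUnion₂.2 ⟨n % d, Finset.mem_coe.2 (Finset.mem_range.2 (Nat.mod_lt n hd)), ?_⟩
          refine mem_iUnion.2 ⟨n / d, ?_⟩
          have : n % d + d * (n / d) = n := by
            rw [Nat.add_comm, Nat.div_add_mod]
          rwa [this]
        · rw [dist_comm]
          exact Metric.mem_ball.1 hpt2
      rw [Set.Finite.closure_biUnion (Finset.range d).finite_toSet] at hcl
      obtain ⟨s, hs1, hs2⟩ := mem_iUnion₂.1 hcl
      exact ⟨s, Finset.mem_range.1 (Finset.mem_coe.1 hs1), hs2⟩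
    have needle : ∀ c', c' ∈ Icc a b → F c' = c' → ∀ s, c' ∈ D s := by
      intro c' hc'I hc'F s
      obtain ⟨s₀, hs₀, hc's₀⟩ := cover c' hc'I
      have fwd : ∀ k, c' ∈ D (s₀ + k) := by
        intro k
        induction k with
        | zero => simpa using hc's₀
        | succ k ih =>
          have := step _ _ ih
          rw [hc'F] at this
          exact this
      have hmle : s₀ ≤ d*(s₀+1) :=
        le_trans (Nat.le_succ s₀) (Nat.le_mul_of_pos_left (s₀+1) hd)
      have h1 : c' ∈ D (s + d*(s₀+1)) := by
        have h3 := fwd (s + d*(s₀+1) - s₀)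
        have h2 : s₀ + (s + d*(s₀+1) - s₀) = s + d*(s₀+1) := by
          generalize hTT : d*(s₀+1) = Tg at hmle ⊢
          omega
        rwa [h2] at h3
      exact down s (s₀+1) h1
    -- alternation
    have ALTRa : ∀ s, b ∈ D s → a ∈ D (s+1) := by
      intro s hbs
      rcases hxa with hfa | ⟨xa, hxa1, hxa2, hxa3⟩
      · exact needle a (left_mem_Icc.2 hab.le) hfa (s+1)
      · rw [hD, Metric.mem_closure_iff]
        intro ε hε
        obtain ⟨δ, hδpos, hδ⟩ := Metric.continuous_iff.1 hF xa ε hε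
        have hfind : ∃ i, ∃ w ∈ F^[s + d*i] '' Icc c t, |w - xa| < δ := by
          rcases le_or_gt xa c with hle | hlt
          · -- xa ≤ c : use needle at cL (cL < xa ≤ c)
            obtain ⟨i, w₁, hw₁, hwc⟩ := approach s cL (needle cL hcLF.1 hcLF.2 s)
              (xa - cL) (by linarith)
            have hw₁xa : w₁ < xa := by
              rw [abs_sub_lt_iff] at hwc
              linarith [hwc.1, hwc.2]
            refine ⟨i, xa, ?_, by simp only [sub_self, abs_zero]; exact hδpos⟩
            exact (piece_oc _).out hw₁ (hanchor _) ⟨hw₁xa.le, hle⟩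
          · rcases eq_or_lt_of_le hxa3 with heq | hltb
            · obtain ⟨i, w₁, hw₁, hwc⟩ := approach s b hbs δ hδpos
              exact ⟨i, w₁, hw₁, by rwa [heq]⟩
            · obtain ⟨i, w₁, hw₁, hwc⟩ := approach s b hbs (b - xa) (by linarith)
              have hw₁xa : xa < w₁ := by
                rw [abs_sub_lt_iff] at hwc
                linarith [hwc.1, hwc.2]
              refine ⟨i, xa, ?_, by simp only [sub_self, abs_zero]; exact hδpos⟩
              exact (piece_oc _).out (hanchor _) hw₁ ⟨hlt.le, hw₁xa.le⟩
        obtain ⟨i, w, hw, hwd⟩ := hfind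
        refine ⟨F w, ?_, ?_⟩
        · refine mem_iUnion.2 ⟨i, ?_⟩
          obtain ⟨x₁, hx₁, rfl⟩ := hw
          refine ⟨x₁, hx₁, ?_⟩
          rw [show s + 1 + d*i = (s + d*i) + 1 by ring]
          rw [Function.iterate_succ_apply']
        · have := hδ w (by rwa [Real.dist_eq])
          rw [hxa1, dist_comm] at this
          exact this
    have ALTLb : ∀ s, a ∈ D s → b ∈ D (s+1) := by
      intro s has
      rcases hxb with hfb | ⟨xb, hxb1, hxb2, hxb3⟩
      · exact needle b (right_mem_Icc.2 hab.le) hfb (s+1)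
      · rw [hD, Metric.mem_closure_iff]
        intro ε hε
        obtain ⟨δ, hδpos, hδ⟩ := Metric.continuous_iff.1 hF xb ε hε
        have hfind : ∃ i, ∃ w ∈ F^[s + d*i] '' Icc c t, |w - xb| < δ := by
          rcases le_or_gt xb c with hle | hlt
          · rcases eq_or_lt_of_le hxb3 with heq | hlta
            · obtain ⟨i, w₁, hw₁, hwc⟩ := approach s a has δ hδpos
              exact ⟨i, w₁, hw₁, by rwa [← heq]⟩
            · obtain ⟨i, w₁, hw₁, hwc⟩ := approach s a has (xb - a) (by linarith)
              have hw₁xb : w₁ < xb := by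
                rw [abs_sub_lt_iff] at hwc
                linarith [hwc.1, hwc.2]
              refine ⟨i, xb, ?_, by simp only [sub_self, abs_zero]; exact hδpos⟩
              exact (piece_oc _).out hw₁ (hanchor _) ⟨hw₁xb.le, hle⟩
          · -- c < xb : use needle at cR (xb < cR)
            obtain ⟨i, w₁, hw₁, hwc⟩ := approach s cR (needle cR hcRF.1 hcRF.2 s)
              (cR - xb) (by linarith)
            have hw₁xb : xb < w₁ := by
              rw [abs_sub_lt_iff] at hwc
              linarith [hwc.1, hwc.2]
            refine ⟨i, xb, ?_, by simp only [sub_self, abs_zero]; exact hδpos⟩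
            exact (piece_oc _).out (hanchor _) hw₁ ⟨hlt.le, hw₁xb.le⟩
        obtain ⟨i, w, hw, hwd⟩ := hfind
        refine ⟨F w, ?_, ?_⟩
        · refine mem_iUnion.2 ⟨i, ?_⟩
          obtain ⟨x₁, hx₁, rfl⟩ := hw
          refine ⟨x₁, hx₁, ?_⟩
          rw [show s + 1 + d*i = (s + d*i) + 1 by ring]
          rw [Function.iterate_succ_apply']
        · have := hδ w (by rwa [Real.dist_eq])
          rw [hxb1, dist_comm] at this
          exact this
    obtain ⟨jb, hjbd, hjb⟩ := cover b (right_mem_Icc.2 hab.le)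
    have main : ∀ k : ℕ, (k % 2 = 0 → b ∈ D (jb + k)) ∧ (k % 2 = 1 → a ∈ D (jb + k)) := by
      intro k
      induction k with
      | zero => exact ⟨fun _ => by simpa using hjb, fun h => by omega⟩
      | succ k ih =>
        constructor
        · intro hek
          have hko : k % 2 = 1 := by omega
          have ha := ih.2 hko
          have := ALTLb _ ha
          rwa [show jb + k + 1 = jb + (k+1) from rfl] at this
        · intro hok
          have hke : k % 2 = 0 := by omega
          have hb := ih.1 hke
          have := ALTRa _ hb
          rwa [show jb + k + 1 = jb + (k+1) from rfl] at this
    -- b is in every class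
    have ballcl : ∀ s : ℕ, b ∈ D s := by
      intro s
      -- choose even k with jb + k ≡ s (mod d) and jb + k ≥ s
      have hmle : jb ≤ d*(jb+1) :=
        le_trans (Nat.le_succ jb) (Nat.le_mul_of_pos_left (jb+1) hd)
      set m₀ := s + d*(jb+1) - jb with hm₀
      have hk : ∃ k, k % 2 = 0 ∧ (jb + k) % d = s % d ∧ s ≤ jb + k := by
        rcases Nat.mod_two_eq_zero_or_one m₀ with he | ho
        · refine ⟨m₀, he, ?_, ?_⟩
          · rw [hm₀]
            generalize hTT : d*(jb+1) = Tg at hmle ⊢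
            have h1 : jb + (s + Tg - jb) = s + Tg := by omega
            rw [h1, ← hTT]
            exact Nat.add_mul_mod_self_left s d (jb+1)
          · rw [hm₀]
            generalize hTT : d*(jb+1) = Tg at hmle ⊢
            omega
        · refine ⟨m₀ + d, by omega, ?_, ?_⟩
          · rw [hm₀]
            generalize hTT : d*(jb+1) = Tg at hmle ⊢
            have h1 : jb + (s + Tg - jb + d) = s + Tg + d := by omega
            rw [h1, ← hTT, show s + d * (jb+1) + d = s + d * (jb+1+1) from by ring]
            exact Nat.add_mul_mod_self_left s d (jb+1+1)
          · rw [hm₀]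
            generalize hTT : d*(jb+1) = Tg at hmle ⊢
            omega
      obtain ⟨k, hke, hkmod, hks⟩ := hk
      have hbmem : b ∈ D (jb + k) := (main k).1 hke
      have hdiv : d ∣ (jb + k - s) :=
        Nat.dvd_of_mod_eq_zero (Nat.sub_mod_eq_zero_of_mod_eq hkmod)
      obtain ⟨m, hm⟩ := hdiv
      have : jb + k = s + d * m := by omega
      rw [this] at hbmem
      exact down s m hbmem
    -- extract a T-element in the residue class
    obtain ⟨i, w, hw, hwb⟩ := approach r b (ballcl r) (b - t) (by linarith)
    have hwt : t < w := by
      rw [abs_sub_lt_iff] at hwb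
      linarith [hwb.1, hwb.2]
    refine ⟨r + d*i, trigger _ _ hw hwt, ?_⟩
    exact Nat.add_mul_mod_self_left r d i
  -- cofinality from the residue lemma
  obtain ⟨n₁, hn₁1, hn₁odd, hn₁T⟩ := Tpar 1
  have hn₁pos : 0 < n₁ := by omega
  choose g hg using fun r => key n₁ hn₁pos (by omega) r
  have Tmulti : ∀ k n, n ∈ T → n + n₁ * k ∈ T := by
    intro k
    induction k with
    | zero => intro n hn; simpa using hn
    | succ k ih =>
      intro n hn
      have := Tadd _ _ (ih n hn) hn₁T
      rwa [show n + n₁ * k + n₁ = n + n₁ * (k+1) from by ring] at this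
  refine ⟨(Finset.range n₁).sup g + 1, ?_⟩
  intro n hn
  set r := n % n₁ with hr
  have hrlt : r < n₁ := Nat.mod_lt n hn₁pos
  have hgr : g r ≤ (Finset.range n₁).sup g := Finset.le_sup (Finset.mem_range.2 hrlt)
  have hgrn : g r ≤ n := by omega
  have hmod : n % n₁ = (g r) % n₁ := by
    rw [(hg r).2, Nat.mod_eq_of_lt hrlt, hr]
  have hdiv : n₁ ∣ (n - g r) :=
    Nat.dvd_of_mod_eq_zero (Nat.sub_mod_eq_zero_of_mod_eq hmod)
  obtain ⟨k, hk⟩ := hdiv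
  have hnn : n = g r + n₁ * k := by omega
  rw [hnn]
  exact Tmulti k (g r) (hg r).1

include hab hF hFI htr in
lemma cofinal_any (c t : ℝ) (hcI : c ∈ Icc a b) (hcF : F c = c) (hta : a < t) (htb : t < b)
    (hne : c ≠ t) :
    ∃ N, ∀ n, N ≤ n → uIcc c t ⊆ F^[n] '' uIcc c t := by
  rcases lt_or_gt_of_ne hne with h | h
  · obtain ⟨N, hN⟩ := cofinal_right hab hF hFI htr c t hcI hcF h htb
    refine ⟨N, fun n hn => ?_⟩
    rw [uIcc_of_le h.le]
    exact hN n hn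
  · -- t < c : conjugate by x ↦ a + b - x
    set G : ℝ → ℝ := fun x => a + b - F (a + b - x) with hG
    have hGc : Continuous G :=
      continuous_const.sub (hF.comp (continuous_const.sub continuous_id))
    have hσI : ∀ x, x ∈ Icc a b → a + b - x ∈ Icc a b := by
      intro x hx; exact ⟨by linarith [hx.2], by linarith [hx.1]⟩
    have hGI : MapsTo G (Icc a b) (Icc a b) := by
      intro x hx
      have h1 := hFI (hσI x hx)
      exact ⟨by simp only [hG]; linarith [h1.2], by simp only [hG]; linarith [h1.1]⟩
    have hGiter : ∀ n x, G^[n] x = a + b - F^[n] (a + b - x) := by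
      intro n
      induction n with
      | zero => intro x; simp
      | succ n ih =>
        intro x
        rw [Function.iterate_succ_apply' G n x, Function.iterate_succ_apply' F n (a+b-x), ih x]
        show a + b - F (a + b - (a + b - F^[n] (a+b-x))) = _
        rw [show a + b - (a + b - F^[n] (a+b-x)) = F^[n] (a+b-x) from by ring]
    have hGtr : Trans2 a b G := by
      intro O W hO hW hOne hWne
      have hσc : Continuous (fun x : ℝ => a + b - x) := continuous_const.sub continuous_id
      have hO'ne : (((fun x : ℝ => a + b - x) ⁻¹' O) ∩ Icc a b).Nonempty := by
        obtain ⟨x, hx1, hx2⟩ := hOne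
        refine ⟨a + b - x, ?_, hσI x hx2⟩
        show a + b - (a + b - x) ∈ O
        rw [show a + b - (a + b - x) = x from by ring]
        exact hx1
      have hW'ne : (((fun x : ℝ => a + b - x) ⁻¹' W) ∩ Icc a b).Nonempty := by
        obtain ⟨x, hx1, hx2⟩ := hWne
        refine ⟨a + b - x, ?_, hσI x hx2⟩
        show a + b - (a + b - x) ∈ W
        rw [show a + b - (a + b - x) = x from by ring]
        exact hx1
      obtain ⟨k, hk, pt, hpt1, hpt2⟩ := htr _ _ (hO.preimage hσc) (hW.preimage hσc) hO'ne hW'ne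
      obtain ⟨y, hy, rfl⟩ := hpt1
      refine ⟨k, hk, a + b - F^[2*k] y, ⟨a + b - y, ⟨hy.1, hσI y hy.2⟩, ?_⟩, hpt2⟩
      rw [hGiter]
      rw [show a + b - (a + b - y) = y from by ring]
    obtain ⟨N, hN⟩ := cofinal_right hab hGc hGI hGtr (a + b - c) (a + b - t)
      (hσI c hcI) (by
        show a + b - F (a + b - (a + b - c)) = a + b - c
        rw [show a + b - (a + b - c) = c from by ring, hcF])
      (by linarith) (by linarith)
    refine ⟨N, fun n hn => ?_⟩
    rw [uIcc_of_ge h.le]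
    intro y hy
    have hy' : a + b - y ∈ Icc (a + b - c) (a + b - t) := ⟨by linarith [hy.2], by linarith [hy.1]⟩
    obtain ⟨w, hw, hww⟩ := hN n hn hy'
    rw [hGiter] at hww
    refine ⟨a + b - w, ⟨by linarith [hw.2], by linarith [hw.1]⟩, ?_⟩
    have : F^[n] (a + b - w) = a + b - (a + b - F^[n] (a+b-w)) := by ring
    rw [this, hww]
    ring
include hab hF hFI htr in
/-- topological mixing -/
lemma mix (O W : Set ℝ) (hO : IsOpen O) (hW : IsOpen W) (hOne : (O ∩ Icc a b).Nonempty)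
    (hWne : (W ∩ Icc a b).Nonempty) :
    ∃ N, ∀ n, N ≤ n → ((F^[n] '' (O ∩ Icc a b)) ∩ W).Nonempty := by
  obtain ⟨u, v, hu, huv, hv, hsub⟩ := exists_subIcc hab O hO hOne
  obtain ⟨n₀, c', ⟨hc'I, hc'F⟩, hc'mem⟩ := star hab hF hFI htr u v hu huv hv
  obtain ⟨x₁, hx₁mem, y₁, hy₁mem, hxy⟩ := piece_nondeg hab hF hFI htr u v hu huv hv n₀
  have hz : ∃ z ∈ F^[n₀] '' Icc u v, z ≠ c' := by
    rcases eq_or_ne x₁ c' with h | h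
    · refine ⟨y₁, hy₁mem, ?_⟩
      rw [← h]
      exact fun he => hxy he.symm
    · exact ⟨x₁, hx₁mem, h⟩
  obtain ⟨z, hzmem, hzne⟩ := hz
  have hzI : z ∈ Icc a b := image_subset_I hFI (Icc_subset_Icc hu hv) n₀ hzmem
  set tm := (c' + z)/2 with htm
  have hbnd : a < tm ∧ tm < b ∧ c' ≠ tm ∧ tm ∈ uIcc c' z := by
    rcases lt_or_gt_of_ne hzne with h | h
    · refine ⟨lt_of_le_of_lt hzI.1 (by rw [htm]; linarith), ?_, ?_, ?_⟩
      · exact lt_of_lt_of_le (by rw [htm]; linarith) hc'I.2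
      · intro he; rw [← he] at htm; rw [htm] at h; linarith [h]
      · rw [uIcc_of_ge h.le]
        exact ⟨by rw [htm]; linarith, by rw [htm]; linarith⟩
    · refine ⟨lt_of_le_of_lt hc'I.1 (by rw [htm]; linarith), ?_, ?_, ?_⟩
      · exact lt_of_lt_of_le (by rw [htm]; linarith) hzI.2
      · intro he; rw [← he] at htm; rw [htm] at h; linarith [h]
      · rw [uIcc_of_le h.le]
        exact ⟨by rw [htm]; linarith, by rw [htm]; linarith⟩
  obtain ⟨hta, htb, hnetm, htmu⟩ := hbnd
  have hKsub : uIcc c' tm ⊆ F^[n₀] '' Icc u v := by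
    have h1 : uIcc c' tm ⊆ uIcc c' z := uIcc_subset_uIcc left_mem_uIcc htmu
    have h2 : uIcc c' z ⊆ F^[n₀] '' Icc u v :=
      (piece_ordConnected hF isPreconnected_Icc n₀).uIcc_subset hc'mem hzmem
    exact h1.trans h2
  obtain ⟨N, hN⟩ := cofinal_any hab hF hFI htr c' tm hc'I hc'F hta htb hnetm
  -- one hit of W from the interior of the anchored interval
  have hlohi : uIcc c' tm = Icc (min c' tm) (max c' tm) := by
    rcases le_total c' tm with h | h
    · rw [uIcc_of_le h, min_eq_left h, max_eq_right h]
    · rw [uIcc_of_ge h, min_eq_right h, max_eq_left h]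
  have hlh : min c' tm < max c' tm := by
    rcases lt_or_gt_of_ne hnetm with h | h
    · rw [min_eq_left h.le, max_eq_right h.le]; exact h
    · rw [min_eq_right h.le, max_eq_left h.le]; exact h
  have hOmidne : (Ioo (min c' tm) (max c' tm) ∩ Icc a b).Nonempty := by
    refine ⟨(min c' tm + max c' tm)/2, ⟨by linarith, by linarith⟩, ?_, ?_⟩
    · have : a ≤ min c' tm := le_min hc'I.1 hta.le
      linarith
    · have : max c' tm ≤ b := max_le hc'I.2 htb.le
      linarith
  obtain ⟨k₃, hk₃, pt, hpt1, hpt2⟩ := htr (Ioo (min c' tm) (max c' tm)) W isOpen_Ioo hW hOmidne hWne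
  have hptK : pt ∈ F^[2*k₃] '' uIcc c' tm := by
    apply image_mono ?_ hpt1
    rw [hlohi]
    exact (inter_subset_left).trans Ioo_subset_Icc_self
  set n₃ := 2*k₃ with hn₃
  refine ⟨n₀ + N + n₃, fun n hn => ?_⟩
  refine ⟨pt, ?_, hpt2⟩
  have h1 : pt ∈ F^[n₃] '' (F^[n - n₀ - n₃] '' (uIcc c' tm)) :=
    image_mono (hN _ (by omega)) hptK
  rw [image_piece, show n₃ + (n - n₀ - n₃) = n - n₀ from by omega] at h1
  have h2 : pt ∈ F^[n - n₀] '' (F^[n₀] '' Icc u v) := image_mono hKsub h1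
  rw [image_piece, show (n - n₀) + n₀ = n from by omega] at h2
  exact image_mono hsub h2

end Main

end RSMD

/-- For a continuous map of `[a,b]` whose second iterate is transitive, and any
infinite set `M` of positive integers, there is a residual set `S` such that the
`M`-orbit of every point of `S` is dense in `[a,b]`. -/
theorem residual_set_of_M_dense_orbits
    (a b : ℝ) (hab : a < b)
    (f : Set.Icc a b → Set.Icc a b) (hf : Continuous f)
    (h2trans : ∀ U V : Set (Set.Icc a b), IsOpen U → IsOpen V →
      U.Nonempty → V.Nonempty →
      ∃ k : ℕ, 1 ≤ k ∧ ((f^[2 * k] '' U) ∩ V).Nonempty)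
    (M : Set ℕ) (hM : M.Infinite) (hMpos : ∀ n ∈ M, 0 < n) :
    ∃ S : Set (Set.Icc a b), S ∈ residual (Set.Icc a b) ∧
      ∀ x ∈ S, Dense ((fun n : ℕ => f^[n] x) '' M) := by
  classical
  set F : ℝ → ℝ := fun x => ↑(f (Set.projIcc a b hab.le x)) with hFdef
  have hFc : Continuous F := continuous_subtype_val.comp (hf.comp continuous_projIcc)
  have hFI : Set.MapsTo F (Set.Icc a b) (Set.Icc a b) :=
    fun x _ => (f (Set.projIcc a b hab.le x)).2
  have hcoe : ∀ (n : ℕ) (x : Set.Icc a b), F^[n] ↑x = ↑(f^[n] x) := by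
    intro n
    induction n with
    | zero => intro x; simp
    | succ n ih =>
      intro x
      rw [Function.iterate_succ_apply', Function.iterate_succ_apply', ih x]
      simp only [hFdef]
      rw [Set.projIcc_val]
  have htr : RSMD.Trans2 a b F := by
    intro O W hO hW hOne hWne
    have hU : IsOpen (Subtype.val ⁻¹' O : Set (Set.Icc a b)) :=
      hO.preimage continuous_subtype_val
    have hV : IsOpen (Subtype.val ⁻¹' W : Set (Set.Icc a b)) :=
      hW.preimage continuous_subtype_val
    have hUne : (Subtype.val ⁻¹' O : Set (Set.Icc a b)).Nonempty := by
      obtain ⟨x, hx1, hx2⟩ := hOne; exact ⟨⟨x, hx2⟩, hx1⟩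
    have hVne : (Subtype.val ⁻¹' W : Set (Set.Icc a b)).Nonempty := by
      obtain ⟨x, hx1, hx2⟩ := hWne; exact ⟨⟨x, hx2⟩, hx1⟩
    obtain ⟨k, hk, y, hy1, hy2⟩ := h2trans _ _ hU hV hUne hVne
    obtain ⟨x, hx, rfl⟩ := hy1
    refine ⟨k, hk, ?_⟩
    exact ⟨↑(f^[2*k] x), ⟨↑x, ⟨hx, x.2⟩, hcoe (2*k) x⟩, hy2⟩
  obtain ⟨B, hBc, hBne, hBb⟩ := TopologicalSpace.exists_countable_basis (Set.Icc a b)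
  haveI : Countable ↥B := hBc.to_subtype
  set S : Set (Set.Icc a b) :=
    ⋂ (V : ↥B), ⋃ (n : ↥M), (f^[(n:ℕ)]) ⁻¹' (V : Set (Set.Icc a b)) with hS
  have hSopen : ∀ V : ↥B,
      IsOpen (⋃ (n : ↥M), (f^[(n:ℕ)]) ⁻¹' (V : Set (Set.Icc a b))) :=
    fun V => isOpen_iUnion (fun n => (hBb.isOpen V.2).preimage (hf.iterate _))
  have hSdense : ∀ V : ↥B,
      Dense (⋃ (n : ↥M), (f^[(n:ℕ)]) ⁻¹' (V : Set (Set.Icc a b))) := by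
    intro V
    rw [dense_iff_inter_open]
    intro U hU hUne
    obtain ⟨OU, hOU, hOUeq⟩ := isOpen_induced_iff.1 hU
    obtain ⟨WV, hWV, hWVeq⟩ := isOpen_induced_iff.1 (hBb.isOpen V.2)
    have hOne' : (OU ∩ Set.Icc a b).Nonempty := by
      obtain ⟨x, hx⟩ := hUne
      rw [← hOUeq] at hx
      exact ⟨↑x, hx, x.2⟩
    have hWne' : (WV ∩ Set.Icc a b).Nonempty := by
      have hVne : (V : Set (Set.Icc a b)).Nonempty := by
        rcases Set.eq_empty_or_nonempty (V : Set (Set.Icc a b)) with h | h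
        · exact absurd (h ▸ V.2) hBne
        · exact h
      obtain ⟨y, hy⟩ := hVne
      rw [← hWVeq] at hy
      exact ⟨↑y, hy, y.2⟩
    obtain ⟨N, hN⟩ := RSMD.mix hab hFc hFI htr OU WV hOU hWV hOne' hWne'
    obtain ⟨n, hnM, hnN⟩ := hM.exists_gt N
    obtain ⟨pt, hpt1, hpt2⟩ := hN n hnN.le
    obtain ⟨x, hx, rfl⟩ := hpt1
    refine ⟨⟨x, hx.2⟩, ?_, ?_⟩
    · rw [← hOUeq]; exact hx.1
    · refine Set.mem_iUnion.2 ⟨⟨n, hnM⟩, ?_⟩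
      show f^[n] ⟨x, hx.2⟩ ∈ (V : Set (Set.Icc a b))
      rw [← hWVeq]
      show ↑(f^[n] ⟨x, hx.2⟩) ∈ WV
      rw [← hcoe n ⟨x, hx.2⟩]
      exact hpt2
  refine ⟨S, ?_, ?_⟩
  · rw [hS]
    exact countable_iInter_mem.2 (fun V => residual_of_dense_open (hSopen V) (hSdense V))
  · intro x hxS
    rw [hBb.dense_iff]
    intro o ho hone
    obtain ⟨n, hn⟩ := Set.mem_iUnion.1 (Set.mem_iInter.1 hxS ⟨o, ho⟩)
    exact ⟨f^[(n:ℕ)] x, hn, ⟨(n:ℕ), n.2, rfl⟩⟩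
end

section
/- Let f : I → I be continuous with a point u ∈ I whose orbit under f² is dense in I. Then for every positive integer k, the orbit {f^{ik}(u) : i ≥ 0} of u under f^k is dense in I. -/
open Set Function

namespace DenseOrbitAux

/-- Bundle of standing hypotheses. -/
structure Hyp (I : Set ℝ) (f : ℝ → ℝ) (u : ℝ) : Prop where
  ordConn : I.OrdConnected
  nontriv : I.Nontrivial
  cont : ContinuousOn f I
  maps : Set.MapsTo f I I
  memI : u ∈ I
  dense2 : ∀ O : Set ℝ, IsOpen O → (O ∩ I).Nonempty → ∃ i : ℕ, f^[2 * i] u ∈ O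

variable {I : Set ℝ} {f : ℝ → ℝ} {u : ℝ}

/-- tail of the orbit of `u` under `f^[p]`, shifted by `r`, starting at index `N`. -/
def Cl (f : ℝ → ℝ) (u : ℝ) (p r N : ℕ) : Set ℝ := (fun i => f^[i * p + r] u) '' Set.Ici N

/-- The "limit class" of residue `r` mod `p`. -/
def EE (f : ℝ → ℝ) (u : ℝ) (p r : ℕ) : Set ℝ := ⋂ N, closure (Cl f u p r N)

lemma mem_orbit_I (h : Hyp I f u) (n : ℕ) : f^[n] u ∈ I := h.maps.iterate n h.memI

lemma isClosed_EE (p r : ℕ) : IsClosed (EE f u p r) :=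
  isClosed_iInter fun _ => isClosed_closure

lemma EE_subset_closure (p r N : ℕ) : EE f u p r ⊆ closure (Cl f u p r N) :=
  Set.iInter_subset _ N

lemma Cl_anti (p r : ℕ) {N M : ℕ} (hNM : N ≤ M) : Cl f u p r M ⊆ Cl f u p r N :=
  Set.image_mono fun _ hi => le_trans hNM hi

lemma mem_Cl {p r N : ℕ} {z : ℝ} : z ∈ Cl f u p r N ↔ ∃ i, N ≤ i ∧ f^[i * p + r] u = z := by
  simp [Cl, Set.mem_image]

lemma Cl_shift (p r N : ℕ) : Cl f u p (r + p) N = Cl f u p r (N + 1) := by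
  ext z
  simp only [mem_Cl]
  constructor
  · rintro ⟨i, hi, rfl⟩
    exact ⟨i + 1, by omega, by ring_nf⟩
  · rintro ⟨i, hi, rfl⟩
    exact ⟨i - 1, by omega, by have : i - 1 + 1 = i := by omega
                               rw [show (i-1) * p + (r + p) = (i - 1 + 1) * p + r by ring, this]⟩

lemma EE_succ_period (p r : ℕ) : EE f u p (r + p) = EE f u p r := by
  unfold EE
  apply le_antisymm
  · intro z hz
    simp only [Set.mem_iInter] at hz ⊢
    intro N
    have := hz N
    rw [Cl_shift] at this
    exact closure_mono (Cl_anti p r (by omega)) this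
  · intro z hz
    simp only [Set.mem_iInter] at hz ⊢
    intro N
    rw [Cl_shift]
    exact hz (N + 1)

lemma EE_add_mul (p r t : ℕ) : EE f u p (r + t * p) = EE f u p r := by
  induction t with
  | zero => simp
  | succ t ih => rw [show r + (t+1) * p = (r + t * p) + p by ring, EE_succ_period, ih]

lemma EE_mod (p r : ℕ) : EE f u p r = EE f u p (r % p) := by
  conv_lhs => rw [show r = r % p + (r / p) * p by
    rw [mul_comm]; exact (Nat.mod_add_div r p).symm]
  rw [EE_add_mul]

lemma EE_congr {p a b : ℕ} (hab : a ≡ b [MOD p]) : EE f u p a = EE f u p b := by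
  rw [EE_mod p a, EE_mod p b, hab]

/-- inside any open set meeting `I` at a point there is a nondegenerate interval in `O ∩ I`. -/
lemma exists_Icc_subset_open (h : Hyp I f u) {y : ℝ} {O : Set ℝ} (hy : y ∈ I) (hO : IsOpen O)
    (hyO : y ∈ O) : ∃ α β : ℝ, α < β ∧ y ∈ Icc α β ∧ Icc α β ⊆ O ∩ I := by
  obtain ⟨ε, hε, hball⟩ := Metric.isOpen_iff.1 hO y hyO
  obtain ⟨a, ha, b, hbm, hab⟩ := h.nontriv
  have hw : ∃ w ∈ I, w ≠ y := by
    by_cases hay : a = y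
    · exact ⟨b, hbm, fun hby => hab (by rw [hay, hby])⟩
    · exact ⟨a, ha, hay⟩
  obtain ⟨w, hwI, hwy⟩ := hw
  rcases lt_or_gt_of_ne hwy with hlt | hgt
  · -- w < y
    refine ⟨max w (y - ε / 2), y, by cases le_or_gt w (y - ε/2) with
      | inl h1 => simpa [max_eq_right h1] using by linarith
      | inr h1 => simpa [max_eq_left h1.le] using hlt, ⟨by
        cases le_total w (y - ε/2) with
        | inl h1 => simp [max_eq_right h1]; linarith
        | inr h1 => simp [max_eq_left h1]; linarith, le_refl y⟩, ?_⟩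
    intro z hz
    have hz1 : y - ε / 2 ≤ z := le_trans (le_max_right _ _) hz.1
    have hz2 : w ≤ z := le_trans (le_max_left _ _) hz.1
    constructor
    · apply hball
      simp [Real.ball_eq_Ioo]
      constructor <;> [linarith; linarith [hz.2]]
    · exact h.ordConn.out hwI hy ⟨hz2, hz.2⟩
  · -- y < w
    refine ⟨y, min w (y + ε / 2), by
      cases le_total w (y + ε/2) with
      | inl h1 => simpa [min_eq_left h1] using hgt
      | inr h1 => simpa [min_eq_right h1] using by linarith, ⟨le_refl y, by
        cases le_total w (y + ε/2) with
        | inl h1 => simp [min_eq_left h1]; linarith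
        | inr h1 => simp [min_eq_right h1]; linarith⟩, ?_⟩
    intro z hz
    have hz1 : z ≤ y + ε / 2 := le_trans hz.2 (min_le_right _ _)
    have hz2 : z ≤ w := le_trans hz.2 (min_le_left _ _)
    constructor
    · apply hball
      simp [Real.ball_eq_Ioo]
      constructor <;> [linarith [hz.1]; linarith]
    · exact h.ordConn.out hy hwI ⟨hz.1, hz2⟩

lemma I_infinite (h : Hyp I f u) : I.Infinite := by
  obtain ⟨a, ha, b, hbm, hab⟩ := h.nontriv
  rcases lt_or_gt_of_ne hab with hlt | hgt
  · exact (Set.Icc_infinite hlt).mono (h.ordConn.out ha hbm)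
  · exact (Set.Icc_infinite hgt).mono (h.ordConn.out hbm ha)

/-- density of the even-orbit tails. -/
lemma dense_tail_even (h : Hyp I f u) (N : ℕ) {O : Set ℝ} (hO : IsOpen O)
    (hOI : (O ∩ I).Nonempty) : ∃ i, N ≤ i ∧ f^[2 * i] u ∈ O := by
  obtain ⟨y, hyO, hyI⟩ := hOI
  obtain ⟨α, β, hαβ, _, hsub⟩ := exists_Icc_subset_open h hyI hO hyO
  set F : Set ℝ := (fun i => f^[2 * i] u) '' (Set.Iio N) with hF
  have hFfin : F.Finite := (Set.finite_Iio N).image _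
  obtain ⟨z, hz, hzF⟩ := ((Set.Icc_infinite hαβ).diff hFfin).nonempty
  have hzOI : z ∈ O ∩ I := hsub hz
  have hopen : IsOpen (O \ F) := hO.sdiff hFfin.isClosed
  obtain ⟨i, hi⟩ := h.dense2 (O \ F) hopen ⟨z, ⟨hzOI.1, hzF⟩, hzOI.2⟩
  refine ⟨i, ?_, hi.1⟩
  by_contra hiN
  exact hi.2 ⟨i, Set.mem_Iio.2 (by omega), rfl⟩

lemma dense_tail_full (h : Hyp I f u) (N : ℕ) {O : Set ℝ} (hO : IsOpen O)
    (hOI : (O ∩ I).Nonempty) : ∃ n, N ≤ n ∧ f^[n] u ∈ O := by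
  obtain ⟨y, hyO, hyI⟩ := hOI
  obtain ⟨α, β, hαβ, _, hsub⟩ := exists_Icc_subset_open h hyI hO hyO
  set F : Set ℝ := (fun n => f^[n] u) '' (Set.Iio N) with hF
  have hFfin : F.Finite := (Set.finite_Iio N).image _
  obtain ⟨z, hz, hzF⟩ := ((Set.Icc_infinite hαβ).diff hFfin).nonempty
  have hzOI : z ∈ O ∩ I := hsub hz
  have hopen : IsOpen (O \ F) := hO.sdiff hFfin.isClosed
  obtain ⟨i, hi⟩ := h.dense2 (O \ F) hopen ⟨z, ⟨hzOI.1, hzF⟩, hzOI.2⟩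
  refine ⟨2 * i, ?_, hi.1⟩
  by_contra hiN
  exact hi.2 ⟨2 * i, Set.mem_Iio.2 (by omega), rfl⟩

lemma orbit_inj (h : Hyp I f u) {a b : ℕ} (hab : f^[a] u = f^[b] u) : a = b := by
  by_contra hne
  -- wlog a < b
  wlog hlt : a < b generalizing a b
  · exact this hab.symm (Ne.symm hne) (by omega)
  -- every orbit point equals an early one
  have key : ∀ n, ∃ m, m < b ∧ f^[n] u = f^[m] u := by
    intro n
    induction n using Nat.strong_induction_on with
    | _ n IH =>
      by_cases hn : n < b
      · exact ⟨n, hn, rfl⟩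
      · push_neg at hn
        have h1 : f^[n] u = f^[n - b + a] u := by
          conv_lhs => rw [show n = (n - b) + b by omega]
          rw [Function.iterate_add_apply, ← hab, ← Function.iterate_add_apply]
        obtain ⟨m, hm, hm2⟩ := IH (n - b + a) (by omega)
        exact ⟨m, hm, h1.trans hm2⟩
  set S : Set ℝ := (fun m => f^[m] u) '' (Set.Iio b) with hS
  have hSfin : S.Finite := (Set.finite_Iio b).image _
  have hsub : I ⊆ S := by
    intro y hy
    have : y ∈ closure S := by
      rw [mem_closure_iff]
      intro o ho hyo
      obtain ⟨i, hi⟩ := h.dense2 o ho ⟨y, hyo, hy⟩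
      obtain ⟨m, hm, hm2⟩ := key (2 * i)
      exact ⟨f^[m] u, by rw [← hm2]; exact hi, ⟨m, hm, rfl⟩⟩
    rwa [hSfin.isClosed.closure_eq] at this
  exact I_infinite h (hSfin.subset hsub)

lemma EE_mapsTo (h : Hyp I f u) {p r : ℕ} {y : ℝ} (hy : y ∈ EE f u p r) (hyI : y ∈ I) :
    f y ∈ EE f u p (r + 1) := by
  simp only [EE, Set.mem_iInter] at hy ⊢
  intro N
  rw [mem_closure_iff]
  intro O hO hfyO
  have hcw : ContinuousWithinAt f I y := h.cont y hyI
  have hpre : f ⁻¹' O ∈ nhdsWithin y I := hcw (hO.mem_nhds hfyO)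
  rw [mem_nhdsWithin] at hpre
  obtain ⟨O', hO', hyO', hsub⟩ := hpre
  have := hy N
  rw [mem_closure_iff] at this
  obtain ⟨w, hwO', hw⟩ := this O' hO' hyO'
  obtain ⟨i, hi, rfl⟩ := mem_Cl.1 hw
  refine ⟨f (f^[i * p + r] u), hsub ⟨hwO', mem_orbit_I h _⟩, ?_⟩
  rw [mem_Cl]
  exact ⟨i, hi, by rw [show i * p + (r + 1) = (i * p + r) + 1 from by ring,
    Function.iterate_succ_apply']⟩

lemma EE_iterate (h : Hyp I f u) {p r : ℕ} {y : ℝ} (hy : y ∈ EE f u p r) (hyI : y ∈ I) (t : ℕ) :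
    f^[t] y ∈ EE f u p (r + t) := by
  induction t with
  | zero => simpa using hy
  | succ t ih =>
    rw [Function.iterate_succ_apply', show r + (t+1) = (r + t) + 1 by ring]
    exact EE_mapsTo h ih (h.maps.iterate t hyI)

lemma orbit_propagate (h : Hyp I f u) {p m s : ℕ} (hx : f^[m] u ∈ EE f u p s) :
    EE f u p m ⊆ EE f u p s := by
  have hsub : Cl f u p m 0 ⊆ EE f u p s := by
    rintro z hz
    obtain ⟨i, _, rfl⟩ := mem_Cl.1 hz
    have : f^[i * p] (f^[m] u) ∈ EE f u p (s + i * p) :=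
      EE_iterate h hx (mem_orbit_I h m) (i * p)
    rw [EE_add_mul] at this
    rwa [← Function.iterate_add_apply] at this
  calc EE f u p m ⊆ closure (Cl f u p m 0) := EE_subset_closure p m 0
    _ ⊆ EE f u p s := (isClosed_EE p s).closure_subset_iff.2 hsub

lemma orbit_shift (h : Hyp I f u) {p n r : ℕ} (hx : f^[n] u ∈ EE f u p r) (j : ℕ) :
    EE f u p (n + j) ⊆ EE f u p (r + j) := by
  have h1 : f^[j] (f^[n] u) ∈ EE f u p (r + j) := EE_iterate h hx (mem_orbit_I h n) j
  rw [← Function.iterate_add_apply] at h1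
  have h2 : f^[n + j] u ∈ EE f u p (r + j) := by rwa [Nat.add_comm n j]
  exact orbit_propagate h h2

lemma mem_closure_finite_union {k : ℕ} {S : ℕ → Set ℝ} {y : ℝ}
    (hy : y ∈ closure (⋃ t ∈ Finset.range k, S t)) : ∃ t, t < k ∧ y ∈ closure (S t) := by
  by_contra hc
  push_neg at hc
  have hyO : y ∈ ⋂ t ∈ Finset.range k, (closure (S t))ᶜ := by
    simp only [Set.mem_iInter, Set.mem_compl_iff]
    intro t ht
    exact hc t (Finset.mem_range.1 ht)
  have hopen : IsOpen (⋂ t ∈ Finset.range k, (closure (S t))ᶜ) :=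
    isOpen_biInter_finset fun t _ => isClosed_closure.isOpen_compl
  rw [mem_closure_iff] at hy
  obtain ⟨w, hw1, hw2⟩ := hy _ hopen hyO
  simp only [Set.mem_iUnion] at hw2
  obtain ⟨t, ht, hwt⟩ := hw2
  simp only [Set.mem_iInter, Set.mem_compl_iff] at hw1
  exact hw1 t ht (subset_closure hwt)

lemma exists_EE_of {p k : ℕ} {g : ℕ → ℕ} {y : ℝ}
    (H : ∀ N, ∃ t, t < k ∧ y ∈ closure (Cl f u p (g t) N)) :
    ∃ t, t < k ∧ y ∈ EE f u p (g t) := by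
  by_contra hc
  push_neg at hc
  have hc' : ∀ t, ∃ N, t < k → y ∉ closure (Cl f u p (g t) N) := by
    intro t
    by_cases ht : t < k
    · have := hc t ht
      simp only [EE, Set.mem_iInter, not_forall] at this
      obtain ⟨N, hN⟩ := this
      exact ⟨N, fun _ => hN⟩
    · exact ⟨0, fun h' => absurd h' ht⟩
  choose Nf hNf using hc'
  set M := (Finset.range k).sup Nf with hM
  obtain ⟨t, ht, hmem⟩ := H M
  refine hNf t ht ?_
  have hle : Nf t ≤ M := Finset.le_sup (Finset.mem_range.2 ht)
  exact closure_mono (Cl_anti p (g t) hle) hmem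

/-- full orbit tails are dense. -/
lemma mem_closure_tail (h : Hyp I f u) {y : ℝ} (hy : y ∈ I) (M : ℕ) :
    y ∈ closure ((fun n => f^[n] u) '' Set.Ici M) := by
  rw [mem_closure_iff]
  intro O hO hyO
  obtain ⟨n, hn, hmem⟩ := dense_tail_full h M hO ⟨y, hyO, hy⟩
  exact ⟨f^[n] u, hmem, ⟨n, hn, rfl⟩⟩

lemma coverEE (h : Hyp I f u) {p : ℕ} (hp : 0 < p) {y : ℝ} (hy : y ∈ I) :
    ∃ r, r < p ∧ y ∈ EE f u p r := by
  apply exists_EE_of (g := id)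
  intro N
  have h1 : y ∈ closure ((fun n => f^[n] u) '' Set.Ici ((N + 1) * p)) := mem_closure_tail h hy _
  have h2 : ((fun n => f^[n] u) '' Set.Ici ((N + 1) * p)) ⊆ ⋃ r ∈ Finset.range p, Cl f u p r N := by
    rintro z ⟨n, hn, rfl⟩
    simp only [Set.mem_Ici] at hn
    simp only [Set.mem_iUnion]
    refine ⟨n % p, Finset.mem_range.2 (Nat.mod_lt _ hp), ?_⟩
    rw [mem_Cl]
    refine ⟨n / p, ?_, by rw [show n / p * p + n % p = n from by rw [mul_comm]; exact Nat.div_add_mod n p]⟩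
    rw [Nat.le_div_iff_mul_le hp]
    calc N * p ≤ (N + 1) * p := by nlinarith
      _ ≤ n := hn
  obtain ⟨t, ht, hmem⟩ := mem_closure_finite_union (closure_mono h2 h1)
  exact ⟨t, ht, hmem⟩

lemma base1 (h : Hyp I f u) : I ⊆ EE f u 1 0 := by
  intro y hy
  simp only [EE, Set.mem_iInter]
  intro N
  have h1 := mem_closure_tail h hy N
  apply closure_mono ?_ h1
  rintro z ⟨n, hn, rfl⟩
  rw [mem_Cl]
  exact ⟨n, hn, by simp⟩

lemma base2 (h : Hyp I f u) : I ⊆ EE f u 2 0 := by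
  intro y hy
  simp only [EE, Set.mem_iInter]
  intro N
  rw [mem_closure_iff]
  intro O hO hyO
  obtain ⟨i, hi, hmem⟩ := dense_tail_even h N hO ⟨y, hyO, hy⟩
  refine ⟨f^[2 * i] u, hmem, ?_⟩
  rw [mem_Cl]
  exact ⟨i, hi, by rw [Nat.add_zero, mul_comm]⟩

lemma caseA_shift (h : Hyp I f u) {p n r : ℕ} (hp : 0 < p) (hx : f^[n] u ∈ EE f u p r)
    (hmod : ¬ n ≡ r [MOD p]) :
    ∃ D, 0 < D ∧ D < p ∧ ∀ s, EE f u p (s + D) ⊆ EE f u p s := by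
  set c := p - r % p with hc
  set D := (n % p + c) % p with hD
  have hrp : r % p < p := Nat.mod_lt _ hp
  have hnp : n % p < p := Nat.mod_lt _ hp
  refine ⟨D, ?_, Nat.mod_lt _ hp, ?_⟩
  · -- 0 < D
    rcases Nat.eq_zero_or_pos D with h0 | h1
    · exfalso
      have hdvd : p ∣ (n % p + c) := Nat.dvd_of_mod_eq_zero h0
      obtain ⟨k, hk⟩ := hdvd
      have hklow : 0 < n % p + c := by omega
      have hkhigh : n % p + c < 2 * p := by omega
      -- so k = 1
      have hk1 : k = 1 := by
        rcases k with _ | _ | k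
        · omega
        · rfl
        · exfalso; nlinarith
      rw [hk1, mul_one] at hk
      have : n % p = r % p := by omega
      exact hmod this
    · exact h1
  · intro s
    set j := s + c with hj
    have key : EE f u p (n + j) ⊆ EE f u p (r + j) := orbit_shift h hx j
    have e1 : EE f u p (s + D) = EE f u p (n + j) := by
      apply EE_congr
      have h1 : s + D ≡ s + (n % p + c) [MOD p] :=
        Nat.ModEq.add_left s (Nat.mod_modEq _ p)
      have h2 : n + j = n + s + c := by omega
      have h3 : s + (n % p + c) ≡ s + (n + c) [MOD p] :=
        Nat.ModEq.add_left s (Nat.ModEq.add_right c (Nat.mod_modEq n p))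
      calc s + D ≡ s + (n % p + c) [MOD p] := h1
        _ ≡ s + (n + c) [MOD p] := h3
        _ = n + j := by omega
    have e2 : EE f u p (r + j) = EE f u p s := by
      apply EE_congr
      have hr : p * (r / p) + r % p = r := Nat.div_add_mod r p
      have h2 : r + j = s + p * (r / p) + p := by omega
      rw [h2, show s + p * (r / p) + p = s + p * (r / p + 1) from by ring]
      have hz : p * (r / p + 1) ≡ 0 [MOD p] := Nat.modEq_zero_iff_dvd.2 (dvd_mul_right _ _)
      calc s + p * (r / p + 1) ≡ s + 0 [MOD p] := Nat.ModEq.add_left s hz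
        _ = s := by omega
    rw [e1, ← e2]
    exact key

lemma shift_mult {f : ℝ → ℝ} {u : ℝ} {p D : ℕ} (hshift : ∀ s, EE f u p (s + D) ⊆ EE f u p s) (t : ℕ) :
    EE f u p (t * D) ⊆ EE f u p 0 := by
  induction t with
  | zero => simp
  | succ t ih =>
    calc EE f u p ((t + 1) * D) = EE f u p (t * D + D) := by ring_nf
      _ ⊆ EE f u p (t * D) := hshift (t * D)
      _ ⊆ EE f u p 0 := ih

lemma EE_sub_of_shift (h : Hyp I f u) {p D : ℕ} (hp : 0 < p) (hD : 0 < D)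
    (hshift : ∀ s, EE f u p (s + D) ⊆ EE f u p s) : EE f u D 0 ⊆ EE f u p 0 := by
  intro z hz
  have H : ∀ N, ∃ t, t < p ∧ z ∈ closure (Cl f u p (t * D) N) := by
    intro N
    have h1 : z ∈ closure (Cl f u D 0 (N * p)) := EE_subset_closure D 0 (N * p) hz
    have h2 : Cl f u D 0 (N * p) ⊆ ⋃ t ∈ Finset.range p, Cl f u p (t * D) N := by
      rintro w hw
      obtain ⟨i, hi, rfl⟩ := mem_Cl.1 hw
      simp only [Set.mem_iUnion]
      refine ⟨i % p, Finset.mem_range.2 (Nat.mod_lt _ hp), ?_⟩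
      rw [mem_Cl]
      refine ⟨(i / p) * D, ?_, ?_⟩
      · have h3 : N ≤ i / p := by
          rw [Nat.le_div_iff_mul_le hp]; omega
        calc N = N * 1 := by ring
          _ ≤ (i / p) * D := Nat.mul_le_mul h3 hD
      · congr 1
        have h4 : p * (i / p) + i % p = i := Nat.div_add_mod i p
        calc i / p * D * p + (i % p * D + 0) = (p * (i / p) + i % p) * D := by ring
          _ = i * D + 0 := by rw [h4]; ring
    obtain ⟨t, ht, hmem⟩ := mem_closure_finite_union (closure_mono h2 h1)
    exact ⟨t, ht, hmem⟩
  obtain ⟨t, _, hmem⟩ := exists_EE_of H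
  exact shift_mult hshift t hmem

/-! ### Case (b): the component machinery -/

/-- The order-connected component of the orbit point `f^[m] u` inside `EE f u p (m % p) ∩ I`. -/
def Jc (I : Set ℝ) (f : ℝ → ℝ) (u : ℝ) (p m : ℕ) : Set ℝ :=
  {y | Set.uIcc (f^[m] u) y ⊆ EE f u p (m % p) ∩ I}

section CaseB

variable {p : ℕ}

lemma jc_subset {m : ℕ} : Jc I f u p m ⊆ EE f u p (m % p) ∩ I :=
  fun _ hy => hy Set.right_mem_uIcc

/-- each orbit point lies in its own class set. -/
lemma class_mem (h : Hyp I f u) (hp3 : 3 ≤ p)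
    (hb : ∀ n r, f^[n] u ∈ EE f u p r → n ≡ r [MOD p]) (m : ℕ) :
    f^[m] u ∈ EE f u p (m % p) := by
  have hp : 0 < p := by omega
  obtain ⟨r, hr, hmem⟩ := coverEE h hp (mem_orbit_I h m)
  have h1 : m % p = r := by
    have h2 := hb m r hmem
    unfold Nat.ModEq at h2
    rw [h2, Nat.mod_eq_of_lt hr]
  rw [h1]
  exact hmem

lemma mem_jc_self (h : Hyp I f u) (hp3 : 3 ≤ p)
    (hb : ∀ n r, f^[n] u ∈ EE f u p r → n ≡ r [MOD p]) (m : ℕ) :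
    f^[m] u ∈ Jc I f u p m := by
  simp only [Jc, Set.mem_setOf_eq, Set.uIcc_self, Set.singleton_subset_iff]
  exact ⟨class_mem h hp3 hb m, mem_orbit_I h m⟩

lemma jc_pair {m : ℕ} {y y' : ℝ} (hy : y ∈ Jc I f u p m) (hy' : y' ∈ Jc I f u p m) :
    Set.uIcc y y' ⊆ EE f u p (m % p) ∩ I := by
  intro v hv
  rcases Set.uIcc_subset_uIcc_union_uIcc (b := f^[m] u) hv with h1 | h2
  · exact hy (by rwa [Set.uIcc_comm] at h1)
  · exact hy' h2

lemma jc_ordConn {m : ℕ} : (Jc I f u p m).OrdConnected := by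
  constructor
  intro y hy y' hy' w hw
  intro v hv
  rcases Set.uIcc_subset_uIcc_union_uIcc (b := y) hv with h1 | h2
  · exact hy h1
  · have hwu : w ∈ Set.uIcc y y' := Set.Icc_subset_uIcc hw
    have : Set.uIcc y w ⊆ Set.uIcc y y' := Set.uIcc_subset_uIcc Set.left_mem_uIcc hwu
    exact jc_pair hy hy' (this h2)

lemma subset_jc {m : ℕ} {S : Set ℝ} (hS : S.OrdConnected)
    (hsub : S ⊆ EE f u p (m % p) ∩ I) (hx : f^[m] u ∈ S) : S ⊆ Jc I f u p m :=
  fun _ hy v hv => hsub (hS.uIcc_subset hx hy hv)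

lemma jc_nondeg (h : Hyp I f u) (hp3 : 3 ≤ p)
    (hb : ∀ n r, f^[n] u ∈ EE f u p r → n ≡ r [MOD p]) (m : ℕ) :
    ∃ α β : ℝ, α < β ∧ f^[m] u ∈ Icc α β ∧ Icc α β ⊆ Jc I f u p m := by
  classical
  have hp : 0 < p := by omega
  set O : Set ℝ := ⋂ s ∈ (Finset.range p).erase (m % p), (EE f u p s)ᶜ with hO
  have hOopen : IsOpen O := isOpen_biInter_finset fun s _ => (isClosed_EE p s).isOpen_compl
  have hxO : f^[m] u ∈ O := by
    simp only [hO, Set.mem_iInter, Set.mem_compl_iff]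
    intro s hs hmem
    obtain ⟨hs1, hs2⟩ := Finset.mem_erase.1 hs
    have h2 := hb m s hmem
    have hms : m % p = s := by
      unfold Nat.ModEq at h2
      rw [h2, Nat.mod_eq_of_lt (Finset.mem_range.1 hs2)]
    exact hs1 hms.symm
  obtain ⟨α, β, hαβ, hxin, hsub⟩ := exists_Icc_subset_open h (mem_orbit_I h m) hOopen hxO
  refine ⟨α, β, hαβ, hxin, ?_⟩
  apply subset_jc Set.ordConnected_Icc ?_ hxin
  intro z hz
  have hzOI := hsub hz
  obtain ⟨r, hr, hmem⟩ := coverEE h hp hzOI.2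
  have hrm : r = m % p := by
    by_contra hne
    have hzc : z ∈ (EE f u p r)ᶜ := by
      have := hzOI.1
      simp only [hO, Set.mem_iInter, Set.mem_compl_iff] at this
      exact this r (Finset.mem_erase.2 ⟨hne, Finset.mem_range.2 hr⟩)
    exact hzc hmem
  exact ⟨hrm ▸ hmem, hzOI.2⟩

lemma jc_closed (h : Hyp I f u) {m : ℕ} :
    closure (Jc I f u p m) ∩ I ⊆ Jc I f u p m := by
  rintro z ⟨hzc, hzI⟩
  intro w hw
  by_cases hwz : w = z
  · subst hwz
    refine ⟨?_, hzI⟩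
    have h1 : closure (Jc I f u p m) ⊆ EE f u p (m % p) :=
      (isClosed_EE p (m % p)).closure_subset_iff.2 (fun y hy => (jc_subset hy).1)
    exact h1 hzc
  · have hd : 0 < |z - w| := abs_pos.2 (sub_ne_zero.2 fun he => hwz he.symm)
    obtain ⟨y, hyJc, hyd⟩ := Metric.mem_closure_iff.1 hzc _ hd
    rw [Real.dist_eq] at hyd
    apply hyJc
    rw [Set.mem_uIcc] at hw ⊢
    have habs := abs_lt.1 hyd
    rcases hw with ⟨h1, h2⟩ | ⟨h1, h2⟩
    · -- x m ≤ w ≤ z, w < z so y > w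
      have hwz' : w < z := lt_of_le_of_ne h2 hwz
      have : w < y := by
        have : |z - w| = z - w := abs_of_pos (by linarith)
        rw [this] at habs; linarith [habs.2]
      exact Or.inl ⟨h1, this.le⟩
    · -- z ≤ w ≤ x m, z < w so y < w
      have hwz' : z < w := lt_of_le_of_ne h1 (fun he => hwz he.symm)
      have : y < w := by
        have : |z - w| = w - z := by rw [abs_sub_comm]; exact abs_of_pos (by linarith)
        rw [this] at habs; linarith [habs.1]
      exact Or.inr ⟨this.le, h2⟩

lemma jc_orbit_eq (h : Hyp I f u) (hp3 : 3 ≤ p)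
    (hb : ∀ n r, f^[n] u ∈ EE f u p r → n ≡ r [MOD p]) {m g : ℕ}
    (hxg : f^[g] u ∈ Jc I f u p m) : Jc I f u p m = Jc I f u p g := by
  have hgE : f^[g] u ∈ EE f u p (m % p) := (jc_subset hxg).1
  have hmod : g ≡ m % p [MOD p] := hb g (m % p) hgE
  have hgm : g % p = m % p := by
    unfold Nat.ModEq at hmod
    rwa [Nat.mod_mod_of_dvd _ (dvd_refl p)] at hmod
  have hxm_g : f^[m] u ∈ Jc I f u p g := by
    intro v hv
    rw [Set.uIcc_comm] at hv
    have := hxg hv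
    rwa [hgm]
  apply Set.Subset.antisymm
  · intro y hy v hv
    rcases Set.uIcc_subset_uIcc_union_uIcc (b := f^[m] u) hv with h1 | h2
    · exact hxm_g h1
    · have := hy h2
      rwa [hgm]
  · intro y hy v hv
    rcases Set.uIcc_subset_uIcc_union_uIcc (b := f^[g] u) hv with h1 | h2
    · exact hxg h1
    · have := hy h2
      rwa [hgm] at this

lemma jc_ne_orbit (h : Hyp I f u) (hp3 : 3 ≤ p)
    (hb : ∀ n r, f^[n] u ∈ EE f u p r → n ≡ r [MOD p]) {m g : ℕ}
    (hne : Jc I f u p m ≠ Jc I f u p g) : f^[g] u ∉ Jc I f u p m :=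
  fun hx => hne (jc_orbit_eq h hp3 hb hx)

lemma jc_eq_of_common (h : Hyp I f u) (hp3 : 3 ≤ p)
    (hb : ∀ n r, f^[n] u ∈ EE f u p r → n ≡ r [MOD p]) {m m' : ℕ} {z : ℝ}
    (hcl : m % p = m' % p) (hz : z ∈ Jc I f u p m) (hz' : z ∈ Jc I f u p m') :
    Jc I f u p m = Jc I f u p m' := by
  have key : ∀ a b : ℕ, a % p = b % p → ∀ w, w ∈ Jc I f u p a → w ∈ Jc I f u p b →
      Jc I f u p a ⊆ Jc I f u p b := by
    intro a b hab w hwa hwb y hy v hv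
    rcases Set.uIcc_subset_uIcc_union_uIcc (b := w) hv with h1 | h2
    · exact jc_pair (mem_jc_self h hp3 hb b) hwb h1
    · have := jc_pair hwa hy h2
      rwa [hab] at this
  exact Set.Subset.antisymm (key m m' hcl z hz hz') (key m' m hcl.symm z hz' hz)

lemma jc_subsingleton (h : Hyp I f u) (hp3 : 3 ≤ p)
    (hb : ∀ n r, f^[n] u ∈ EE f u p r → n ≡ r [MOD p]) {m m' : ℕ}
    (hne : Jc I f u p m ≠ Jc I f u p m') : (Jc I f u p m ∩ Jc I f u p m').Subsingleton := by
  intro z hz z' hz'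
  by_contra hzz
  by_cases hcl : m % p = m' % p
  · exact hne (jc_eq_of_common h hp3 hb hcl hz.1 hz.2)
  · apply hcl
    have hlohi : min z z' < max z z' := min_lt_max.2 hzz
    have hsub1 : Set.uIcc z z' ⊆ EE f u p (m % p) ∩ I := jc_pair hz.1 hz'.1
    have hsub2 : Set.uIcc z z' ⊆ EE f u p (m' % p) ∩ I := jc_pair hz.2 hz'.2
    have hIoo : Ioo (min z z') (max z z') ⊆ Set.uIcc z z' := by
      intro v hv
      rw [Set.mem_uIcc]
      rcases le_total z z' with hle | hle
      · left
        constructor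
        · calc z = min z z' := (min_eq_left hle).symm
            _ ≤ v := hv.1.le
        · calc v ≤ max z z' := hv.2.le
            _ = z' := max_eq_right hle
      · right
        constructor
        · calc z' = min z z' := (min_eq_right hle).symm
            _ ≤ v := hv.1.le
        · calc v ≤ max z z' := hv.2.le
            _ = z := max_eq_left hle
    have hIooI : (Ioo (min z z') (max z z') ∩ I).Nonempty := by
      refine ⟨(min z z' + max z z') / 2, ⟨by linarith, by linarith⟩, ?_⟩
      exact (hsub1 (hIoo ⟨by linarith, by linarith⟩)).2
    obtain ⟨g, _, hg⟩ := dense_tail_full h 0 isOpen_Ioo hIooI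
    have hg1 : f^[g] u ∈ EE f u p (m % p) := (hsub1 (hIoo hg)).1
    have hg2 : f^[g] u ∈ EE f u p (m' % p) := (hsub2 (hIoo hg)).1
    have e1 := hb g (m % p) hg1
    have e2 := hb g (m' % p) hg2
    unfold Nat.ModEq at e1 e2
    rw [Nat.mod_mod_of_dvd _ (dvd_refl p)] at e1 e2
    rw [← e1, ← e2]

lemma jc_image (h : Hyp I f u) (hp3 : 3 ≤ p)
    (hb : ∀ n r, f^[n] u ∈ EE f u p r → n ≡ r [MOD p]) {m : ℕ} :
    f '' (Jc I f u p m) ⊆ Jc I f u p (m + 1) := by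
  have hsub1 : f '' (Jc I f u p m) ⊆ EE f u p ((m + 1) % p) ∩ I := by
    rintro w ⟨y, hy, rfl⟩
    have hyE := jc_subset hy
    have h1 : f y ∈ EE f u p (m % p + 1) := EE_mapsTo h hyE.1 hyE.2
    have h2 : EE f u p (m % p + 1) = EE f u p ((m + 1) % p) := by
      have e1 : EE f u p (m % p + 1) = EE f u p (m + 1) :=
        EE_congr (Nat.ModEq.add_right 1 (Nat.mod_modEq m p))
      rw [e1, EE_mod]
    exact ⟨h2 ▸ h1, h.maps hyE.2⟩
  have hpc : IsPreconnected (f '' Jc I f u p m) :=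
    (jc_ordConn (p := p) (m := m)).isPreconnected.image f
      (h.cont.mono (fun y hy => (jc_subset hy).2))
  apply subset_jc hpc.ordConnected hsub1
  exact ⟨f^[m] u, mem_jc_self h hp3 hb m, (Function.iterate_succ_apply' f m u).symm⟩

lemma jc_iterate (h : Hyp I f u) (hp3 : 3 ≤ p)
    (hb : ∀ n r, f^[n] u ∈ EE f u p r → n ≡ r [MOD p]) {m : ℕ} {z : ℝ}
    (hz : z ∈ Jc I f u p m) (s : ℕ) : f^[s] z ∈ Jc I f u p (m + s) := by
  induction s with
  | zero => simpa using hz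
  | succ s ih =>
    rw [Function.iterate_succ_apply', show m + (s + 1) = (m + s) + 1 from by ring]
    exact jc_image h hp3 hb ⟨_, ih, rfl⟩

lemma jc_det (h : Hyp I f u) (hp3 : 3 ≤ p)
    (hb : ∀ n r, f^[n] u ∈ EE f u p r → n ≡ r [MOD p]) {m m' : ℕ}
    (heq : Jc I f u p m = Jc I f u p m') : Jc I f u p (m + 1) = Jc I f u p (m' + 1) := by
  have h1 : f^[m' + 1] u ∈ Jc I f u p (m + 1) := by
    have h2 : f^[m'] u ∈ Jc I f u p m := heq ▸ mem_jc_self h hp3 hb m'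
    have h3 : f (f^[m'] u) ∈ Jc I f u p (m + 1) := jc_image h hp3 hb ⟨_, h2, rfl⟩
    have h4 : f^[m' + 1] u = f (f^[m'] u) := Function.iterate_succ_apply' f m' u
    rw [h4]; exact h3
  exact jc_orbit_eq h hp3 hb h1

lemma jc_det_iter (h : Hyp I f u) (hp3 : 3 ≤ p)
    (hb : ∀ n r, f^[n] u ∈ EE f u p r → n ≡ r [MOD p]) {m m' : ℕ}
    (heq : Jc I f u p m = Jc I f u p m') (k : ℕ) :
    Jc I f u p (m + k) = Jc I f u p (m' + k) := by
  induction k with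
  | zero => simpa using heq
  | succ k ih =>
    rw [show m + (k + 1) = (m + k) + 1 from rfl, show m' + (k + 1) = (m' + k) + 1 from rfl]
    exact jc_det h hp3 hb ih

lemma jc_class_eq (h : Hyp I f u) (hp3 : 3 ≤ p)
    (hb : ∀ n r, f^[n] u ∈ EE f u p r → n ≡ r [MOD p]) {m m' : ℕ}
    (heq : Jc I f u p m = Jc I f u p m') : m % p = m' % p := by
  have h1 : f^[m'] u ∈ Jc I f u p m := heq ▸ mem_jc_self h hp3 hb m'
  have h2 : f^[m'] u ∈ EE f u p (m % p) := (jc_subset h1).1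
  have h3 := hb m' (m % p) h2
  unfold Nat.ModEq at h3
  rw [Nat.mod_mod_of_dvd _ (dvd_refl p)] at h3
  exact h3.symm

/-- linear ordering relation between components. -/
def Ordd (C C' : Set ℝ) : Prop := ∀ a ∈ C, a ∉ C' → ∀ b ∈ C', b ∉ C → a < b

lemma ordd_of_pts (h : Hyp I f u) (hp3 : 3 ≤ p)
    (hb : ∀ n r, f^[n] u ∈ EE f u p r → n ≡ r [MOD p]) {m m' : ℕ}
    (hord : f^[m] u < f^[m'] u) (hxm : f^[m] u ∉ Jc I f u p m') :
    Ordd (Jc I f u p m) (Jc I f u p m') := by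
  intro a ha ha' b hbm hbm'
  by_contra hab
  push_neg at hab
  have hba : b < a := lt_of_le_of_ne hab (fun he => hbm' (he ▸ ha))
  by_cases hcase : f^[m] u ≤ b
  · have hmem : b ∈ Set.uIcc (f^[m] u) a := by
      rw [Set.mem_uIcc]; left; exact ⟨hcase, hba.le⟩
    exact hbm' ((jc_ordConn (p := p) (m := m)).uIcc_subset (mem_jc_self h hp3 hb m) ha hmem)
  · push_neg at hcase
    have hmem : f^[m] u ∈ Set.uIcc b (f^[m'] u) := by
      rw [Set.mem_uIcc]; left; exact ⟨hcase.le, hord.le⟩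
    exact hxm ((jc_ordConn (p := p) (m := m')).uIcc_subset hbm (mem_jc_self h hp3 hb m') hmem)

lemma jc_total (h : Hyp I f u) (hp3 : 3 ≤ p)
    (hb : ∀ n r, f^[n] u ∈ EE f u p r → n ≡ r [MOD p]) {m m' : ℕ}
    (hne : Jc I f u p m ≠ Jc I f u p m') :
    Ordd (Jc I f u p m) (Jc I f u p m') ∨ Ordd (Jc I f u p m') (Jc I f u p m) := by
  have hxm' : f^[m'] u ∉ Jc I f u p m := jc_ne_orbit h hp3 hb hne
  have hxm : f^[m] u ∉ Jc I f u p m' := jc_ne_orbit h hp3 hb (Ne.symm hne)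
  have hne2 : f^[m] u ≠ f^[m'] u := fun he => hxm' (he ▸ mem_jc_self h hp3 hb m)
  rcases lt_or_gt_of_ne hne2 with hlt | hgt
  · exact Or.inl (ordd_of_pts h hp3 hb hlt hxm)
  · exact Or.inr (ordd_of_pts h hp3 hb hgt hxm')

lemma ordd_asymm (h : Hyp I f u) (hp3 : 3 ≤ p)
    (hb : ∀ n r, f^[n] u ∈ EE f u p r → n ≡ r [MOD p]) {m m' : ℕ}
    (hne : Jc I f u p m ≠ Jc I f u p m')
    (h1 : Ordd (Jc I f u p m) (Jc I f u p m'))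
    (h2 : Ordd (Jc I f u p m') (Jc I f u p m)) : False := by
  have hxm' : f^[m'] u ∉ Jc I f u p m := jc_ne_orbit h hp3 hb hne
  have hxm : f^[m] u ∉ Jc I f u p m' := jc_ne_orbit h hp3 hb (Ne.symm hne)
  have ha := h1 _ (mem_jc_self h hp3 hb m) hxm _ (mem_jc_self h hp3 hb m') hxm'
  have hc := h2 _ (mem_jc_self h hp3 hb m') hxm' _ (mem_jc_self h hp3 hb m) hxm
  linarith

end CaseB

section CaseB2

variable {p : ℕ}

lemma jc_share (h : Hyp I f u) (hp3 : 3 ≤ p)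
    (hb : ∀ n r, f^[n] u ∈ EE f u p r → n ≡ r [MOD p]) {μ ν : ℕ}
    (hne : Jc I f u p μ ≠ Jc I f u p ν) (hord : Ordd (Jc I f u p μ) (Jc I f u p ν))
    (hgap : ∀ g : ℕ, Jc I f u p g ≠ Jc I f u p μ → Jc I f u p g ≠ Jc I f u p ν →
      Ordd (Jc I f u p μ) (Jc I f u p g) → Ordd (Jc I f u p g) (Jc I f u p ν) → False) :
    (Jc I f u p μ ∩ Jc I f u p ν).Nonempty := by
  by_contra hdisj
  rw [Set.not_nonempty_iff_eq_empty] at hdisj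
  have hdis : ∀ w, w ∈ Jc I f u p μ → w ∉ Jc I f u p ν := fun w h1 h2 =>
    Set.notMem_empty w (hdisj ▸ (⟨h1, h2⟩ : w ∈ Jc I f u p μ ∩ Jc I f u p ν))
  have hcμ : f^[μ] u ∈ Jc I f u p μ := mem_jc_self h hp3 hb μ
  have hc'ν : f^[ν] u ∈ Jc I f u p ν := mem_jc_self h hp3 hb ν
  have hcν : f^[μ] u ∉ Jc I f u p ν := hdis _ hcμ
  have hc'μ : f^[ν] u ∉ Jc I f u p μ := fun hx => hdis _ hx hc'ν
  have hcc' : f^[μ] u < f^[ν] u := hord _ hcμ hcν _ hc'ν hc'μ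
  set c := f^[μ] u with hc
  set c' := f^[ν] u with hc'
  -- supremum of the μ-component inside [c, c']
  set S1 := Jc I f u p μ ∩ Icc c c' with hS1
  have hS1ne : S1.Nonempty := ⟨c, hcμ, le_refl c, hcc'.le⟩
  have hS1bdd : BddAbove S1 := ⟨c', fun w hw => hw.2.2⟩
  set z := sSup S1 with hz
  have hzmem : z ∈ closure S1 := (isLUB_csSup hS1ne hS1bdd).mem_closure hS1ne
  have hzIcc : z ∈ Icc c c' :=
    ⟨le_csSup hS1bdd ⟨hcμ, le_refl c, hcc'.le⟩, csSup_le hS1ne fun w hw => hw.2.2⟩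
  have hzI : z ∈ I := h.ordConn.out (mem_orbit_I h μ) (mem_orbit_I h ν) hzIcc
  have hzμ : z ∈ Jc I f u p μ :=
    jc_closed h ⟨closure_mono Set.inter_subset_left hzmem, hzI⟩
  have hzub : ∀ w ∈ S1, w ≤ z := fun w hw => le_csSup hS1bdd hw
  have hzν : z ∉ Jc I f u p ν := hdis z hzμ
  have hzc' : z < c' := lt_of_le_of_ne hzIcc.2 fun he => hzν (he ▸ hc'ν)
  -- infimum of the ν-component inside [z, c']
  set S2 := Jc I f u p ν ∩ Icc z c' with hS2
  have hS2ne : S2.Nonempty := ⟨c', hc'ν, hzc'.le, le_refl c'⟩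
  have hS2bdd : BddBelow S2 := ⟨z, fun w hw => hw.2.1⟩
  set z' := sInf S2 with hz'
  have hz'mem : z' ∈ closure S2 := (isGLB_csInf hS2ne hS2bdd).mem_closure hS2ne
  have hz'Icc : z' ∈ Icc z c' :=
    ⟨le_csInf hS2ne fun w hw => hw.2.1, csInf_le hS2bdd ⟨hc'ν, hzc'.le, le_refl c'⟩⟩
  have hz'I : z' ∈ I := h.ordConn.out hzI (mem_orbit_I h ν) hz'Icc
  have hz'ν : z' ∈ Jc I f u p ν :=
    jc_closed h ⟨closure_mono Set.inter_subset_left hz'mem, hz'I⟩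
  have hz'lb : ∀ w ∈ S2, z' ≤ w := fun w hw => csInf_le hS2bdd hw
  have hzz' : z < z' := lt_of_le_of_ne hz'Icc.1 fun he => hzν (he ▸ hz'ν)
  -- orbit point strictly between
  have hIooI : Ioo z z' ⊆ I := fun w hw => h.ordConn.out hzI hz'I ⟨hw.1.le, hw.2.le⟩
  have hmid : (z + z') / 2 ∈ Ioo z z' := ⟨by linarith, by linarith⟩
  obtain ⟨g, _, hg⟩ := dense_tail_full h 0 isOpen_Ioo ⟨(z + z') / 2, hmid, hIooI hmid⟩
  have hgz : z < f^[g] u := hg.1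
  have hgz' : f^[g] u < z' := hg.2
  have hgIcc : f^[g] u ∈ Icc c c' := ⟨hzIcc.1.trans hgz.le, hgz'.le.trans hz'Icc.2⟩
  have hgμ : f^[g] u ∉ Jc I f u p μ := fun hx => absurd (hzub _ ⟨hx, hgIcc⟩) (not_le.2 hgz)
  have hgν : f^[g] u ∉ Jc I f u p ν := fun hx =>
    absurd (hz'lb _ ⟨hx, hgz.le, hgIcc.2⟩) (not_le.2 hgz')
  have hgne : Jc I f u p g ≠ Jc I f u p μ := fun he => hgμ (he ▸ mem_jc_self h hp3 hb g)
  have hgne' : Jc I f u p g ≠ Jc I f u p ν := fun he => hgν (he ▸ mem_jc_self h hp3 hb g)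
  have hcg : c ∉ Jc I f u p g := fun hx =>
    hgne (jc_orbit_eq h hp3 hb (show f^[μ] u ∈ Jc I f u p g from hx))
  have hc'g : c' ∉ Jc I f u p g := fun hx =>
    hgne' (jc_orbit_eq h hp3 hb (show f^[ν] u ∈ Jc I f u p g from hx))
  have hOg : Ordd (Jc I f u p μ) (Jc I f u p g) := by
    rcases jc_total h hp3 hb (Ne.symm hgne) with h1 | h2
    · exact h1
    · exfalso
      have := h2 _ (mem_jc_self h hp3 hb g) hgμ c hcμ hcg
      have hcz : c ≤ z := hzIcc.1
      linarith
  have hOg' : Ordd (Jc I f u p g) (Jc I f u p ν) := by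
    rcases jc_total h hp3 hb hgne' with h1 | h2
    · exact h1
    · exfalso
      have := h2 c' hc'ν hc'g _ (mem_jc_self h hp3 hb g) hgν
      have : c' < f^[g] u := this
      have hzc2 : z' ≤ c' := hz'Icc.2
      linarith
  exact hgap g hgne hgne' hOg hOg'

lemma jc_noTwo (h : Hyp I f u) (hp3 : 3 ≤ p)
    (hb : ∀ n r, f^[n] u ∈ EE f u p r → n ≡ r [MOD p]) {m₁ : ℕ}
    (hmin : ∀ m : ℕ, Jc I f u p m ≠ Jc I f u p m₁ → Ordd (Jc I f u p m₁) (Jc I f u p m))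
    {a b : ℕ} (ha : Jc I f u p a ≠ Jc I f u p m₁) (hbn : Jc I f u p b ≠ Jc I f u p m₁)
    (hab : Jc I f u p a ≠ Jc I f u p b) {w w' : ℝ}
    (hw : w ∈ Jc I f u p m₁ ∩ Jc I f u p a) (hw' : w' ∈ Jc I f u p m₁ ∩ Jc I f u p b) :
    False := by
  -- auxiliary: the shared points coincide
  have key : ∀ (a' b' : ℕ) (w₀ w₀' : ℝ), Jc I f u p a' ≠ Jc I f u p m₁ →
      Jc I f u p a' ≠ Jc I f u p b' →
      w₀ ∈ Jc I f u p m₁ ∩ Jc I f u p a' → w₀' ∈ Jc I f u p m₁ ∩ Jc I f u p b' →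
      w₀ < w₀' → False := by
    intro a' b' w₀ w₀' ha' hab' hw₀ hw₀' hlt
    have hOa' : Ordd (Jc I f u p m₁) (Jc I f u p a') := hmin a' ha'
    have hsub := jc_subsingleton h hp3 hb (Ne.symm ha')
    have hw₀'a : w₀' ∉ Jc I f u p a' := by
      intro hx
      exact (ne_of_lt hlt) (hsub ⟨hw₀.1, hw₀.2⟩ ⟨hw₀'.1, hx⟩)
    have hxa' : f^[a'] u ∉ Jc I f u p m₁ := jc_ne_orbit h hp3 hb (Ne.symm ha')
    have h1 : w₀' < f^[a'] u :=
      hOa' w₀' hw₀'.1 hw₀'a _ (mem_jc_self h hp3 hb a') hxa'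
    have hmem : w₀' ∈ Set.uIcc w₀ (f^[a'] u) := by
      rw [Set.mem_uIcc]; left; exact ⟨hlt.le, h1.le⟩
    exact hw₀'a ((jc_ordConn (p := p) (m := a')).uIcc_subset hw₀.2
      (mem_jc_self h hp3 hb a') hmem)
  have hww : w = w' := by
    by_contra hne
    rcases lt_or_gt_of_ne hne with hlt | hgt
    · exact key a b w w' ha hab hw hw' hlt
    · exact key b a w' w hbn (Ne.symm hab) hw' hw hgt
  subst hww
  -- now `w` is a common point of all three components
  have hxa : f^[a] u ∉ Jc I f u p m₁ := jc_ne_orbit h hp3 hb (Ne.symm ha)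
  have hxb : f^[b] u ∉ Jc I f u p m₁ := jc_ne_orbit h hp3 hb (Ne.symm hbn)
  have hxm₁a : f^[m₁] u ∉ Jc I f u p a := jc_ne_orbit h hp3 hb ha
  have hxm₁b : f^[m₁] u ∉ Jc I f u p b := jc_ne_orbit h hp3 hb hbn
  have hda : w < f^[a] u := by
    have h2 : f^[m₁] u < f^[a] u :=
      hmin a ha _ (mem_jc_self h hp3 hb m₁) hxm₁a _ (mem_jc_self h hp3 hb a) hxa
    by_contra hle
    push_neg at hle
    have hne2 : f^[a] u ≠ w := fun he => hxa (he ▸ hw.1)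
    have hlt2 : f^[a] u < w := lt_of_le_of_ne hle hne2
    have hmem : f^[a] u ∈ Set.uIcc (f^[m₁] u) w := by
      rw [Set.mem_uIcc]; left; exact ⟨h2.le, hlt2.le⟩
    exact hxa ((jc_ordConn (p := p) (m := m₁)).uIcc_subset
      (mem_jc_self h hp3 hb m₁) hw.1 hmem)
  have hdb : w < f^[b] u := by
    have h2 : f^[m₁] u < f^[b] u :=
      hmin b hbn _ (mem_jc_self h hp3 hb m₁) hxm₁b _ (mem_jc_self h hp3 hb b) hxb
    by_contra hle
    push_neg at hle
    have hne2 : f^[b] u ≠ w := fun he => hxb (he ▸ hw'.1)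
    have hlt2 : f^[b] u < w := lt_of_le_of_ne hle hne2
    have hmem : f^[b] u ∈ Set.uIcc (f^[m₁] u) w := by
      rw [Set.mem_uIcc]; left; exact ⟨h2.le, hlt2.le⟩
    exact hxb ((jc_ordConn (p := p) (m := m₁)).uIcc_subset
      (mem_jc_self h hp3 hb m₁) hw'.1 hmem)
  set t := (w + min (f^[a] u) (f^[b] u)) / 2 with htdef
  have hwmin : w < min (f^[a] u) (f^[b] u) := lt_min hda hdb
  have ht1 : w < t := by rw [htdef]; linarith
  have ht2 : t < f^[a] u := by
    have : t < min (f^[a] u) (f^[b] u) := by rw [htdef]; linarith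
    exact this.trans_le (min_le_left _ _)
  have ht3 : t < f^[b] u := by
    have : t < min (f^[a] u) (f^[b] u) := by rw [htdef]; linarith
    exact this.trans_le (min_le_right _ _)
  have hta : t ∈ Jc I f u p a := (jc_ordConn (p := p) (m := a)).uIcc_subset hw.2
    (mem_jc_self h hp3 hb a) (by rw [Set.mem_uIcc]; left; exact ⟨ht1.le, ht2.le⟩)
  have htb : t ∈ Jc I f u p b := (jc_ordConn (p := p) (m := b)).uIcc_subset hw'.2
    (mem_jc_self h hp3 hb b) (by rw [Set.mem_uIcc]; left; exact ⟨ht1.le, ht3.le⟩)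
  have hsub := jc_subsingleton h hp3 hb hab
  exact (ne_of_lt ht1) (hsub ⟨hw.2, hw'.2⟩ ⟨hta, htb⟩)

end CaseB2

lemma caseB_false (h : Hyp I f u) {p : ℕ} (hp3 : 3 ≤ p)
    (hb : ∀ n r, f^[n] u ∈ EE f u p r → n ≡ r [MOD p]) : False := by
  classical
  -- a return time for the component of the initial point
  obtain ⟨α, β, hαβ, hx0, hsub0⟩ := jc_nondeg h hp3 hb 0
  have hooI : Ioo α β ⊆ I := fun w hw => (jc_subset (hsub0 (Set.Ioo_subset_Icc_self hw))).2
  have hmid : (α + β) / 2 ∈ Ioo α β := ⟨by linarith, by linarith⟩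
  obtain ⟨n₀, hn₀1, hgmem⟩ := dense_tail_full h 1 isOpen_Ioo ⟨(α + β) / 2, hmid, hooI hmid⟩
  have hret : Jc I f u p 0 = Jc I f u p n₀ :=
    jc_orbit_eq h hp3 hb (hsub0 (Set.Ioo_subset_Icc_self hgmem))
  have hn₀pos : 0 < n₀ := by omega
  -- periodicity of components
  have hper : ∀ m, Jc I f u p (m + n₀) = Jc I f u p m := by
    intro m
    have h1 := jc_det_iter h hp3 hb hret.symm m
    -- h1 : Jc (n₀ + m) = Jc (0 + m)
    rw [Nat.add_comm n₀ m, Nat.zero_add] at h1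
    exact h1
  have hper' : ∀ m t, Jc I f u p (m + t * n₀) = Jc I f u p m := by
    intro m t
    induction t with
    | zero => simp
    | succ t ih =>
      rw [show m + (t + 1) * n₀ = (m + t * n₀) + n₀ from by ring, hper, ih]
  have hmodrep : ∀ m, Jc I f u p m = Jc I f u p (m % n₀) := by
    intro m
    conv_lhs => rw [show m = m % n₀ + (m / n₀) * n₀ from by
      rw [mul_comm]; exact (Nat.mod_add_div m n₀).symm]
    rw [hper']
  -- cancellation of the shift
  have hcancel : ∀ a b s : ℕ, Jc I f u p (a + s) = Jc I f u p (b + s) →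
      Jc I f u p a = Jc I f u p b := by
    intro a b s heq
    have h1 := jc_det_iter h hp3 hb heq (s * n₀ - s)
    have hsle : s ≤ s * n₀ := Nat.le_mul_of_pos_right s hn₀pos
    have harith : ∀ c : ℕ, c + s + (s * n₀ - s) = c + s * n₀ := fun c => by omega
    rw [harith, harith] at h1
    rwa [hper' a s, hper' b s] at h1
  -- the minimal component
  obtain ⟨m₁, hm₁mem, hm₁min⟩ := Finset.exists_min_image (Finset.range n₀)
    (fun m => f^[m] u) ⟨0, Finset.mem_range.2 hn₀pos⟩
  have hminOrd : ∀ m : ℕ, Jc I f u p m ≠ Jc I f u p m₁ →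
      Ordd (Jc I f u p m₁) (Jc I f u p m) := by
    intro m hne
    have hrep : Jc I f u p (m % n₀) = Jc I f u p m := (hmodrep m).symm
    rcases jc_total h hp3 hb (Ne.symm hne) with h1 | h2
    · exact h1
    · exfalso
      have hxm : f^[m % n₀] u ∈ Jc I f u p m := hrep ▸ mem_jc_self h hp3 hb (m % n₀)
      have hxmn : f^[m % n₀] u ∉ Jc I f u p m₁ := by
        intro hx
        have he1 : Jc I f u p m₁ = Jc I f u p (m % n₀) := jc_orbit_eq h hp3 hb hx
        exact hne ((he1.trans hrep).symm)
      have hxm₁ : f^[m₁] u ∉ Jc I f u p m := jc_ne_orbit h hp3 hb hne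
      have hlt := h2 _ hxm hxmn _ (mem_jc_self h hp3 hb m₁) hxm₁
      have hge := hm₁min (m % n₀) (Finset.mem_range.2 (Nat.mod_lt _ hn₀pos))
      exact absurd hlt (not_lt.2 hge)
  -- class-distinctness facts
  have hclassne : ∀ i j : ℕ, i < p → j < p → i ≠ j →
      Jc I f u p (m₁ + i) ≠ Jc I f u p (m₁ + j) := by
    intro i j hi hj hij heq
    have := jc_class_eq h hp3 hb heq
    have h1 : (m₁ + i) ≡ (m₁ + j) [MOD p] := this
    have h2 : i ≡ j [MOD p] := Nat.ModEq.add_left_cancel' m₁ h1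
    unfold Nat.ModEq at h2
    rw [Nat.mod_eq_of_lt hi, Nat.mod_eq_of_lt hj] at h2
    exact hij h2
  have hne01 : Jc I f u p (m₁ + 1) ≠ Jc I f u p m₁ := by
    have := hclassne 1 0 (by omega) (by omega) (by omega)
    simpa using this
  have hne02 : Jc I f u p (m₁ + 2) ≠ Jc I f u p m₁ := by
    have := hclassne 2 0 (by omega) (by omega) (by omega)
    simpa using this
  have hne12 : Jc I f u p (m₁ + 1) ≠ Jc I f u p (m₁ + 2) :=
    hclassne 1 2 (by omega) (by omega) (by omega)
  -- second minimal component
  have hA₂ne : ((Finset.range n₀).filter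
      (fun m => Jc I f u p m ≠ Jc I f u p m₁)).Nonempty := by
    refine ⟨(m₁ + 1) % n₀, Finset.mem_filter.2 ⟨Finset.mem_range.2 (Nat.mod_lt _ hn₀pos), ?_⟩⟩
    rw [← hmodrep]
    exact hne01
  obtain ⟨m₂, hm₂mem, hm₂min⟩ := Finset.exists_min_image _ (fun m => f^[m] u) hA₂ne
  have hm₂ne : Jc I f u p m₂ ≠ Jc I f u p m₁ := (Finset.mem_filter.1 hm₂mem).2
  have hm₂lt : m₂ < n₀ := Finset.mem_range.1 (Finset.mem_filter.1 hm₂mem).1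
  have hmin₂ : ∀ m : ℕ, Jc I f u p m ≠ Jc I f u p m₁ → Jc I f u p m ≠ Jc I f u p m₂ →
      Ordd (Jc I f u p m₂) (Jc I f u p m) := by
    intro m hne1 hne2
    have hrep : Jc I f u p (m % n₀) = Jc I f u p m := (hmodrep m).symm
    rcases jc_total h hp3 hb (Ne.symm hne2) with h1 | h2
    · exact h1
    · exfalso
      have hxm : f^[m % n₀] u ∈ Jc I f u p m := hrep ▸ mem_jc_self h hp3 hb (m % n₀)
      have hxmn : f^[m % n₀] u ∉ Jc I f u p m₂ := by
        intro hx
        have he1 : Jc I f u p m₂ = Jc I f u p (m % n₀) := jc_orbit_eq h hp3 hb hx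
        exact hne2 ((he1.trans hrep).symm)
      have hxm₂ : f^[m₂] u ∉ Jc I f u p m := jc_ne_orbit h hp3 hb hne2
      have hlt := h2 _ hxm hxmn _ (mem_jc_self h hp3 hb m₂) hxm₂
      have hmem2 : m % n₀ ∈ (Finset.range n₀).filter
          (fun m => Jc I f u p m ≠ Jc I f u p m₁) := by
        refine Finset.mem_filter.2 ⟨Finset.mem_range.2 (Nat.mod_lt _ hn₀pos), ?_⟩
        rw [hrep]; exact hne1
      have hge := hm₂min (m % n₀) hmem2
      exact absurd hlt (not_lt.2 hge)
  -- third minimal component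
  have hA₃ne : ((Finset.range n₀).filter
      (fun m => Jc I f u p m ≠ Jc I f u p m₁ ∧ Jc I f u p m ≠ Jc I f u p m₂)).Nonempty := by
    by_cases hc : Jc I f u p ((m₁ + 1) % n₀) = Jc I f u p m₂
    · refine ⟨(m₁ + 2) % n₀, Finset.mem_filter.2 ⟨Finset.mem_range.2 (Nat.mod_lt _ hn₀pos),
        ?_, ?_⟩⟩
      · rw [← hmodrep]; exact hne02
      · rw [← hmodrep]
        intro he
        apply hne12
        rw [hmodrep (m₁ + 1), hc, he]
    · refine ⟨(m₁ + 1) % n₀, Finset.mem_filter.2 ⟨Finset.mem_range.2 (Nat.mod_lt _ hn₀pos),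
        ?_, hc⟩⟩
      rw [← hmodrep]; exact hne01
  obtain ⟨m₃, hm₃mem, hm₃min⟩ := Finset.exists_min_image _ (fun m => f^[m] u) hA₃ne
  have hm₃ne1 : Jc I f u p m₃ ≠ Jc I f u p m₁ := (Finset.mem_filter.1 hm₃mem).2.1
  have hm₃ne2 : Jc I f u p m₃ ≠ Jc I f u p m₂ := (Finset.mem_filter.1 hm₃mem).2.2
  have hmin₃ : ∀ m : ℕ, Jc I f u p m ≠ Jc I f u p m₁ → Jc I f u p m ≠ Jc I f u p m₂ →
      Jc I f u p m ≠ Jc I f u p m₃ → Ordd (Jc I f u p m₃) (Jc I f u p m) := by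
    intro m hne1 hne2 hne3
    have hrep : Jc I f u p (m % n₀) = Jc I f u p m := (hmodrep m).symm
    rcases jc_total h hp3 hb (Ne.symm hne3) with h1 | h2
    · exact h1
    · exfalso
      have hxm : f^[m % n₀] u ∈ Jc I f u p m := hrep ▸ mem_jc_self h hp3 hb (m % n₀)
      have hxmn : f^[m % n₀] u ∉ Jc I f u p m₃ := by
        intro hx
        have he1 : Jc I f u p m₃ = Jc I f u p (m % n₀) := jc_orbit_eq h hp3 hb hx
        exact hne3 ((he1.trans hrep).symm)
      have hxm₃ : f^[m₃] u ∉ Jc I f u p m := jc_ne_orbit h hp3 hb hne3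
      have hlt := h2 _ hxm hxmn _ (mem_jc_self h hp3 hb m₃) hxm₃
      have hmem3 : m % n₀ ∈ (Finset.range n₀).filter
          (fun m => Jc I f u p m ≠ Jc I f u p m₁ ∧ Jc I f u p m ≠ Jc I f u p m₂) := by
        refine Finset.mem_filter.2 ⟨Finset.mem_range.2 (Nat.mod_lt _ hn₀pos), ?_, ?_⟩
        · rw [hrep]; exact hne1
        · rw [hrep]; exact hne2
      have hge := hm₃min (m % n₀) hmem3
      exact absurd hlt (not_lt.2 hge)
  -- the orders
  have hord12 : Ordd (Jc I f u p m₁) (Jc I f u p m₂) := hminOrd m₂ hm₂ne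
  have hord23 : Ordd (Jc I f u p m₂) (Jc I f u p m₃) := hmin₂ m₃ hm₃ne1 hm₃ne2
  -- shared points
  have hsh12 : (Jc I f u p m₁ ∩ Jc I f u p m₂).Nonempty := by
    apply jc_share h hp3 hb (Ne.symm hm₂ne) hord12
    intro g hg1 hg2 hOg hOg'
    exact ordd_asymm h hp3 hb hg2 hOg' (hmin₂ g hg1 hg2)
  have hsh23 : (Jc I f u p m₂ ∩ Jc I f u p m₃).Nonempty := by
    apply jc_share h hp3 hb (Ne.symm hm₃ne2) hord23
    intro g hg1 hg2 hOg hOg'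
    by_cases hgc1 : Jc I f u p g = Jc I f u p m₁
    · -- then Ordd C₂ C₁ contradicts Ordd C₁ C₂
      rw [hgc1] at hOg
      exact ordd_asymm h hp3 hb hm₂ne hOg hord12
    · exact ordd_asymm h hp3 hb hg2 hOg' (hmin₃ g hgc1 hg1 hg2)
  obtain ⟨w₁, hw₁⟩ := hsh12
  obtain ⟨w₂, hw₂⟩ := hsh23
  -- transfer the two shared points to the minimal component
  set t := n₀ + m₁ - m₂ with htdef
  have ht2 : m₂ + t = m₁ + n₀ := by omega
  have hJm₂t : Jc I f u p (m₂ + t) = Jc I f u p m₁ := by rw [ht2, hper]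
  have hw₁a : f^[t] w₁ ∈ Jc I f u p (m₁ + t) := jc_iterate h hp3 hb hw₁.1 t
  have hw₁b : f^[t] w₁ ∈ Jc I f u p m₁ := by
    rw [← hJm₂t]; exact jc_iterate h hp3 hb hw₁.2 t
  have hw₂a : f^[t] w₂ ∈ Jc I f u p m₁ := by
    rw [← hJm₂t]; exact jc_iterate h hp3 hb hw₂.1 t
  have hw₂b : f^[t] w₂ ∈ Jc I f u p (m₃ + t) := jc_iterate h hp3 hb hw₂.2 t
  have hD1 : Jc I f u p (m₁ + t) ≠ Jc I f u p m₁ := by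
    intro heq
    have h1 : Jc I f u p (m₁ + t) = Jc I f u p (m₂ + t) := by rw [heq, hJm₂t]
    exact hm₂ne (hcancel m₁ m₂ t h1).symm
  have hD2 : Jc I f u p (m₃ + t) ≠ Jc I f u p m₁ := by
    intro heq
    have h1 : Jc I f u p (m₃ + t) = Jc I f u p (m₂ + t) := by rw [heq, hJm₂t]
    exact hm₃ne2 (hcancel m₃ m₂ t h1)
  have hDD : Jc I f u p (m₁ + t) ≠ Jc I f u p (m₃ + t) := by
    intro heq
    exact hm₃ne1 (hcancel m₁ m₃ t heq).symm
  exact jc_noTwo h hp3 hb hminOrd hD1 hD2 hDD ⟨hw₁b, hw₁a⟩ ⟨hw₂a, hw₂b⟩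

theorem DKall (h : Hyp I f u) : ∀ p : ℕ, 0 < p → I ⊆ EE f u p 0 := by
  intro p
  induction p using Nat.strong_induction_on with
  | _ p IH =>
    intro hp
    by_cases hp1 : p = 1
    · subst hp1; exact base1 h
    by_cases hp2 : p = 2
    · subst hp2; exact base2 h
    have hp3 : 3 ≤ p := by omega
    by_cases hc : ∃ n r, f^[n] u ∈ EE f u p r ∧ ¬ n ≡ r [MOD p]
    · obtain ⟨n, r, hmem, hmod⟩ := hc
      obtain ⟨D, hD0, hDp, hshift⟩ := caseA_shift h (by omega) hmem hmod
      intro y hy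
      exact EE_sub_of_shift h (by omega) hD0 hshift (IH D hDp hD0 hy)
    · push_neg at hc
      exact (caseB_false h hp3 hc).elim

end DenseOrbitAux

/-- If the orbit of `u` under `f^[2]` is dense in the interval `I`, then for every
`k ≥ 1` the orbit of `u` under `f^[k]` is dense in `I`. -/
theorem dense_sq_orbit_dense_all_orbits
    (I : Set ℝ) (hI : I.OrdConnected) (hnt : I.Nontrivial)
    (f : ℝ → ℝ) (hf : ContinuousOn f I) (hmaps : Set.MapsTo f I I)
    (u : ℝ) (hu : u ∈ I)
    (hdense : ∀ O : Set ℝ, IsOpen O → (O ∩ I).Nonempty → ∃ i : ℕ, f^[2 * i] u ∈ O) :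
    ∀ k : ℕ, 1 ≤ k → ∀ O : Set ℝ, IsOpen O → (O ∩ I).Nonempty →
      ∃ i : ℕ, f^[i * k] u ∈ O := by
  intro k hk O hO hOI
  have h : DenseOrbitAux.Hyp I f u := ⟨hI, hnt, hf, hmaps, hu, hdense⟩
  obtain ⟨y, hyO, hyI⟩ := hOI
  have h1 : y ∈ DenseOrbitAux.EE f u k 0 := DenseOrbitAux.DKall h k hk hyI
  have h2 : y ∈ closure (DenseOrbitAux.Cl f u k 0 0) :=
    DenseOrbitAux.EE_subset_closure k 0 0 h1
  rw [mem_closure_iff] at h2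
  obtain ⟨w, hwO, hw⟩ := h2 O hO hyO
  obtain ⟨i, _, hieq⟩ := DenseOrbitAux.mem_Cl.1 hw
  exact ⟨i, by rw [show i * k = i * k + 0 from rfl, hieq]; exact hwO⟩
end

section
/- (Furstenberg intersection lemma) Let f : X → X be continuous on a topological space X with f × f topologically transitive on X × X. Then for any n ≥ 1 and any nonempty open sets U₁,...,Uₙ, V₁,...,Vₙ in X, there exist nonempty open sets Û and V̂ with ∅ ≠ N(Û, V̂) ⊆ N(U₁,V₁) ∩ ⋯ ∩ N(Uₙ,Vₙ), where N(U,V) = {m ∈ ℤ₊ : f^m(U) ∩ V ≠ ∅}. Consequently, the n-fold product map f × ⋯ × f is transitive on X^n. -/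
open Set Function

private lemma fb_iter_pair {X : Type*} (f : X → X) (m : ℕ) (p : X × X) :
    (fun p : X × X => (f p.1, f p.2))^[m] p = (f^[m] p.1, f^[m] p.2) := by
  induction m generalizing p with
  | zero => simp
  | succ k ih =>
    rw [Function.iterate_succ_apply, ih]
    simp [Function.iterate_succ_apply]

private lemma fb_iter_pi {X : Type*} {n : ℕ} (f : X → X) (m : ℕ) (x : Fin n → X) :
    (fun x : Fin n → X => fun i => f (x i))^[m] x = fun i => f^[m] (x i) := by
  induction m generalizing x with
  | zero => simp
  | succ k ih =>
    rw [Function.iterate_succ_apply, ih]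
    funext i
    simp [Function.iterate_succ_apply]

private lemma fb_single {X : Type*} [TopologicalSpace X] (f : X → X)
    (hwm : ∀ W₁ W₂ : Set (X × X), IsOpen W₁ → IsOpen W₂ →
      W₁.Nonempty → W₂.Nonempty →
      ∃ m : ℕ, 1 ≤ m ∧
        (((fun p : X × X => (f p.1, f p.2))^[m] '' W₁) ∩ W₂).Nonempty)
    (A B : Set X) (hA : IsOpen A) (hB : IsOpen B)
    (hAne : A.Nonempty) (hBne : B.Nonempty) :
    ∃ m : ℕ, 1 ≤ m ∧ ((f^[m] '' A) ∩ B).Nonempty := by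
  obtain ⟨m, hm, q, ⟨p, hp, hq⟩, hqB⟩ :=
    hwm (A ×ˢ A) (B ×ˢ B) (hA.prod hA) (hB.prod hB) (hAne.prod hAne) (hBne.prod hBne)
  rw [fb_iter_pair] at hq
  refine ⟨m, hm, q.1, ⟨p.1, hp.1, ?_⟩, hqB.1⟩
  exact congrArg Prod.fst hq

/-- key pairing: simultaneous hitting times for two pairs of open sets. -/
private lemma fb_pair {X : Type*} [TopologicalSpace X] (f : X → X)
    (hwm : ∀ W₁ W₂ : Set (X × X), IsOpen W₁ → IsOpen W₂ →
      W₁.Nonempty → W₂.Nonempty →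
      ∃ m : ℕ, 1 ≤ m ∧
        (((fun p : X × X => (f p.1, f p.2))^[m] '' W₁) ∩ W₂).Nonempty)
    (A B C D : Set X) (hA : IsOpen A) (hB : IsOpen B) (hC : IsOpen C) (hD : IsOpen D)
    (hAne : A.Nonempty) (hBne : B.Nonempty) (hCne : C.Nonempty) (hDne : D.Nonempty) :
    ∃ m : ℕ, 1 ≤ m ∧ ((f^[m] '' A) ∩ C).Nonempty ∧ ((f^[m] '' B) ∩ D).Nonempty := by
  obtain ⟨m, hm, q, ⟨p, hp, hq⟩, hqCD⟩ :=
    hwm (A ×ˢ B) (C ×ˢ D) (hA.prod hB) (hC.prod hD) (hAne.prod hBne) (hCne.prod hDne)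
  rw [fb_iter_pair] at hq
  exact ⟨m, hm,
    ⟨q.1, ⟨p.1, hp.1, congrArg Prod.fst hq⟩, hqCD.1⟩,
    ⟨q.2, ⟨p.2, hp.2, congrArg Prod.snd hq⟩, hqCD.2⟩⟩

private lemma fb_main {X : Type*} [TopologicalSpace X] (f : X → X) (hf : Continuous f)
    (hwm : ∀ W₁ W₂ : Set (X × X), IsOpen W₁ → IsOpen W₂ →
      W₁.Nonempty → W₂.Nonempty →
      ∃ m : ℕ, 1 ≤ m ∧
        (((fun p : X × X => (f p.1, f p.2))^[m] '' W₁) ∩ W₂).Nonempty) :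
    ∀ n : ℕ, 1 ≤ n → ∀ U V : Fin n → Set X,
      (∀ i, IsOpen (U i)) → (∀ i, (U i).Nonempty) →
      (∀ i, IsOpen (V i)) → (∀ i, (V i).Nonempty) →
      ∃ Uh Vh : Set X, IsOpen Uh ∧ Uh.Nonempty ∧ IsOpen Vh ∧ Vh.Nonempty ∧
        ∀ m : ℕ, 1 ≤ m → ((f^[m] '' Uh) ∩ Vh).Nonempty →
          ∀ i, ((f^[m] '' (U i)) ∩ (V i)).Nonempty := by
  intro n hn
  induction n, hn using Nat.le_induction with
  | base =>
    intro U V hUo hUne hVo hVne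
    refine ⟨U 0, V 0, hUo 0, hUne 0, hVo 0, hVne 0, ?_⟩
    intro m _ hm i
    have : i = 0 := Subsingleton.elim i 0
    rw [this]
    exact hm
  | succ n hn ih =>
    intro U V hUo hUne hVo hVne
    obtain ⟨Uh, Vh, hUho, hUhne, hVho, hVhne, hsub⟩ :=
      ih (fun j => U j.castSucc) (fun j => V j.castSucc)
        (fun j => hUo _) (fun j => hUne _) (fun j => hVo _) (fun j => hVne _)
    obtain ⟨m, hm, hUU, hVV⟩ :=
      fb_pair f hwm Uh Vh (U (Fin.last n)) (V (Fin.last n))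
        hUho hVho (hUo _) (hVo _) hUhne hVhne (hUne _) (hVne _)
    refine ⟨Uh ∩ f^[m] ⁻¹' (U (Fin.last n)), Vh ∩ f^[m] ⁻¹' (V (Fin.last n)),
      hUho.inter ((hUo _).preimage (hf.iterate m)),
      ?_, hVho.inter ((hVo _).preimage (hf.iterate m)), ?_, ?_⟩
    · obtain ⟨q, ⟨p, hp, hq⟩, hqU⟩ := hUU
      exact ⟨p, hp, by rw [Set.mem_preimage, hq]; exact hqU⟩
    · obtain ⟨q, ⟨p, hp, hq⟩, hqV⟩ := hVV
      exact ⟨p, hp, by rw [Set.mem_preimage, hq]; exact hqV⟩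
    · intro k hk hne i
      obtain ⟨q, ⟨p, hp, hq⟩, hqV⟩ := hne
      refine Fin.lastCases ?_ ?_ i
      · -- last coordinate
        refine ⟨f^[k] (f^[m] p), ⟨f^[m] p, hp.2, rfl⟩, ?_⟩
        have : f^[k] (f^[m] p) = f^[m] (f^[k] p) := by
          rw [← Function.iterate_add_apply, ← Function.iterate_add_apply, Nat.add_comm]
        rw [this, hq]
        exact hqV.2
      · intro j
        exact hsub k hk ⟨q, ⟨p, hp.1, hq⟩, hqV.1⟩ j

private lemma fb_box {X : Type*} [TopologicalSpace X] {n : ℕ}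
    {A : Set (Fin n → X)} (hA : IsOpen A) {a : Fin n → X} (ha : a ∈ A) :
    ∃ U : Fin n → Set X, (∀ i, IsOpen (U i)) ∧ (∀ i, a i ∈ U i) ∧
      Set.pi Set.univ U ⊆ A := by
  obtain ⟨I, u, hu, hsub⟩ := isOpen_pi_iff.mp hA a ha
  refine ⟨fun i => if i ∈ I then u i else Set.univ, ?_, ?_, ?_⟩
  · intro i
    by_cases h : i ∈ I <;> simp [h]
    exact (hu i h).1
  · intro i
    by_cases h : i ∈ I <;> simp [h]
    exact (hu i h).2
  · intro x hx
    apply hsub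
    intro i hi
    have h' : i ∈ I := hi
    have := hx i (Set.mem_univ i)
    simpa [if_pos h'] using this

/-- Furstenberg intersection lemma: if `f × f` is topologically transitive, then
for any finitely many pairs of nonempty open sets the hitting-time sets have a
common refinement `N(Û, V̂)`, and consequently every finite product `f × ⋯ × f`
is topologically transitive. -/
theorem furstenberg_intersection
    (X : Type*) [TopologicalSpace X] (f : X → X) (hf : Continuous f)
    (hwm : ∀ W₁ W₂ : Set (X × X), IsOpen W₁ → IsOpen W₂ →
      W₁.Nonempty → W₂.Nonempty →
      ∃ m : ℕ, 1 ≤ m ∧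
        (((fun p : X × X => (f p.1, f p.2))^[m] '' W₁) ∩ W₂).Nonempty) :
    (∀ n : ℕ, 1 ≤ n → ∀ U V : Fin n → Set X,
      (∀ i, IsOpen (U i)) → (∀ i, (U i).Nonempty) →
      (∀ i, IsOpen (V i)) → (∀ i, (V i).Nonempty) →
      ∃ Uh Vh : Set X, IsOpen Uh ∧ Uh.Nonempty ∧ IsOpen Vh ∧ Vh.Nonempty ∧
        {m : ℕ | 1 ≤ m ∧ ((f^[m] '' Uh) ∩ Vh).Nonempty}.Nonempty ∧
        {m : ℕ | 1 ≤ m ∧ ((f^[m] '' Uh) ∩ Vh).Nonempty} ⊆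
          ⋂ i, {m : ℕ | 1 ≤ m ∧ ((f^[m] '' (U i)) ∩ (V i)).Nonempty}) ∧
    (∀ n : ℕ, 1 ≤ n → ∀ A B : Set (Fin n → X), IsOpen A → IsOpen B →
      A.Nonempty → B.Nonempty →
      ∃ m : ℕ, 1 ≤ m ∧
        (((fun x : Fin n → X => fun i => f (x i))^[m] '' A) ∩ B).Nonempty) := by
  have part1 : ∀ n : ℕ, 1 ≤ n → ∀ U V : Fin n → Set X,
      (∀ i, IsOpen (U i)) → (∀ i, (U i).Nonempty) →
      (∀ i, IsOpen (V i)) → (∀ i, (V i).Nonempty) →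
      ∃ Uh Vh : Set X, IsOpen Uh ∧ Uh.Nonempty ∧ IsOpen Vh ∧ Vh.Nonempty ∧
        {m : ℕ | 1 ≤ m ∧ ((f^[m] '' Uh) ∩ Vh).Nonempty}.Nonempty ∧
        {m : ℕ | 1 ≤ m ∧ ((f^[m] '' Uh) ∩ Vh).Nonempty} ⊆
          ⋂ i, {m : ℕ | 1 ≤ m ∧ ((f^[m] '' (U i)) ∩ (V i)).Nonempty} := by
    intro n hn U V hUo hUne hVo hVne
    obtain ⟨Uh, Vh, hUho, hUhne, hVho, hVhne, hsub⟩ :=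
      fb_main f hf hwm n hn U V hUo hUne hVo hVne
    refine ⟨Uh, Vh, hUho, hUhne, hVho, hVhne, ?_, ?_⟩
    · obtain ⟨m, hm, hne⟩ := fb_single f hwm Uh Vh hUho hVho hUhne hVhne
      exact ⟨m, hm, hne⟩
    · rintro m ⟨hm, hne⟩
      exact Set.mem_iInter.mpr fun i => ⟨hm, hsub m hm hne i⟩
  refine ⟨part1, ?_⟩
  intro n hn A B hAo hBo hAne hBne
  obtain ⟨a, ha⟩ := hAne
  obtain ⟨b, hb⟩ := hBne
  obtain ⟨U, hUo, haU, hUA⟩ := fb_box hAo ha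
  obtain ⟨V, hVo, hbV, hVB⟩ := fb_box hBo hb
  obtain ⟨Uh, Vh, _, _, _, _, hNne, hNsub⟩ :=
    part1 n hn U V hUo (fun i => ⟨a i, haU i⟩) hVo (fun i => ⟨b i, hbV i⟩)
  obtain ⟨m, hmN⟩ := hNne
  have hall := hNsub hmN
  rw [Set.mem_iInter] at hall
  have hchoice : ∀ i, ∃ x, x ∈ U i ∧ f^[m] x ∈ V i := by
    intro i
    obtain ⟨hm, q, ⟨p, hp, hq⟩, hqV⟩ := hall i
    exact ⟨p, hp, by rw [hq]; exact hqV⟩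
  choose x hxU hxV using hchoice
  refine ⟨m, hmN.1, (fun i => f^[m] (x i)), ⟨x, hUA (fun i _ => hxU i), ?_⟩,
    hVB (fun i _ => hxV i)⟩
  rw [fb_iter_pi]
end

section
/- If f : X → X is a continuous weakly mixing map on a topological space X, then for any nonempty open sets U and V and any positive integer k, the hitting-time set N(U,V) = {m ≥ 1 : f^m(U) ∩ V ≠ ∅} contains a string of k consecutive positive integers; hence N(U,V) contains arbitrarily long strings of consecutive integers. -/
open Set Function

/-- For a continuous weakly mixing map, every hitting-time set `N(U,V)` contains
arbitrarily long strings of consecutive positive integers. -/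
theorem weakly_mixing_consecutive_hitting_times
    (X : Type*) [TopologicalSpace X] (f : X → X) (hf : Continuous f)
    (hwm : ∀ W₁ W₂ : Set (X × X), IsOpen W₁ → IsOpen W₂ →
      W₁.Nonempty → W₂.Nonempty →
      ∃ m : ℕ, 1 ≤ m ∧
        (((fun p : X × X => (f p.1, f p.2))^[m] '' W₁) ∩ W₂).Nonempty) :
    ∀ U V : Set X, IsOpen U → IsOpen V → U.Nonempty → V.Nonempty → ∀ k : ℕ,
      ∃ m : ℕ, 1 ≤ m ∧ ∀ j : ℕ, j < k → ((f^[m + j] '' U) ∩ V).Nonempty := by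
  intro U V hU hV hUne hVne k
  -- The "pair" form of weak mixing.
  have pair : ∀ A B C D : Set X, IsOpen A → IsOpen B → IsOpen C → IsOpen D →
      A.Nonempty → B.Nonempty → C.Nonempty → D.Nonempty →
      ∃ m : ℕ, 1 ≤ m ∧ (A ∩ f^[m] ⁻¹' C).Nonempty ∧ (B ∩ f^[m] ⁻¹' D).Nonempty := by
    intro A B C D hA hB hC hD hAne hBne hCne hDne
    obtain ⟨m, hm, q, ⟨p, hp, hq⟩, hq2⟩ := hwm (A ×ˢ B) (C ×ˢ D) (hA.prod hB) (hC.prod hD)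
      (hAne.prod hBne) (hCne.prod hDne)
    have hiter : ∀ (n : ℕ) (p : X × X),
        (fun p : X × X => (f p.1, f p.2))^[n] p = (f^[n] p.1, f^[n] p.2) := by
      intro n
      induction n with
      | zero => intro p; simp
      | succ n ih =>
        intro p
        rw [Function.iterate_succ_apply, ih]
        simp [Function.iterate_succ_apply]
    rw [hiter] at hq
    subst hq
    exact ⟨m, hm, ⟨p.1, hp.1, hq2.1⟩, ⟨p.2, hp.2, hq2.2⟩⟩
  -- All preimages of V are nonempty.
  have preV : ∀ j : ℕ, (f^[j] ⁻¹' V).Nonempty := by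
    intro j
    induction j with
    | zero => simpa using hVne
    | succ j ih =>
      have hS : IsOpen (f^[j] ⁻¹' V) := (hf.iterate j).isOpen_preimage _ hV
      obtain ⟨m, hm, ⟨x, hx, hx2⟩, -⟩ := pair _ _ _ _ hS hS hS hS ih ih ih ih
      refine ⟨f^[m - 1] x, ?_⟩
      have hfy : f (f^[m - 1] x) = f^[m] x := by
        have h := (Function.iterate_succ_apply' f (m - 1) x).symm
        rwa [Nat.succ_eq_add_one, Nat.sub_add_cancel hm] at h
      simp only [mem_preimage] at hx2 ⊢
      rw [Function.iterate_succ_apply, hfy]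
      exact hx2
  -- Main inductive claim.
  have main : ∀ n : ℕ, ∃ A B : Set X, IsOpen A ∧ IsOpen B ∧ A.Nonempty ∧ B.Nonempty ∧
      ∀ m : ℕ, (A ∩ f^[m] ⁻¹' B).Nonempty → ∀ j < n, ∃ x ∈ U, f^[m + j] x ∈ V := by
    intro n
    induction n with
    | zero => exact ⟨U, V, hU, hV, hUne, hVne, fun m _ j hj => absurd hj (Nat.not_lt_zero j)⟩
    | succ n ih =>
      obtain ⟨A, B, hA, hB, hAne, hBne, hprop⟩ := ih
      have hW : IsOpen (f^[n] ⁻¹' V) := (hf.iterate n).isOpen_preimage _ hV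
      obtain ⟨l, hl, h1, h2⟩ := pair A B U (f^[n] ⁻¹' V) hA hB hU hW hAne hBne hUne (preV n)
      refine ⟨A ∩ f^[l] ⁻¹' U, B ∩ f^[l] ⁻¹' (f^[n] ⁻¹' V),
        hA.inter ((hf.iterate l).isOpen_preimage _ hU),
        hB.inter ((hf.iterate l).isOpen_preimage _ hW), h1, h2, ?_⟩
      rintro m ⟨x, ⟨⟨hxA, hxU⟩, hxB⟩⟩
      simp only [mem_preimage, mem_inter_iff] at hxB hxU
      intro j hj
      rcases Nat.lt_succ_iff_lt_or_eq.mp hj with hj | rfl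
      · exact hprop m ⟨x, hxA, hxB.1⟩ j hj
      · refine ⟨f^[l] x, hxU, ?_⟩
        have h3 := hxB.2
        rw [← Function.iterate_add_apply, ← Function.iterate_add_apply] at h3
        rw [← Function.iterate_add_apply]
        have e : m + j + l = j + l + m := by ring
        rw [e]
        exact h3
  obtain ⟨A, B, hA, hB, hAne, hBne, hprop⟩ := main k
  obtain ⟨m, hm, h1, -⟩ := pair A A B B hA hA hB hB hAne hAne hBne hBne
  refine ⟨m, hm, fun j hj => ?_⟩
  obtain ⟨x, hx, hfx⟩ := hprop m h1 j hj
  exact ⟨f^[m + j] x, ⟨x, hx, rfl⟩, hfx⟩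
end

section
/- Let (X, ρ) be an infinite metric space without isolated points and let f : X → X be a continuous topologically mixing map possessing a transitive point. Then δ := inf_{n≥1} sup_{x∈X} ρ(f^n(x), x) is strictly positive, provided X contains two disjoint compact sets with nonempty interiors. -/
open Set Function

/-- For a continuous topologically mixing map with a transitive point on an
infinite metric space without isolated points containing two disjoint compact
sets with nonempty interiors, the quantity
`δ = inf_{n ≥ 1} sup_x ρ(fⁿ x, x)` is strictly positive. -/
theorem mixing_not_uniformly_rigid
    (X : Type*) [MetricSpace X] [Infinite X]
    (hni : ∀ x : X, Filter.NeBot (nhdsWithin x {x}ᶜ))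
    (f : X → X) (hf : Continuous f)
    (hmix : ∀ U V : Set X, IsOpen U → IsOpen V → U.Nonempty → V.Nonempty →
      ∃ N : ℕ, ∀ n : ℕ, N ≤ n → ((f^[n] '' U) ∩ V).Nonempty)
    (u : X) (hu : Dense (Set.range fun n : ℕ => f^[n] u))
    (K K' : Set X) (hK : IsCompact K) (hK' : IsCompact K')
    (hKi : (interior K).Nonempty) (hK'i : (interior K').Nonempty)
    (hdisj : Disjoint K K') :
    0 < ⨅ (n : ℕ) (_ : 1 ≤ n), ⨆ x : X, edist (f^[n] x) x := by
  obtain ⟨δ, hδpos, hthick⟩ := hdisj.exists_thickenings hK hK'.isClosed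
  set S : ℕ → ENNReal := fun n => ⨆ x : X, edist (f^[n] x) x with hSdef
  have hsep : ∀ x ∈ K, ∀ y ∈ K', ENNReal.ofReal δ ≤ edist y x := by
    intro x hx y hy
    by_contra h
    push_neg at h
    have hyt : y ∈ Metric.thickening δ K := by
      rw [Metric.mem_thickening_iff]
      exact ⟨x, hx, (edist_lt_ofReal).1 h⟩
    exact (hthick.le_bot ⟨hyt, Metric.self_subset_thickening hδpos _ hy⟩)
  obtain ⟨N, hN⟩ := hmix (interior K) (interior K') isOpen_interior isOpen_interior hKi hK'i
  have hA : ∀ n, N ≤ n → ENNReal.ofReal δ ≤ S n := by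
    intro n hn
    obtain ⟨y, ⟨x, hxU, rfl⟩, hyV⟩ := hN n hn
    exact le_trans (hsep x (interior_subset hxU) _ (interior_subset hyV))
      (le_iSup (fun x : X => edist (f^[n] x) x) x)
  have hB : ∀ n, 1 ≤ n → 0 < S n := by
    intro n hn
    by_contra h
    push_neg at h
    have h0 : S n = 0 := le_antisymm h zero_le
    have hfix : ∀ x, f^[n] x = x := by
      intro x
      have h1 := le_iSup (fun x : X => edist (f^[n] x) x) x
      have : edist (f^[n] x) x = 0 := le_antisymm (h1.trans (le_of_eq h0)) zero_le
      simpa [edist_eq_zero] using this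
    have hid : ∀ x, f^[n * (N + 1)] x = x := by
      intro x
      rw [Function.iterate_mul]
      exact Function.iterate_fixed (hfix x) (N + 1)
    have hge : N ≤ n * (N + 1) := le_trans (Nat.le_succ N) (Nat.le_mul_of_pos_left _ hn)
    obtain ⟨y, ⟨x, hxU, hxy⟩, hyV⟩ := hN (n * (N + 1)) hge
    rw [hid x] at hxy
    subst hxy
    exact (hdisj.le_bot ⟨interior_subset hxU, interior_subset hyV⟩)
  set c := min (ENNReal.ofReal δ) ((Finset.Icc 1 N).inf S) with hc
  have hcpos : 0 < c := by
    refine lt_min (ENNReal.ofReal_pos.2 hδpos) ?_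
    rw [Finset.lt_inf_iff (by simp : (0 : ENNReal) < ⊤)]
    intro n hn
    exact hB n (Finset.mem_Icc.1 hn).1
  refine lt_of_lt_of_le hcpos (le_iInf fun n => le_iInf fun hn => ?_)
  rcases le_or_gt N n with h | h
  · exact le_trans (min_le_left _ _) (hA n h)
  · exact le_trans (min_le_right _ _) (Finset.inf_le (Finset.mem_Icc.2 ⟨hn, h.le⟩))
end
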